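/- arXiv:1907.11506 — 9 statements merged into one kernel-verified Lean document; each statement's English description precedes it below -/
import Mathlib

section
/- Let F be a field and let A and B be unital locally matrix F-algebras whose dimensions over F are at most countably infinite. Then A and B are isomorphic as F-algebras if and only if D(A) = D(B). -/
/-- `D(A)`: the set of positive integers `n` such that `A` contains a unital subalgebra
isomorphic to the `n × n` matrix algebra over `F`. -/
def matrixDegreeSet (F : Type*) [Field F] (A : Type*) [Ring A] [Algebra F A] : Set ℕ :=
  {n | 0 < n ∧ ∃ S : Subalgebra F A, Nonempty (S ≃ₐ[F] Matrix (Fin n) (Fin n) F)}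

/-- A unital `F`-algebra is a locally matrix algebra if every finite subset lies in a
unital subalgebra isomorphic to a matrix algebra `M_n(F)`, `n ≥ 1`. -/
def IsLocallyMatrixAlgebra (F : Type*) [Field F] (A : Type*) [Ring A] [Algebra F A] : Prop :=
  ∀ s : Finset A, ∃ (n : ℕ) (S : Subalgebra F A), 0 < n ∧ (s : Set A) ⊆ S ∧
    Nonempty (S ≃ₐ[F] Matrix (Fin n) (Fin n) F)

/-!
`D` is clearly an isomorphism invariant. Conversely, the matrix units of a unital embedding
`M_m(F) → End_F(V)` split `V` into `m` copies of the corner `E₁₁ V`, whose dimension determines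
the embedding up to conjugation. Hence `M_m(F)` embeds unitally in `M_N(F)` only if `m ∣ N`,
and any two such embeddings are conjugate (Skolem–Noether). Consequently, if
`M_m ≅ P ⊆ P' ≅ M_n` inside `A` and `B` contains a copy of `M_n`, every embedding of `P` into
`B` extends to `P'`: put its image and the copy of `M_n` into some `M_N ⊆ B` and conjugate
there. So partial isomorphisms between matrix subalgebras of `A` and `B`, ordered by
extension, have extensions whose domain contains any given element of `A` (if `D(A) ⊆ D(B)`)
or whose range contains any given element of `B` (if `D(B) ⊆ D(A)`). With countable bases of
`A` and `B`, a back-and-forth argument yields an increasing sequence of partial isomorphisms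
exhausting both algebras, whose union is an isomorphism `A ≃ B`.
-/

open Matrix

theorem Matrix.single_one_mul {α ι : Type*} [Semiring α] [Fintype ι] [DecidableEq ι]
    (i j : ι) (x : Matrix ι ι α) : single i j 1 * x = ∑ k, x j k • single i k 1 := by
  ext a b
  by_cases h : i = a <;> simp [Matrix.mul_apply, Matrix.sum_apply, Matrix.single_apply, h]

section Representation

variable {F : Type*} [Field F] {ι : Type*} [Fintype ι] [DecidableEq ι]
  {V : Type*} [AddCommGroup V] [Module F V]

namespace AlgHom

variable (φ : Matrix ι ι F →ₐ[F] Module.End F V) (i₀ : ι)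

theorem apply_single_apply_single (i j k l : ι) (v : V) :
    φ (single i j 1) (φ (single k l 1) v) = if j = k then φ (single i l 1) v else 0 := by
  rw [← Module.End.mul_apply, ← map_mul]
  split_ifs with h
  · rw [h, single_mul_single_same, one_mul]
  · rw [single_mul_single_of_ne _ _ _ _ h, map_zero, LinearMap.zero_apply]

def matrixCorner : Submodule F V := LinearMap.range (φ (single i₀ i₀ 1))

theorem apply_single_of_mem_matrixCorner {w : V} (hw : w ∈ φ.matrixCorner i₀) :
    φ (single i₀ i₀ 1) w = w := by
  obtain ⟨v, rfl⟩ := hw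
  simp [apply_single_apply_single]

def matrixCornerEquiv : V ≃ₗ[F] (ι → φ.matrixCorner i₀) where
  toFun v i :=
    ⟨φ (single i₀ i 1) v, φ (single i₀ i 1) v, by simp [apply_single_apply_single]⟩
  map_add' v w := by ext; simp
  map_smul' c v := by ext; simp
  invFun w := ∑ i, φ (single i i₀ 1) (w i)
  left_inv v := by
    simp [apply_single_apply_single, ← LinearMap.sum_apply, ← map_sum, sum_single_one]
  right_inv w := by
    ext j
    simp [apply_single_apply_single, apply_single_of_mem_matrixCorner]

theorem matrixCornerEquiv_apply_coe (v : V) (i : ι) :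
    (φ.matrixCornerEquiv i₀ v i : V) = φ (single i₀ i 1) v := rfl

-- `matrixCornerEquiv` is `M_ι(F)`-linear, matrices acting on `ι → matrixCorner` as on columns.
theorem matrixCornerEquiv_map_apply (x : Matrix ι ι F) (v : V) (i : ι) :
    φ.matrixCornerEquiv i₀ (φ x v) i = ∑ j, x i j • φ.matrixCornerEquiv i₀ v j := by
  ext
  simp only [matrixCornerEquiv_apply_coe, ← Module.End.mul_apply, ← map_mul, single_one_mul,
    map_sum, map_smul, LinearMap.sum_apply, LinearMap.smul_apply, Submodule.coe_sum,
    Submodule.coe_smul]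

theorem finrank_eq_card_mul_finrank_matrixCorner [FiniteDimensional F V] :
    Module.finrank F V = Fintype.card ι * Module.finrank F (φ.matrixCorner i₀) := by
  simp [(φ.matrixCornerEquiv i₀).finrank_eq, Module.finrank_pi_fintype]

theorem exists_linearEquiv_intertwining [Nonempty ι] [FiniteDimensional F V]
    (φ ψ : Matrix ι ι F →ₐ[F] Module.End F V) :
    ∃ u : V ≃ₗ[F] V, ∀ x v, u (φ x v) = ψ x (u v) := by
  obtain ⟨i₀⟩ := ‹Nonempty ι›
  have hrank : Module.finrank F (φ.matrixCorner i₀) = Module.finrank F (ψ.matrixCorner i₀) :=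
    Nat.eq_of_mul_eq_mul_left Fintype.card_pos <| by
      rw [← φ.finrank_eq_card_mul_finrank_matrixCorner,
        ← ψ.finrank_eq_card_mul_finrank_matrixCorner]
  obtain ⟨g⟩ := FiniteDimensional.nonempty_linearEquiv_of_finrank_eq hrank
  refine ⟨(φ.matrixCornerEquiv i₀).trans
    ((LinearEquiv.piCongrRight fun _ => g).trans (ψ.matrixCornerEquiv i₀).symm), fun x v => ?_⟩
  apply (ψ.matrixCornerEquiv i₀).injective
  ext i
  simp [matrixCornerEquiv_map_apply]

end AlgHom

namespace Matrix

variable {κ μ : Type*} [Fintype κ] [DecidableEq κ] [Fintype μ] [DecidableEq μ]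

theorem card_dvd_card_of_algHom [Nonempty ι] (φ : Matrix ι ι F →ₐ[F] Matrix κ κ F) :
    Fintype.card ι ∣ Fintype.card κ := by
  obtain ⟨i₀⟩ := ‹Nonempty ι›
  exact ⟨_, by
    simpa using (toLinAlgEquiv'.toAlgHom.comp φ).finrank_eq_card_mul_finrank_matrixCorner i₀⟩

theorem exists_algEquiv_apply_eq [Nonempty ι] (φ ψ : Matrix ι ι F →ₐ[F] Matrix κ κ F) :
    ∃ θ : Matrix κ κ F ≃ₐ[F] Matrix κ κ F, ∀ x, θ (φ x) = ψ x := by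
  obtain ⟨u, hu⟩ := AlgHom.exists_linearEquiv_intertwining
    (toLinAlgEquiv'.toAlgHom.comp φ) (toLinAlgEquiv'.toAlgHom.comp ψ)
  refine ⟨toLinAlgEquiv'.trans ((u.conjAlgEquiv F).trans toLinAlgEquiv'.symm), fun x => ?_⟩
  apply toLinAlgEquiv'.injective
  refine LinearMap.ext fun v => ?_
  simpa using hu x (u.symm v)

theorem nonempty_algHom_of_card_dvd (h : Fintype.card κ ∣ Fintype.card μ) :
    Nonempty (Matrix κ κ F →ₐ[F] Matrix μ μ F) := by
  obtain ⟨k, hk⟩ := h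
  let e : κ × Fin k ≃ μ := Fintype.equivOfCardEq (by simp [hk])
  -- the block-scalar embedding `x ↦ x ⊗ 1ₖ`
  exact ⟨(reindexAlgEquiv F F e).toAlgHom.comp ((compAlgEquiv κ (Fin k) F F).toAlgHom.comp
    (Algebra.ofId F (Matrix (Fin k) (Fin k) F)).mapMatrix)⟩

theorem exists_algHom_comp_eq [Nonempty ι] (h : Fintype.card κ ∣ Fintype.card μ)
    (α : Matrix ι ι F →ₐ[F] Matrix κ κ F) (χ : Matrix ι ι F →ₐ[F] Matrix μ μ F) :
    ∃ Φ : Matrix κ κ F →ₐ[F] Matrix μ μ F, Φ.comp α = χ := by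
  obtain ⟨σ⟩ := nonempty_algHom_of_card_dvd (F := F) h
  obtain ⟨θ, hθ⟩ := exists_algEquiv_apply_eq (σ.comp α) χ
  exact ⟨θ.toAlgHom.comp σ, AlgHom.ext hθ⟩

end Matrix

end Representation

theorem Subalgebra.exists_mem_of_iSup_eq_top {R A ι : Type*} [CommSemiring R] [Semiring A]
    [Algebra R A] [Nonempty ι] {S : ι → Subalgebra R A} (hS : Directed (· ≤ ·) S)
    (hS_top : ⨆ i, S i = ⊤) (a : A) : ∃ i, a ∈ S i := by
  have ha : a ∈ ⨆ i, S i := hS_top ▸ Algebra.mem_top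
  rwa [← SetLike.mem_coe, Subalgebra.coe_iSup_of_directed hS, Set.mem_iUnion] at ha

structure PartialAlgEquiv (R A B : Type*) [CommSemiring R] [Semiring A] [Algebra R A]
    [Semiring B] [Algebra R B] where
  dom : Subalgebra R A
  cod : Subalgebra R B
  toAlgEquiv : dom ≃ₐ[R] cod

namespace PartialAlgEquiv

variable {R A B : Type*} [CommSemiring R] [Semiring A] [Algebra R A] [Semiring B] [Algebra R B]

def graph (f : PartialAlgEquiv R A B) : Set (A × B) :=
  Set.range fun x : f.dom => ((x : A), (f.toAlgEquiv x : B))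

instance : Preorder (PartialAlgEquiv R A B) := Preorder.lift graph

variable {f g : PartialAlgEquiv R A B}

theorem dom_mono (h : f ≤ g) : f.dom ≤ g.dom := by
  intro a ha
  obtain ⟨x, hx⟩ := h ⟨⟨a, ha⟩, rfl⟩
  simp only [Prod.mk.injEq] at hx
  exact hx.1 ▸ x.2

theorem toAlgEquiv_inclusion (h : f ≤ g) (x : f.dom) :
    (g.toAlgEquiv (Subalgebra.inclusion (dom_mono h) x) : B) = f.toAlgEquiv x := by
  obtain ⟨y, hy⟩ := h ⟨x, rfl⟩
  simp only [Prod.mk.injEq] at hy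
  obtain rfl : y = Subalgebra.inclusion (dom_mono h) x := Subtype.ext hy.1
  exact hy.2

def symm (f : PartialAlgEquiv R A B) : PartialAlgEquiv R B A :=
  ⟨f.cod, f.dom, f.toAlgEquiv.symm⟩

theorem symm_le_symm (h : f ≤ g) : f.symm ≤ g.symm := by
  rintro _ ⟨y, rfl⟩
  refine ⟨g.toAlgEquiv (Subalgebra.inclusion (dom_mono h) (f.toAlgEquiv.symm y)), ?_⟩
  refine Prod.ext ?_ (congrArg Subtype.val (g.toAlgEquiv.symm_apply_apply _))
  exact (toAlgEquiv_inclusion h _).trans (congrArg Subtype.val (f.toAlgEquiv.apply_symm_apply y))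

theorem cod_mono (h : f ≤ g) : f.cod ≤ g.cod := dom_mono (symm_le_symm h)

theorem nonempty_algEquiv_of_directed {ι : Type*} [Nonempty ι] (f : ι → PartialAlgEquiv R A B)
    (hf : Directed (· ≤ ·) f) (hdom : ⨆ i, (f i).dom = ⊤) (hcod : ⨆ i, (f i).cod = ⊤) :
    Nonempty (A ≃ₐ[R] B) := by
  have hdir : Directed (· ≤ ·) fun i => (f i).dom := hf.mono_comp _ fun _ _ => dom_mono
  let F i : (f i).dom →ₐ[R] B := (f i).cod.val.comp (f i).toAlgEquiv.toAlgHom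
  have hF (i j : ι) (x : (f i).dom) (hx : (x : A) ∈ (f j).dom) : F i x = F j ⟨x, hx⟩ := by
    obtain ⟨k, hik, hjk⟩ := hf i j
    exact (toAlgEquiv_inclusion hik x).symm.trans (toAlgEquiv_inclusion hjk ⟨x, hx⟩)
  let φ := Subalgebra.iSupLift _ hdir F (fun i j h => AlgHom.ext fun x => hF i j x (h x.2)) ⊤
    hdom.ge
  have hφ (i : ι) (x : (⊤ : Subalgebra R A)) (hx : (x : A) ∈ (f i).dom) :
      φ x = F i ⟨x, hx⟩ :=
    Subalgebra.iSupLift_of_mem (fun i => (f i).dom) x hx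
  refine ⟨Subalgebra.topEquiv.symm.trans
    (AlgEquiv.ofBijective φ ⟨fun x y hxy => ?_, fun b => ?_⟩)⟩
  · obtain ⟨i, hi⟩ := Subalgebra.exists_mem_of_iSup_eq_top hdir hdom x
    obtain ⟨j, hj⟩ := Subalgebra.exists_mem_of_iSup_eq_top hdir hdom y
    obtain ⟨k, hik, hjk⟩ := hf i j
    rw [hφ k x (dom_mono hik hi), hφ k y (dom_mono hjk hj)] at hxy
    exact Subtype.ext (congrArg Subtype.val ((f k).toAlgEquiv.injective (Subtype.ext hxy)) :)
  · have hdir' : Directed (· ≤ ·) fun i => (f i).cod := hf.mono_comp _ fun _ _ => cod_mono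
    obtain ⟨i, hi⟩ := Subalgebra.exists_mem_of_iSup_eq_top hdir' hcod b
    let x : (f i).dom := (f i).toAlgEquiv.symm ⟨b, hi⟩
    refine ⟨⟨x, trivial⟩, ?_⟩
    rw [hφ i _ x.2]
    exact Subtype.ext_iff.mp ((f i).toAlgEquiv.apply_symm_apply ⟨b, hi⟩)

end PartialAlgEquiv

theorem Subalgebra.eq_top_of_forall_basis_mem {R A ι : Type*} [CommSemiring R] [Semiring A]
    [Algebra R A] (b : Module.Basis ι R A) {S : Subalgebra R A} (h : ∀ i, b i ∈ S) :
    S = ⊤ := by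
  have hspan : Submodule.span R (Set.range b) ≤ Subalgebra.toSubmodule S :=
    Submodule.span_le.2 (Set.range_subset_iff.2 h)
  exact eq_top_iff.2 fun a _ => hspan (b.span_eq ▸ Submodule.mem_top)

theorem Subalgebra.fg_toSubmodule_of_algEquiv {R A M : Type*} [CommSemiring R] [Semiring A]
    [Algebra R A] [Semiring M] [Algebra R M] [Module.Finite R M] {S : Subalgebra R A}
    (e : S ≃ₐ[R] M) : (Subalgebra.toSubmodule S).FG := by
  have := Module.Finite.equiv e.symm.toLinearEquiv
  exact (Submodule.fg_top _).mp Module.Finite.fg_top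

theorem AlgHom.injective_of_algEquiv_matrix {F P B ι : Type*} [Field F] [Ring P] [Algebra F P]
    [Ring B] [Algebra F B] [Nontrivial B] [Fintype ι] [DecidableEq ι] [Nonempty ι]
    (e : P ≃ₐ[F] Matrix ι ι F) (φ : P →ₐ[F] B) : Function.Injective φ := by
  have h := RingHom.injective (φ.comp e.symm.toAlgHom : Matrix ι ι F →+* B)
  simpa using h.comp e.injective

section LocallyMatrix

variable {F : Type*} [Field F] {A B : Type*} [Ring A] [Algebra F A] [Ring B] [Algebra F B]

theorem matrixDegreeSet_subset_of_injective (f : A →ₐ[F] B) (hf : Function.Injective f) :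
    matrixDegreeSet F A ⊆ matrixDegreeSet F B := by
  rintro n ⟨hn, S, ⟨e⟩⟩
  exact ⟨hn, S.map f, ⟨(S.equivMapOfInjective f hf).symm.trans e⟩⟩

namespace IsLocallyMatrixAlgebra

theorem nontrivial (hA : IsLocallyMatrixAlgebra F A) : Nontrivial A := by
  obtain ⟨n, S, hn, -, ⟨e⟩⟩ := hA ∅
  have : Nonempty (Fin n) := ⟨⟨0, hn⟩⟩
  have : Nontrivial S := e.toEquiv.nontrivial
  exact Function.Injective.nontrivial (f := ((↑) : S → A)) Subtype.val_injective

theorem exists_le (hA : IsLocallyMatrixAlgebra F A) {M : Submodule F A} (hM : M.FG) :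
    ∃ (n : ℕ) (S : Subalgebra F A), 0 < n ∧ M ≤ Subalgebra.toSubmodule S ∧
      Nonempty (S ≃ₐ[F] Matrix (Fin n) (Fin n) F) := by
  obtain ⟨s, rfl⟩ := hM
  obtain ⟨n, S, hn, hs, he⟩ := hA s
  exact ⟨n, S, hn, Submodule.span_le.mpr hs, he⟩

theorem exists_algHom_comp_inclusion_eq (hB : IsLocallyMatrixAlgebra F B)
    {P P' : Subalgebra F A} (hPP' : P ≤ P') {m n : ℕ} (hm : 0 < m)
    (eP : P ≃ₐ[F] Matrix (Fin m) (Fin m) F) (eP' : P' ≃ₐ[F] Matrix (Fin n) (Fin n) F)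
    (hn : n ∈ matrixDegreeSet F B) (f : P →ₐ[F] B) :
    ∃ f' : P' →ₐ[F] B, f'.comp (Subalgebra.inclusion hPP') = f := by
  obtain ⟨hn, R, ⟨eR⟩⟩ := hn
  have : Module.Finite F P := Module.Finite.equiv eP.symm.toLinearEquiv
  obtain ⟨N, C, -, hle, ⟨eC⟩⟩ := hB.exists_le <|
    (Submodule.fg_range f.toLinearMap).sup (Subalgebra.fg_toSubmodule_of_algEquiv eR)
  have hfC (x : P) : f x ∈ C := hle (Submodule.mem_sup_left ⟨x, rfl⟩)
  have hRC : R ≤ C := fun r hr => hle (Submodule.mem_sup_right hr)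
  have : Nonempty (Fin m) := ⟨⟨0, hm⟩⟩
  have : Nonempty (Fin n) := ⟨⟨0, hn⟩⟩
  have hnN := Matrix.card_dvd_card_of_algHom
    (eC.toAlgHom.comp ((Subalgebra.inclusion hRC).comp eR.symm.toAlgHom))
  obtain ⟨Φ, hΦ⟩ := Matrix.exists_algHom_comp_eq hnN
    (eP'.toAlgHom.comp ((Subalgebra.inclusion hPP').comp eP.symm.toAlgHom))
    (eC.toAlgHom.comp ((f.codRestrict C hfC).comp eP.symm.toAlgHom))
  refine ⟨C.val.comp (eC.symm.toAlgHom.comp (Φ.comp eP'.toAlgHom)), AlgHom.ext fun x => ?_⟩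
  have hx := congrArg (fun g => (eC.symm (g (eP x)) : B)) hΦ
  simpa using hx

end IsLocallyMatrixAlgebra

end LocallyMatrix

namespace PartialAlgEquiv

variable {F : Type*} [Field F] {A B : Type*} [Ring A] [Algebra F A] [Ring B] [Algebra F B]

def IsMatrix (f : PartialAlgEquiv F A B) : Prop :=
  ∃ n, 0 < n ∧ Nonempty (f.dom ≃ₐ[F] Matrix (Fin n) (Fin n) F)

theorem IsMatrix.symm {f : PartialAlgEquiv F A B} (hf : f.IsMatrix) : f.symm.IsMatrix :=
  let ⟨n, hn, ⟨e⟩⟩ := hf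
  ⟨n, hn, ⟨f.toAlgEquiv.symm.trans e⟩⟩

theorem isCofinal_mem_dom (hA : IsLocallyMatrixAlgebra F A) (hB : IsLocallyMatrixAlgebra F B)
    (hD : matrixDegreeSet F A ⊆ matrixDegreeSet F B) (a : A) :
    IsCofinal {f : {f : PartialAlgEquiv F A B // f.IsMatrix} | a ∈ f.1.dom} := by
  rintro ⟨f, m, hm, ⟨e⟩⟩
  obtain ⟨n, P', hn, hle, ⟨e'⟩⟩ := hA.exists_le <|
    (Subalgebra.fg_toSubmodule_of_algEquiv e).sup (Submodule.fg_span_singleton a)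
  have hP' : f.dom ≤ P' := fun x hx => hle (Submodule.mem_sup_left hx)
  have hnB := hD ⟨hn, P', ⟨e'⟩⟩
  obtain ⟨φ, hφ⟩ := hB.exists_algHom_comp_inclusion_eq hP' hm e e' hnB
    (f.cod.val.comp f.toAlgEquiv.toAlgHom)
  have : Nonempty (Fin n) := ⟨⟨0, hn⟩⟩
  have := hB.nontrivial
  have hφinj := φ.injective_of_algEquiv_matrix e'
  refine ⟨⟨⟨P', φ.range, AlgEquiv.ofInjective φ hφinj⟩, n, hn, ⟨e'⟩⟩,
    hle (Submodule.mem_sup_right (Submodule.mem_span_singleton_self a)), ?_⟩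
  rintro _ ⟨x, rfl⟩
  exact ⟨Subalgebra.inclusion hP' x, Prod.ext rfl (DFunLike.congr_fun hφ x)⟩

theorem isCofinal_mem_cod (hA : IsLocallyMatrixAlgebra F A) (hB : IsLocallyMatrixAlgebra F B)
    (hD : matrixDegreeSet F B ⊆ matrixDegreeSet F A) (b : B) :
    IsCofinal {f : {f : PartialAlgEquiv F A B // f.IsMatrix} | b ∈ f.1.cod} := by
  rintro ⟨f, hf⟩
  obtain ⟨⟨g, hg⟩, hbg, hfg⟩ := isCofinal_mem_dom hB hA hD b ⟨f.symm, hf.symm⟩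
  exact ⟨⟨g.symm, hg.symm⟩, hbg, symm_le_symm hfg⟩

end PartialAlgEquiv

theorem nonempty_algEquiv_of_matrixDegreeSet_eq {F : Type*} [Field F] {A B : Type*} [Ring A]
    [Algebra F A] [Ring B] [Algebra F B]
    (hA : IsLocallyMatrixAlgebra F A) (hB : IsLocallyMatrixAlgebra F B)
    (hdimA : Module.rank F A ≤ Cardinal.aleph0) (hdimB : Module.rank F B ≤ Cardinal.aleph0)
    (hD : matrixDegreeSet F A = matrixDegreeSet F B) : Nonempty (A ≃ₐ[F] B) := by
  let bA := Module.Basis.ofVectorSpace F A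
  let bB := Module.Basis.ofVectorSpace F B
  have : Countable (Module.Basis.ofVectorSpaceIndex F A) :=
    Cardinal.mk_le_aleph0_iff.mp (bA.mk_eq_rank''.trans_le hdimA)
  have : Countable (Module.Basis.ofVectorSpaceIndex F B) :=
    Cardinal.mk_le_aleph0_iff.mp (bB.mk_eq_rank''.trans_le hdimB)
  let := Encodable.ofCountable
    (Module.Basis.ofVectorSpaceIndex F A ⊕ Module.Basis.ofVectorSpaceIndex F B)
  let 𝒟 := Sum.elim
    (fun i => (⟨_, PartialAlgEquiv.isCofinal_mem_dom hA hB hD.subset (bA i)⟩ : Order.Cofinal _))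
    (fun j => ⟨_, PartialAlgEquiv.isCofinal_mem_cod hA hB hD.symm.subset (bB j)⟩)
  obtain ⟨n, S, hn, -, ⟨eS⟩⟩ := hA ∅
  obtain ⟨-, R, ⟨eR⟩⟩ : n ∈ matrixDegreeSet F B := hD ▸ ⟨hn, S, ⟨eS⟩⟩
  let f₀ : {f : PartialAlgEquiv F A B // f.IsMatrix} :=
    ⟨⟨S, R, eS.trans eR.symm⟩, n, hn, ⟨eS⟩⟩
  let f := Order.sequenceOfCofinals f₀ 𝒟
  have hf : Monotone fun k => (f k).1 := fun _ _ h => Order.sequenceOfCofinals.monotone _ 𝒟 h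
  refine PartialAlgEquiv.nonempty_algEquiv_of_directed _ hf.directed_le
    (Subalgebra.eq_top_of_forall_basis_mem bA fun i => ?_)
    (Subalgebra.eq_top_of_forall_basis_mem bB fun j => ?_)
  · exact le_iSup (fun k => (f k).1.dom) _ (Order.sequenceOfCofinals.encode_mem _ 𝒟 (.inl i))
  · exact le_iSup (fun k => (f k).1.cod) _ (Order.sequenceOfCofinals.encode_mem _ 𝒟 (.inr j))

theorem stmt_2 (F : Type*) [Field F] (A B : Type*) [Ring A] [Algebra F A]
    [Ring B] [Algebra F B]
    (hA : IsLocallyMatrixAlgebra F A) (hB : IsLocallyMatrixAlgebra F B)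
    (hdimA : Module.rank F A ≤ Cardinal.aleph0)
    (hdimB : Module.rank F B ≤ Cardinal.aleph0) :
    Nonempty (A ≃ₐ[F] B) ↔ matrixDegreeSet F A = matrixDegreeSet F B := by
  refine ⟨fun ⟨e⟩ => ?_, nonempty_algEquiv_of_matrixDegreeSet_eq hA hB hdimA hdimB⟩
  exact (matrixDegreeSet_subset_of_injective e.toAlgHom e.injective).antisymm
    (matrixDegreeSet_subset_of_injective e.symm.toAlgHom e.symm.injective)
end

section
/- Let F be a field, l > 1 an integer coprime to the characteristic of F, ξ ∈ F a primitive l-th root of unity, and m a positive integer. Then the generalized Clifford algebra Clg(l,m) has dimension l^m over F; more precisely, the images of the ordered monomials x₁^{k₁} x₂^{k₂} ⋯ x_m^{k_m} with 0 ≤ k_i ≤ l−1 form an F-basis of Clg(l,m). -/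
/-- The defining relations of the generalized Clifford algebra: `xᵢ^l = 1` and
`xⱼ xᵢ = ξ • (xᵢ xⱼ)` for `i < j`. -/
inductive ClgRel (F : Type*) [Field F] (l : ℕ) (ξ : F) {I : Type*} [LinearOrder I] :
    FreeAlgebra F I → FreeAlgebra F I → Prop
  | pow (i : I) : ClgRel F l ξ (FreeAlgebra.ι F i ^ l) 1
  | comm {i j : I} (hij : i < j) :
      ClgRel F l ξ (FreeAlgebra.ι F j * FreeAlgebra.ι F i)
        (ξ • (FreeAlgebra.ι F i * FreeAlgebra.ι F j))

/-- The generalized Clifford algebra on a linearly ordered set of generators. -/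
abbrev Clg (F : Type*) [Field F] (l : ℕ) (ξ : F) (I : Type*) [LinearOrder I] :=
  RingQuot (ClgRel F l ξ (I := I))

/-- The generators `xᵢ` of the generalized Clifford algebra. -/
noncomputable def ClgGen (F : Type*) [Field F] (l : ℕ) (ξ : F) (I : Type*)
    [LinearOrder I] (i : I) : Clg F l ξ I :=
  RingQuot.mkAlgHom F (ClgRel F l ξ) (FreeAlgebra.ι F i)


/-!
Spanning: left multiplication by a generator `xᵢ` sends an ordered monomial to a scalar multiple
of another one (move `xᵢ` past the smaller generators using `xᵢ xₜ = ξ xₜ xᵢ`), and exponents can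
be reduced mod `l` because `xᵢ ^ l = 1`.

Independence: `xᵢ ↦ (δ_v ↦ ξ ^ (∑_{s < i} v s) • δ_{v + eᵢ})` is a representation of the algebra
on functions `(I → Fin l) → F`, and the ordered monomial with exponents `k` sends `δ_0` to `δ_k`.
-/

theorem pow_mod_of_pow_eq_one {M : Type*} [Monoid M] {a : M} {l : ℕ} (h : a ^ l = 1) (n : ℕ) :
    a ^ (n % l) = a ^ n := by
  conv_rhs => rw [← Nat.mod_add_div n l, pow_add, pow_mul, h, one_pow, mul_one]

section Relations

variable {F : Type*} [Field F] {l : ℕ} {ξ : F} {I : Type*} [LinearOrder I]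

theorem clgGen_pow_eq_one (i : I) : ClgGen F l ξ I i ^ l = 1 := by
  simpa [ClgGen] using RingQuot.mkAlgHom_rel F (ClgRel.pow (F := F) (ξ := ξ) (l := l) i)

theorem clgGen_mul_clgGen_of_lt {i j : I} (hij : i < j) :
    ClgGen F l ξ I j * ClgGen F l ξ I i = ξ • (ClgGen F l ξ I i * ClgGen F l ξ I j) := by
  simpa [ClgGen] using RingQuot.mkAlgHom_rel F (ClgRel.comm (F := F) (l := l) (ξ := ξ) hij)

theorem clgGen_mul_clgGen_pow_of_lt {i j : I} (hij : i < j) (n : ℕ) :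
    ClgGen F l ξ I j * ClgGen F l ξ I i ^ n =
      ξ ^ n • (ClgGen F l ξ I i ^ n * ClgGen F l ξ I j) := by
  induction n with
  | zero => simp
  | succ n ih =>
    rw [pow_succ, ← mul_assoc, ih, smul_mul_assoc, mul_assoc, clgGen_mul_clgGen_of_lt hij,
      mul_smul_comm, smul_smul, ← mul_assoc, ← pow_succ, ← pow_succ]

theorem adjoin_range_clgGen : Algebra.adjoin F (Set.range (ClgGen F l ξ I)) = ⊤ := by
  have : Set.range (ClgGen F l ξ I) =
      RingQuot.mkAlgHom F (ClgRel F l ξ) '' Set.range (FreeAlgebra.ι F) :=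
    Set.range_comp _ _
  rw [this, ← AlgHom.map_adjoin, FreeAlgebra.adjoin_range_ι, Algebra.map_top,
    AlgHom.range_eq_top]
  exact RingQuot.mkAlgHom_surjective F _

end Relations

section Monomials

variable {F : Type*} [Field F] {l : ℕ} {ξ : F} {I : Type*} [LinearOrder I]

variable (F l ξ) in
noncomputable def clgMonomial (L : List I) (e : I → ℕ) : Clg F l ξ I :=
  (L.map fun t => ClgGen F l ξ I t ^ e t).prod

@[simp]
theorem clgMonomial_nil (e : I → ℕ) : clgMonomial F l ξ [] e = 1 := rfl

@[simp]
theorem clgMonomial_cons (a : I) (L : List I) (e : I → ℕ) :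
    clgMonomial F l ξ (a :: L) e = ClgGen F l ξ I a ^ e a * clgMonomial F l ξ L e := rfl

theorem clgMonomial_congr {L : List I} {e e' : I → ℕ} (h : ∀ t ∈ L, e t = e' t) :
    clgMonomial F l ξ L e = clgMonomial F l ξ L e' :=
  congrArg List.prod (List.map_congr_left fun t ht => by rw [h t ht])

theorem clgMonomial_mod (L : List I) (e : I → ℕ) :
    clgMonomial F l ξ L e = clgMonomial F l ξ L fun t => e t % l :=
  congrArg List.prod (List.map_congr_left fun t _ =>
    (pow_mod_of_pow_eq_one (clgGen_pow_eq_one t) (e t)).symm)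

theorem clgGen_mul_clgMonomial {i : I} {L : List I} (hL : L.Pairwise (· < ·)) (hi : i ∈ L)
    (e : I → ℕ) :
    ∃ c : F, ClgGen F l ξ I i * clgMonomial F l ξ L e =
      c • clgMonomial F l ξ L (Function.update e i (e i + 1)) := by
  induction L with
  | nil => simp at hi
  | cons a L ih =>
    obtain ⟨ha, hL⟩ := List.pairwise_cons.mp hL
    rcases List.mem_cons.mp hi with rfl | hi
    · have htail : clgMonomial F l ξ L (Function.update e i (e i + 1)) =
          clgMonomial F l ξ L e :=
        clgMonomial_congr fun t ht => Function.update_of_ne (ha t ht).ne' _ _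
      refine ⟨1, ?_⟩
      rw [clgMonomial_cons, clgMonomial_cons, htail, Function.update_self, one_smul, pow_succ',
        mul_assoc]
    · have hai : a < i := ha i hi
      obtain ⟨c, hc⟩ := ih hL hi
      refine ⟨ξ ^ e a * c, ?_⟩
      rw [clgMonomial_cons, clgMonomial_cons, Function.update_of_ne hai.ne, ← mul_assoc,
        clgGen_mul_clgGen_pow_of_lt hai, smul_mul_assoc, mul_assoc, hc, mul_smul_comm,
        smul_smul]

theorem span_clgMonomial_eq_top [NeZero l] {L : List I} (hL : L.Pairwise (· < ·))
    (hmem : ∀ i, i ∈ L) :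
    Submodule.span F (Set.range fun k : I → Fin l => clgMonomial F l ξ L fun t => k t) = ⊤ := by
  set S := Submodule.span F (Set.range fun k : I → Fin l => clgMonomial F l ξ L fun t => k t)
  have hmono (e : I → ℕ) : clgMonomial F l ξ L e ∈ S := by
    rw [clgMonomial_mod]
    exact Submodule.subset_span ⟨fun t => ⟨e t % l, Nat.mod_lt _ (NeZero.pos l)⟩, rfl⟩
  have hmul (i : I) (s : Clg F l ξ I) (hs : s ∈ S) : ClgGen F l ξ I i * s ∈ S := by
    induction hs using Submodule.span_induction with
    | mem _ hx =>
      obtain ⟨k, rfl⟩ := hx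
      obtain ⟨c, hc⟩ := clgGen_mul_clgMonomial (F := F) (l := l) (ξ := ξ) hL (hmem i)
        fun t => k t
      rw [hc]
      exact S.smul_mem c (hmono _)
    | zero => simp
    | add _ _ _ _ hx hy => simpa [mul_add] using S.add_mem hx hy
    | smul c _ _ hx => simpa [mul_smul_comm] using S.smul_mem c hx
  refine eq_top_iff.mpr fun a _ => ?_
  have ha : a ∈ Subalgebra.toSubmodule (Algebra.adjoin F (Set.range (ClgGen F l ξ I))) := by
    simp [adjoin_range_clgGen]
  rw [Algebra.adjoin_eq_span] at ha
  refine Submodule.span_le.mpr (fun y hy => ?_) ha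
  induction hy using Submonoid.closure_induction_left with
  | one => simpa [clgMonomial] using hmono fun _ => 0
  | mul_left _ hx y _ hy =>
    obtain ⟨i, rfl⟩ := hx
    exact hmul i y hy

end Monomials

section Representation

open Fin.NatCast

variable {F : Type*} [Field F] {l : ℕ} [NeZero l] {ξ : F} {I : Type*} [LinearOrder I] [Fintype I]

variable (ξ) in
def clgTwist (v : I → Fin l) (i : I) : F :=
  ξ ^ (∑ s with s < i, v s).val

theorem clgTwist_update_of_not_lt {i j : I} (hji : ¬j < i) (v : I → Fin l) (a : Fin l) :
    clgTwist ξ (Function.update v j a) i = clgTwist ξ v i := by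
  unfold clgTwist
  congr 2
  refine Finset.sum_congr rfl fun s hs => Function.update_of_ne ?_ _ _
  rintro rfl
  exact hji (Finset.mem_filter.mp hs).2

theorem clgTwist_update_add_one_of_lt (hξl : ξ ^ l = 1) {i j : I} (hij : i < j)
    (v : I → Fin l) :
    clgTwist ξ (Function.update v i (v i + 1)) j = ξ * clgTwist ξ v j := by
  have hi : i ∈ ({s | s < j} : Finset I) := by simpa using hij
  have hsum : ∑ s with s < j, Function.update v i (v i + 1) s = (∑ s with s < j, v s) + 1 := by
    rw [Finset.sum_update_of_mem hi, ← Finset.add_sum_erase _ _ hi,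
      Finset.sdiff_singleton_eq_erase]
    abel
  rw [clgTwist, clgTwist, hsum, Fin.val_add, pow_mod_of_pow_eq_one hξl, pow_add,
    Fin.val_one', pow_mod_of_pow_eq_one hξl, pow_one, mul_comm]

variable (ξ) in
noncomputable def twistedShift (i : I) : Module.End F ((I → Fin l) → F) :=
  (Pi.basisFun F (I → Fin l)).constr F fun v =>
    clgTwist ξ v i • Pi.basisFun F (I → Fin l) (Function.update v i (v i + 1))

theorem twistedShift_basisFun (i : I) (v : I → Fin l) :
    twistedShift ξ i (Pi.basisFun F (I → Fin l) v) =
      clgTwist ξ v i • Pi.basisFun F (I → Fin l) (Function.update v i (v i + 1)) :=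
  Module.Basis.constr_basis _ _ _ _

theorem twistedShift_pow_basisFun (i : I) (n : ℕ) (v : I → Fin l) :
    (twistedShift ξ i ^ n) (Pi.basisFun F (I → Fin l) v) =
      clgTwist ξ v i ^ n • Pi.basisFun F (I → Fin l) (Function.update v i (v i + n)) := by
  induction n with
  | zero => simp
  | succ n ih =>
    rw [pow_succ', Module.End.mul_apply, ih, map_smul, twistedShift_basisFun,
      clgTwist_update_of_not_lt (lt_irrefl i), smul_smul, ← pow_succ, Function.update_idem,
      Function.update_self, Nat.cast_succ, add_assoc]

theorem twistedShift_pow_eq_one (hξl : ξ ^ l = 1) (i : I) :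
    twistedShift ξ i ^ l = (1 : Module.End F ((I → Fin l) → F)) := by
  refine (Pi.basisFun F (I → Fin l)).ext fun v => ?_
  rw [twistedShift_pow_basisFun, Fin.natCast_self, add_zero, Function.update_eq_self,
    clgTwist, ← pow_mul, mul_comm, pow_mul, hξl, one_pow, one_smul, Module.End.one_apply]

theorem twistedShift_mul_of_lt (hξl : ξ ^ l = 1) {i j : I} (hij : i < j) :
    twistedShift ξ j * twistedShift ξ i =
      ξ • (twistedShift ξ i * twistedShift ξ j : Module.End F ((I → Fin l) → F)) := by
  refine (Pi.basisFun F (I → Fin l)).ext fun v => ?_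
  rw [Module.End.mul_apply, LinearMap.smul_apply, Module.End.mul_apply, twistedShift_basisFun,
    twistedShift_basisFun, map_smul, map_smul, twistedShift_basisFun, twistedShift_basisFun,
    clgTwist_update_add_one_of_lt hξl hij, clgTwist_update_of_not_lt (not_lt_of_gt hij),
    Function.update_of_ne hij.ne', Function.update_of_ne hij.ne, Function.update_comm hij.ne,
    smul_smul, smul_smul, smul_smul]
  ring_nf

variable (ξ) in
noncomputable def clgRep (hξl : ξ ^ l = 1) :
    Clg F l ξ I →ₐ[F] Module.End F ((I → Fin l) → F) :=
  RingQuot.liftAlgHom F ⟨FreeAlgebra.lift F (twistedShift ξ), fun _ _ h => by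
    induction h with
    | pow i => simp [twistedShift_pow_eq_one hξl]
    | comm hij => simpa using twistedShift_mul_of_lt hξl hij⟩

theorem clgRep_clgGen (hξl : ξ ^ l = 1) (i : I) :
    clgRep ξ hξl (ClgGen F l ξ I i) = twistedShift ξ i := by
  simp [clgRep, ClgGen]

theorem clgRep_clgMonomial_basisFun_zero (hξl : ξ ^ l = 1) {L : List I}
    (hL : L.Pairwise (· < ·)) (k : I → Fin l) :
    clgRep ξ hξl (clgMonomial F l ξ L fun t => k t) (Pi.basisFun F (I → Fin l) 0) =
      Pi.basisFun F (I → Fin l) fun t => if t ∈ L then k t else 0 := by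
  induction L with
  | nil => simp [Pi.zero_def]
  | cons a L ih =>
    obtain ⟨ha, hL⟩ := List.pairwise_cons.mp hL
    have haL : a ∉ L := fun h => lt_irrefl a (ha a h)
    have hzero : ∑ s with s < a, (fun t => if t ∈ L then k t else 0) s = 0 :=
      Finset.sum_eq_zero fun s hs =>
        if_neg fun hsL => (Finset.mem_filter.mp hs).2.not_gt (ha s hsL)
    rw [clgMonomial_cons, map_mul, Module.End.mul_apply, ih hL, map_pow, clgRep_clgGen,
      twistedShift_pow_basisFun, clgTwist, hzero, Fin.val_zero, pow_zero, one_pow, one_smul]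
    congr 1
    funext t
    rcases eq_or_ne t a with rfl | hta
    · simp [haL]
    · simp [hta]

theorem linearIndependent_clgMonomial (hξl : ξ ^ l = 1) {L : List I}
    (hL : L.Pairwise (· < ·)) (hmem : ∀ i, i ∈ L) :
    LinearIndependent F fun k : I → Fin l => clgMonomial F l ξ L fun t => k t := by
  let φ := LinearMap.applyₗ (Pi.basisFun F (I → Fin l) 0) ∘ₗ (clgRep ξ hξl).toLinearMap
  refine LinearIndependent.of_comp φ ?_
  convert (Pi.basisFun F (I → Fin l)).linearIndependent
  funext k
  simpa [φ, hmem] using clgRep_clgMonomial_basisFun_zero hξl hL k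

end Representation

noncomputable def clgMonomialBasis {F : Type*} [Field F] {l : ℕ} [NeZero l] {ξ : F}
    (hξl : ξ ^ l = 1) {I : Type*} [LinearOrder I] [Fintype I] {L : List I}
    (hL : L.Pairwise (· < ·)) (hmem : ∀ i, i ∈ L) :
    Module.Basis (I → Fin l) F (Clg F l ξ I) :=
  .mk (linearIndependent_clgMonomial hξl hL hmem) (span_clgMonomial_eq_top hL hmem).ge

theorem stmt_9_general (F : Type*) [Field F] (l : ℕ) (hl : 1 < l)
    (ξ : F) (hξ : IsPrimitiveRoot ξ l) (m : ℕ) :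
    Module.finrank F (Clg F l ξ (Fin m)) = l ^ m ∧
      ∃ B : Module.Basis (Fin m → Fin l) F (Clg F l ξ (Fin m)),
        ∀ k : Fin m → Fin l,
          B k = ((List.finRange m).map fun i =>
            ClgGen F l ξ (Fin m) i ^ (k i : ℕ)).prod := by
  have : NeZero l := .of_pos (by omega)
  let B := clgMonomialBasis hξ.pow_eq_one (List.pairwise_lt_finRange m) List.mem_finRange
  refine ⟨?_, B, fun k => Module.Basis.mk_apply _ _ k⟩
  simp [Module.finrank_eq_card_basis B]

theorem stmt_9 (F : Type*) [Field F] (l : ℕ) (hl : 1 < l) (hchar : (l : F) ≠ 0)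
    (ξ : F) (hξ : IsPrimitiveRoot ξ l) (m : ℕ) (hm : 0 < m) :
    Module.finrank F (Clg F l ξ (Fin m)) = l ^ m ∧
      ∃ B : Module.Basis (Fin m → Fin l) F (Clg F l ξ (Fin m)),
        ∀ k : Fin m → Fin l,
          B k = ((List.finRange m).map fun i =>
            ClgGen F l ξ (Fin m) i ^ (k i : ℕ)).prod :=
  stmt_9_general F l hl ξ hξ m
end

section
/- Let F be an algebraically closed field, l > 1 an integer coprime to the characteristic of F, ξ ∈ F a primitive l-th root of unity, and m a positive even integer. Then the generalized Clifford algebra Clg(l,m) is isomorphic as an F-algebra to the matrix algebra M_{l^{m/2}}(F). -/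
namespace ClgProof

/-! ### The matrix side: clock-and-shift operators -/

section Wmat
variable {F : Type*} [Field F] {l : ℕ} (ξ : F) {n : ℕ}

abbrev Q (l n : ℕ) := Fin n → ZMod l

def ee (a : ZMod l) : F := ξ ^ a.val

lemma ee_zero (hl : 1 < l) : ee ξ (0 : ZMod l) = 1 := by
  haveI : NeZero l := ⟨by omega⟩
  simp [ee]

lemma ee_pow_mod (hξ : IsPrimitiveRoot ξ l) (x : ℕ) : ξ ^ (x % l) = ξ ^ x := by
  conv_rhs => rw [← Nat.div_add_mod x l]
  rw [pow_add, pow_mul, hξ.pow_eq_one, one_pow, one_mul]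

lemma ee_add (hl : 1 < l) (hξ : IsPrimitiveRoot ξ l) (a b : ZMod l) :
    ee ξ (a + b) = ee ξ a * ee ξ b := by
  haveI : NeZero l := ⟨by omega⟩
  rw [ee, ee, ee, ZMod.val_add, ee_pow_mod ξ hξ, pow_add]

lemma ee_ne_zero (hl : 1 < l) (hξ : IsPrimitiveRoot ξ l) (a : ZMod l) : ee ξ a ≠ 0 := by
  have : ξ ≠ 0 := by
    intro h
    have := hξ.pow_eq_one
    rw [h, zero_pow (by omega)] at this
    exact zero_ne_one this
  exact pow_ne_zero _ this

lemma ee_ne_one (hl : 1 < l) (hξ : IsPrimitiveRoot ξ l) {a : ZMod l} (ha : a ≠ 0) :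
    ee ξ a ≠ 1 := by
  haveI : NeZero l := ⟨by omega⟩
  intro h
  have hdvd : l ∣ a.val := (hξ.pow_eq_one_iff_dvd _).mp h
  have hlt := a.val_lt
  exact ha (by rw [← ZMod.val_eq_zero]; exact Nat.eq_zero_of_dvd_of_lt hdvd hlt)

lemma ee_nsmul (hl : 1 < l) (hξ : IsPrimitiveRoot ξ l) (c : ℕ) (a : ZMod l) :
    ee ξ (c • a) = ee ξ a ^ c := by
  induction c with
  | zero => simp [ee_zero ξ hl]
  | succ p ih => rw [succ_nsmul, ee_add ξ hl hξ, ih, pow_succ]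

def dot (b j : Q l n) : ZMod l := ∑ k, b k * j k

lemma dot_add_right (b j j' : Q l n) : dot b (j + j') = dot b j + dot b j' := by
  simp [dot, mul_add, Finset.sum_add_distrib]

lemma dot_add_left (b b' j : Q l n) : dot (b + b') j = dot b j + dot b' j := by
  simp [dot, add_mul, Finset.sum_add_distrib]

lemma dot_smul_left (c : ℕ) (b j : Q l n) : dot (c • b) j = c • dot b j := by
  simp [dot, Finset.smul_sum, smul_mul_assoc, mul_assoc]

lemma dot_single (b : Q l n) (s : Fin n) : dot b (Pi.single s 1) = b s := by
  classical
  simp [dot, Pi.single_apply, mul_ite, Finset.sum_ite_eq']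

variable [NeZero l]

def W (ξ : F) (a b : Q l n) : Matrix (Q l n) (Q l n) F :=
  Matrix.of fun i j => (if i = j + a then 1 else 0) * ee ξ (dot b j)

lemma W_apply (a b : Q l n) (i j : Q l n) :
    W ξ a b i j = (if i = j + a then 1 else 0) * ee ξ (dot b j) := rfl

lemma W_zero_zero (hl : 1 < l) : W ξ (0 : Q l n) 0 = 1 := by
  ext i j
  by_cases h : i = j <;>
    simp [W_apply, h, Matrix.one_apply, dot, ee_zero ξ hl, eq_comm]

lemma W_mul (hl : 1 < l) (hξ : IsPrimitiveRoot ξ l) (a b c d : Q l n) :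
    W ξ a b * W ξ c d = ee ξ (dot b c) • W ξ (a + c) (b + d) := by
  classical
  ext i j
  rw [Matrix.mul_apply]
  rw [Finset.sum_eq_single (j + c)]
  · simp only [W_apply, Matrix.smul_apply, smul_eq_mul]
    have hcom : j + c + a = j + (a + c) := by rw [add_assoc, add_comm c a]
    by_cases h : i = j + (a + c)
    · rw [if_pos (by rw [h, hcom]), if_pos h]
      simp only [if_pos rfl, if_true]
      rw [dot_add_right, dot_add_left, ee_add ξ hl hξ, ee_add ξ hl hξ]
      ring
    · rw [if_neg (fun hh => h (by rw [hh, hcom])), if_neg h]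
      ring
  · intro k _ hk
    simp only [W_apply]
    rw [if_neg hk]
    ring
  · simp

lemma W_pow (hl : 1 < l) (hξ : IsPrimitiveRoot ξ l) (a b : Q l n) (p : ℕ) :
    W ξ a b ^ p = ee ξ (dot b a) ^ p.choose 2 • W ξ (p • a) (p • b) := by
  induction p with
  | zero => simp [W_zero_zero ξ hl]
  | succ p ih =>
    rw [pow_succ, ih, Matrix.smul_mul, W_mul ξ hl hξ, dot_smul_left,
      ee_nsmul ξ hl hξ, smul_smul, ← pow_add, Nat.choose_succ_succ,
      Nat.choose_one_right, ← succ_nsmul, ← succ_nsmul, Nat.add_comm]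

lemma nsmul_l_eq_zero (v : Q l n) : l • v = 0 := by
  funext k
  simp [ZMod.natCast_self]

lemma W_pow_l (hl : 1 < l) (hξ : IsPrimitiveRoot ξ l) (a b : Q l n) :
    W ξ a b ^ l = ee ξ (dot b a) ^ l.choose 2 • 1 := by
  rw [W_pow ξ hl hξ, nsmul_l_eq_zero, nsmul_l_eq_zero, W_zero_zero ξ hl]

lemma ee_sub (hl : 1 < l) (hξ : IsPrimitiveRoot ξ l) (a b : ZMod l) :
    ee ξ (a - b) = ee ξ a * (ee ξ b)⁻¹ := by
  have h := ee_add ξ hl hξ (a - b) b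
  rw [sub_add_cancel] at h
  rw [eq_mul_inv_iff_mul_eq₀ (ee_ne_zero ξ hl hξ b)]
  exact h.symm

lemma sum_ee_mul (hl : 1 < l) (hξ : IsPrimitiveRoot ξ l) (c : ZMod l) :
    ∑ t : ZMod l, ee ξ (t * c) = if c = 0 then (l : F) else 0 := by
  haveI : NeZero l := ⟨by omega⟩
  by_cases hc : c = 0
  · simp [hc, ee_zero ξ hl, ZMod.card]
  · rw [if_neg hc]
    set S := ∑ t : ZMod l, ee ξ (t * c) with hS
    have key : ee ξ c * S = S := by
      rw [hS, Finset.mul_sum]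
      have ht : ∀ t : ZMod l, ee ξ c * ee ξ (t * c) = ee ξ ((t + 1) * c) := by
        intro t; rw [add_mul, one_mul, ee_add ξ hl hξ, mul_comm]
      simp_rw [ht]
      exact Fintype.sum_equiv (Equiv.addRight (1 : ZMod l)) _ _ (fun t => rfl)
    have hz : (ee ξ c - 1) * S = 0 := by rw [sub_mul, one_mul, key, sub_self]
    rcases mul_eq_zero.mp hz with h | h
    · exact absurd (sub_eq_zero.mp h) (ee_ne_one ξ hl hξ hc)
    · exact h

lemma sum_ee_dot (hl : 1 < l) (hξ : IsPrimitiveRoot ξ l) (d : Q l n) :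
    ∑ b : Q l n, ee ξ (dot b d) = if d = 0 then ((l : F))^n else 0 := by
  classical
  have e_sum : ∀ (b : Q l n), ee ξ (dot b d) = ∏ k, ee ξ (b k * d k) := by
    intro b
    rw [dot]
    induction (Finset.univ : Finset (Fin n)) using Finset.cons_induction with
    | empty => simp [ee_zero ξ hl]
    | cons a s ha ih => rw [Finset.sum_cons, Finset.prod_cons, ee_add ξ hl hξ, ih]
  calc ∑ b : Q l n, ee ξ (dot b d) = ∑ b : Q l n, ∏ k, ee ξ (b k * d k) := by
        simp_rw [e_sum]
    _ = ∏ k, ∑ t : ZMod l, ee ξ (t * d k) := by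
        rw [Finset.prod_univ_sum]
        rw [← Fintype.piFinset_univ]
    _ = ∏ k, (if d k = 0 then (l : F) else 0) := by
        simp_rw [sum_ee_mul ξ hl hξ]
    _ = if d = 0 then ((l : F))^n else 0 := by
        by_cases hd : d = 0
        · simp [hd]
        · rw [if_neg hd]
          obtain ⟨k, hk⟩ : ∃ k, d k ≠ 0 := by
            by_contra h; push_neg at h; exact hd (funext h)
          exact Finset.prod_eq_zero (Finset.mem_univ k) (by rw [if_neg hk])

lemma stdBasis_eq (hl : 1 < l) (hξ : IsPrimitiveRoot ξ l) (hchar : (l : F) ≠ 0)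
    (i0 j0 : Q l n) :
    Matrix.single i0 j0 (1:F) =
      ((l:F)^n)⁻¹ • ∑ b : Q l n, (ee ξ (dot b j0))⁻¹ • W ξ (i0 - j0) b := by
  classical
  ext i j
  simp only [Matrix.smul_apply, Matrix.sum_apply, W_apply, smul_eq_mul]
  have hterm : ∀ b : Q l n, (ee ξ (dot b j0))⁻¹ *
      ((if i = j + (i0 - j0) then 1 else 0) * ee ξ (dot b j)) =
      (if i = j + (i0 - j0) then 1 else 0) * ee ξ (dot b (j - j0)) := by
    intro b
    have : dot b (j - j0) = dot b j - dot b j0 := by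
      simp [dot, mul_sub, Finset.sum_sub_distrib]
    rw [this, ee_sub ξ hl hξ]
    ring
  simp_rw [hterm]
  rw [← Finset.mul_sum, sum_ee_dot ξ hl hξ]
  by_cases hj : j = j0
  · subst hj
    rw [sub_self, if_pos rfl]
    have h2 : j + (i0 - j) = i0 := by ring
    rw [h2]
    by_cases hi : i = i0
    · subst hi
      rw [if_pos rfl]
      simp [Matrix.single]
      field_simp
    · rw [if_neg hi]
      simp [Matrix.single, hi, Ne.symm hi]
  · rw [if_neg (sub_ne_zero.mpr hj)]
    simp only [Matrix.single, Matrix.of_apply, mul_zero]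
    rw [if_neg (fun h => hj h.2.symm)]

end Wmat

/-! ### The generator data -/

section Gen
variable {F : Type*} [Field F] {l : ℕ} (ξ : F) {n : ℕ}

def sitev (n : ℕ) (i : Fin (2*n)) : Fin n := ⟨(i:ℕ)/2, by have := i.isLt; omega⟩

def av (l : ℕ) {n : ℕ} (i : Fin (2*n)) : Q l n := Pi.single (sitev n i) 1

def bv (l : ℕ) {n : ℕ} (i : Fin (2*n)) : Q l n := fun k => if 2*(k:ℕ) < (i:ℕ) then 1 else 0

lemma dot_bv_av_lt {i j : Fin (2*n)} (hij : i < j) : dot (bv l j) (av l i) = 1 := by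
  rw [av, dot_single, bv]
  have hij' : (i:ℕ) < (j:ℕ) := hij
  rw [if_pos]
  show 2 * ((i:ℕ)/2) < (j:ℕ)
  omega

lemma dot_bv_av_gt {i j : Fin (2*n)} (hij : i < j) : dot (bv l i) (av l j) = 0 := by
  rw [av, dot_single, bv]
  have hij' : (i:ℕ) < (j:ℕ) := hij
  rw [if_neg]
  show ¬ 2 * ((j:ℕ)/2) < (i:ℕ)
  omega

lemma zmod_aux (hl : 1 < l) (x : ZMod l) : x + (l-1) • x = 0 := by
  have h1 : ((l-1 : ℕ) : ZMod l) = -1 := by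
    have h := ZMod.natCast_self l
    rw [Nat.cast_sub (by omega : 1 ≤ l), h]
    ring
  rw [nsmul_eq_mul, h1]
  ring

lemma av_pair (hl : 1 < l) (k : Fin n) (hk : 2*(k:ℕ)+1 < 2*n) :
    av l (⟨2*(k:ℕ)+1, hk⟩ : Fin (2*n)) + (l-1) • av l (⟨2*(k:ℕ), by omega⟩ : Fin (2*n)) = 0 := by
  have hs1 : sitev n (⟨2*(k:ℕ)+1, hk⟩ : Fin (2*n)) = k := by
    apply Fin.ext; show (2*(k:ℕ)+1)/2 = k; omega
  have hs0 : sitev n (⟨2*(k:ℕ), by omega⟩ : Fin (2*n)) = k := by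
    apply Fin.ext; show (2*(k:ℕ))/2 = k; omega
  rw [av, av, hs1, hs0]
  funext t
  simp only [Pi.add_apply, Pi.smul_apply, Pi.zero_apply]
  exact zmod_aux hl _

lemma bv_pair (hl : 1 < l) (k : Fin n) (hk : 2*(k:ℕ)+1 < 2*n) :
    bv l (⟨2*(k:ℕ)+1, hk⟩ : Fin (2*n)) + (l-1) • bv l (⟨2*(k:ℕ), by omega⟩ : Fin (2*n))
      = Pi.single k 1 := by
  funext t
  simp only [bv, Pi.add_apply, Pi.smul_apply]
  by_cases h1 : (t:ℕ) < (k:ℕ)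
  · rw [if_pos (by omega), if_pos (by omega), Pi.single_apply,
      if_neg (by intro h; rw [h] at h1; omega)]
    exact zmod_aux hl 1
  · by_cases h2 : (t:ℕ) = (k:ℕ)
    · rw [if_pos (by omega), if_neg (by omega), Pi.single_apply,
        if_pos (Fin.ext h2), smul_zero, add_zero]
    · rw [if_neg (by omega), if_neg (by omega), Pi.single_apply,
        if_neg (by intro h; rw [h] at h2; omega), smul_zero, add_zero]

lemma single_eq_val_smul (hl : 1 < l) (k : Fin n) (x : ZMod l) :
    Pi.single k x = x.val • (Pi.single k 1 : Q l n) := by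
  haveI : NeZero l := ⟨by omega⟩
  funext t
  rw [Pi.smul_apply, Pi.single_apply, Pi.single_apply]
  by_cases h : t = k
  · rw [if_pos h, if_pos h, nsmul_eq_mul, mul_one, ZMod.natCast_val, ZMod.cast_id]
  · rw [if_neg h, if_neg h, smul_zero]

variable [NeZero l]

noncomputable def X (l : ℕ) [NeZero l] (ξ : F) {n : ℕ} (μ : Fin (2*n) → F) (i : Fin (2*n)) :
    Matrix (Q l n) (Q l n) F :=
  μ i • W ξ (av l i) (bv l i)

lemma X_pow_l (hl : 1 < l) (hξ : IsPrimitiveRoot ξ l) (μ : Fin (2*n) → F)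
    (hμ : ∀ i, μ i ^ l * ee ξ (dot (bv l i) (av l i)) ^ l.choose 2 = 1) (i : Fin (2*n)) :
    X l ξ μ i ^ l = 1 := by
  rw [X, smul_pow, W_pow_l ξ hl hξ, smul_smul, hμ, one_smul]

lemma X_comm (hl : 1 < l) (hξ : IsPrimitiveRoot ξ l) (μ : Fin (2*n) → F)
    {i j : Fin (2*n)} (hij : i < j) :
    X l ξ μ j * X l ξ μ i = ξ • (X l ξ μ i * X l ξ μ j) := by
  rw [X, X, smul_mul_smul_comm, W_mul ξ hl hξ, smul_mul_smul_comm, W_mul ξ hl hξ,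
    dot_bv_av_lt hij, dot_bv_av_gt hij, ee_zero ξ hl, add_comm (av l j) (av l i),
    add_comm (bv l j) (bv l i)]
  have h1 : ee ξ (1 : ZMod l) = ξ := by
    rw [ee, ZMod.val_one_eq_one_mod]
    rw [Nat.mod_eq_of_lt hl, pow_one]
  rw [h1]
  simp only [smul_smul]
  congr 1
  ring

lemma mem_range_W (hl : 1 < l) (hξ : IsPrimitiveRoot ξ l)
    (μ : Fin (2*n) → F) (hμ0 : ∀ i, μ i ≠ 0)
    (A : Subalgebra F (Matrix (Q l n) (Q l n) F))
    (hA : ∀ i, μ i • W ξ (av l i) (bv l i) ∈ A) :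
    ∀ a b : Q l n, W ξ a b ∈ A := by
  have hgen : ∀ i, W ξ (av l i) (bv l i) ∈ A := by
    intro i
    have := A.smul_mem (hA i) (μ i)⁻¹
    rwa [smul_smul, inv_mul_cancel₀ (hμ0 i), one_smul] at this
  have hadd : ∀ a b c d : Q l n, W ξ a b ∈ A → W ξ c d ∈ A → W ξ (a+c) (b+d) ∈ A := by
    intro a b c d h1 h2
    have hm := A.mul_mem h1 h2
    rw [W_mul ξ hl hξ] at hm
    have := A.smul_mem hm (ee ξ (dot b c))⁻¹
    rwa [smul_smul, inv_mul_cancel₀ (ee_ne_zero ξ hl hξ _), one_smul] at this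
  have hzero : W ξ (0 : Q l n) 0 ∈ A := by rw [W_zero_zero ξ hl]; exact A.one_mem
  have hnsmul : ∀ (c : ℕ) (a b : Q l n), W ξ a b ∈ A → W ξ (c • a) (c • b) ∈ A := by
    intro c a b h
    induction c with
    | zero => simpa using hzero
    | succ p ih => rw [succ_nsmul, succ_nsmul]; exact hadd _ _ _ _ ih h
  have hδb : ∀ k : Fin n, W ξ (0 : Q l n) (Pi.single k 1) ∈ A := by
    intro k
    have hk : 2*(k:ℕ)+1 < 2*n := by have := k.isLt; omega
    have h := hadd _ _ _ _ (hgen ⟨2*(k:ℕ)+1, hk⟩) (hnsmul (l-1) _ _ (hgen ⟨2*(k:ℕ), by omega⟩))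
    rwa [av_pair hl k hk, bv_pair hl k hk] at h
  have hball : ∀ b : Q l n, W ξ (0 : Q l n) b ∈ A := by
    intro b
    have hrw : b = ∑ k : Fin n, Pi.single k (b k) := by
      rw [Finset.univ_sum_single]
    rw [hrw]
    have : ∀ s : Finset (Fin n), W ξ (0 : Q l n) (∑ k ∈ s, Pi.single k (b k)) ∈ A := by
      intro s
      induction s using Finset.cons_induction with
      | empty => simpa using hzero
      | cons a s ha ih =>
        rw [Finset.sum_cons]
        have h1 : W ξ (0 : Q l n) (Pi.single a (b a)) ∈ A := by
          rw [single_eq_val_smul hl]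
          have := hnsmul (b a).val _ _ (hδb a)
          rwa [smul_zero] at this
        have := hadd _ _ _ _ h1 ih
        rwa [add_zero] at this
    exact this _
  have hδa : ∀ k : Fin n, W ξ (Pi.single k 1) (0 : Q l n) ∈ A := by
    intro k
    have hk : 2*(k:ℕ)+1 < 2*n := by have := k.isLt; omega
    have h := hadd _ _ _ _ (hgen ⟨2*(k:ℕ), by omega⟩)
      (hnsmul (l-1) _ _ (hball (bv l ⟨2*(k:ℕ), by omega⟩)))
    rw [smul_zero, add_zero] at h
    have hbz : bv l (⟨2*(k:ℕ), by omega⟩ : Fin (2*n))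
        + (l-1) • bv l (⟨2*(k:ℕ), by omega⟩ : Fin (2*n)) = 0 := by
      funext t
      simp only [Pi.add_apply, Pi.smul_apply, Pi.zero_apply]
      exact zmod_aux hl _
    have hav : av l (⟨2*(k:ℕ), by omega⟩ : Fin (2*n)) = Pi.single k 1 := by
      have hsv : sitev n (⟨2*(k:ℕ), by omega⟩ : Fin (2*n)) = k := by
        apply Fin.ext
        show (2*(k:ℕ))/2 = (k:ℕ)
        omega
      rw [av, hsv]
    rwa [hbz, hav] at h
  have haall : ∀ a : Q l n, W ξ a (0 : Q l n) ∈ A := by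
    intro a
    have hrw : a = ∑ k : Fin n, Pi.single k (a k) := by
      rw [Finset.univ_sum_single]
    rw [hrw]
    have : ∀ s : Finset (Fin n), W ξ (∑ k ∈ s, Pi.single k (a k)) (0 : Q l n) ∈ A := by
      intro s
      induction s using Finset.cons_induction with
      | empty => simpa using hzero
      | cons c s hc ih =>
        rw [Finset.sum_cons]
        have h1 : W ξ (Pi.single c (a c)) (0 : Q l n) ∈ A := by
          rw [single_eq_val_smul hl]
          have := hnsmul (a c).val _ _ (hδa c)
          rwa [smul_zero] at this
        have := hadd _ _ _ _ h1 ih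
        rwa [add_zero] at this
    exact this _
  intro a b
  have := hadd _ _ _ _ (haall a) (hball b)
  rwa [add_zero, zero_add] at this

end Gen

/-! ### The Clifford algebra side: spanning monomials -/

section Span
variable (F : Type*) [Field F] (l : ℕ) (ξ : F) (m : ℕ)

noncomputable def yy (i : Fin m) : Clg F l ξ (Fin m) :=
  RingQuot.mkAlgHom F (ClgRel F l ξ) (FreeAlgebra.ι F i)

lemma yy_pow_l (i : Fin m) : yy F l ξ m i ^ l = 1 := by
  have h := RingQuot.mkAlgHom_rel F (ClgRel.pow (F := F) (l := l) (ξ := ξ) i)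
  rwa [map_pow, map_one] at h

lemma yy_comm {i j : Fin m} (hij : i < j) :
    yy F l ξ m j * yy F l ξ m i = ξ • (yy F l ξ m i * yy F l ξ m j) := by
  have h := RingQuot.mkAlgHom_rel F (ClgRel.comm (F := F) (l := l) (ξ := ξ) hij)
  rwa [map_mul, map_smul, map_mul] at h

noncomputable def zz (t : ℕ) : Clg F l ξ (Fin m) :=
  if h : t < m then yy F l ξ m ⟨t, h⟩ else 1

lemma zz_pow_l (hl : 0 < l) (t : ℕ) : zz F l ξ m t ^ l = 1 := by
  rw [zz]
  split
  · exact yy_pow_l F l ξ m _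
  · exact one_pow l

lemma zz_pow_mod (hl : 0 < l) (t : ℕ) (a : ℕ) :
    zz F l ξ m t ^ a = zz F l ξ m t ^ (a % l) := by
  conv_lhs => rw [← Nat.div_add_mod a l]
  rw [pow_add, pow_mul, zz_pow_l F l ξ m hl, one_pow, one_mul]

lemma zz_comm {s t : ℕ} (hst : s < t) (ht : t < m) :
    zz F l ξ m t * zz F l ξ m s = ξ • (zz F l ξ m s * zz F l ξ m t) := by
  have hs : s < m := by omega
  rw [zz, zz, dif_pos ht, dif_pos hs]
  exact yy_comm F l ξ m (show (⟨s, hs⟩ : Fin m) < ⟨t, ht⟩ from hst)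

lemma zz_comm_pow {s t : ℕ} (hst : s < t) (ht : t < m) (p : ℕ) :
    zz F l ξ m t * zz F l ξ m s ^ p = ξ ^ p • (zz F l ξ m s ^ p * zz F l ξ m t) := by
  induction p with
  | zero => simp
  | succ p ih =>
    rw [pow_succ, ← mul_assoc, ih, smul_mul_assoc, mul_assoc, zz_comm F l ξ m hst ht,
      mul_smul_comm, smul_smul, pow_succ, ← mul_assoc]

noncomputable def monAux (c : ℕ → ℕ) : ℕ → Clg F l ξ (Fin m)
  | 0 => 1
  | (k+1) => monAux c k * zz F l ξ m k ^ c k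

lemma monAux_congr (k : ℕ) (c c' : ℕ → ℕ) (h : ∀ t, t < k → c t = c' t) :
    monAux F l ξ m c k = monAux F l ξ m c' k := by
  induction k with
  | zero => rfl
  | succ k ih =>
    rw [monAux, monAux, ih (fun t ht => h t (by omega)), h k (by omega)]

lemma monAux_mod (hl : 0 < l) (k : ℕ) (c c' : ℕ → ℕ) (h : ∀ t, c t % l = c' t % l) :
    monAux F l ξ m c k = monAux F l ξ m c' k := by
  induction k with
  | zero => rfl
  | succ k ih =>
    rw [monAux, monAux, ih, zz_pow_mod F l ξ m hl, h k, ← zz_pow_mod F l ξ m hl]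

lemma monAux_one (c : ℕ → ℕ) (k : ℕ) (h : ∀ t, t < k → c t = 0) :
    monAux F l ξ m c k = 1 := by
  induction k with
  | zero => rfl
  | succ k ih =>
    rw [monAux, ih (fun t ht => h t (by omega)), h k (by omega), pow_zero, mul_one]

lemma zz_pull (k : ℕ) (c : ℕ → ℕ) (s : ℕ) (hks : k ≤ s) (hs : s < m) :
    zz F l ξ m s * monAux F l ξ m c k
      = ξ ^ (∑ t ∈ Finset.range k, c t) • (monAux F l ξ m c k * zz F l ξ m s) := by
  induction k with
  | zero => simp [monAux]
  | succ k ih =>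
    rw [monAux, ← mul_assoc, ih (by omega), smul_mul_assoc, mul_assoc,
      zz_comm_pow F l ξ m (show k < s by omega) hs, mul_smul_comm, smul_smul,
      ← pow_add, Finset.sum_range_succ, ← mul_assoc]

lemma zz_insert (k : ℕ) (c : ℕ → ℕ) (s : ℕ) (hsk : s < k) (hs : s < m) :
    zz F l ξ m s * monAux F l ξ m c k
      = ξ ^ (∑ t ∈ Finset.range s, c t) •
          monAux F l ξ m (Function.update c s (c s + 1)) k := by
  induction k with
  | zero => omega
  | succ k ih =>
    by_cases h : s = k
    · subst h
      rw [monAux, ← mul_assoc, zz_pull F l ξ m s c s le_rfl hs, smul_mul_assoc, mul_assoc,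
        ← pow_succ']
      rw [monAux, Function.update_self,
        monAux_congr F l ξ m s (Function.update c s (c s + 1)) c
          (fun t ht => Function.update_of_ne (by omega) _ c)]
    · have hsk' : s < k := by omega
      rw [monAux, ← mul_assoc, ih hsk', smul_mul_assoc, monAux,
        Function.update_of_ne (by omega : k ≠ s)]

def cv (v : Fin m → ZMod l) (t : ℕ) : ℕ := if h : t < m then (v ⟨t, h⟩).val else 0

noncomputable def mon' (v : Fin m → ZMod l) : Clg F l ξ (Fin m) :=
  monAux F l ξ m (cv l m v) m

lemma key_mul (hl : 1 < l) (i : Fin m) (v : Fin m → ZMod l) :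
    yy F l ξ m i * mon' F l ξ m v
      = ξ ^ (∑ t ∈ Finset.range (i : ℕ), cv l m v t) •
          mon' F l ξ m (v + Pi.single i 1) := by
  haveI : NeZero l := ⟨by omega⟩
  haveI : Fact (1 < l) := ⟨hl⟩
  have hz : yy F l ξ m i = zz F l ξ m (i : ℕ) := by
    rw [zz, dif_pos i.isLt]
  rw [hz, mon', mon', zz_insert F l ξ m m _ (i : ℕ) i.isLt i.isLt]
  congr 1
  apply monAux_mod F l ξ m (by omega)
  intro t
  by_cases ht : t < m
  · by_cases hti : t = (i : ℕ)
    · subst hti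
      rw [Function.update_self, cv, cv, dif_pos ht, dif_pos ht]
      have h1 : (⟨(i:ℕ), ht⟩ : Fin m) = i := Fin.ext rfl
      rw [h1]
      simp only [Pi.add_apply, Pi.single_eq_same]
      rw [ZMod.val_add, ZMod.val_one]
      rw [Nat.mod_mod_of_dvd _ dvd_rfl]
    · rw [Function.update_of_ne hti, cv, cv, dif_pos ht, dif_pos ht]
      have h1 : (⟨t, ht⟩ : Fin m) ≠ i := fun h => hti (by rw [← h])
      simp only [Pi.add_apply, Pi.single_apply, if_neg h1, add_zero]
  · have hti : t ≠ (i : ℕ) := fun h => ht (h ▸ i.isLt)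
    rw [Function.update_of_ne hti, cv, cv, dif_neg ht, dif_neg ht]

lemma mon'_zero (hl : 1 < l) : mon' F l ξ m 0 = 1 := by
  haveI : NeZero l := ⟨by omega⟩
  apply monAux_one
  intro t ht
  rw [cv, dif_pos ht]
  simp

lemma span_mon'_top (hl : 1 < l) :
    Submodule.span F (Set.range (mon' F l ξ m)) = ⊤ := by
  set T := Submodule.span F (Set.range (mon' F l ξ m)) with hT
  have h1T : (1 : Clg F l ξ (Fin m)) ∈ T := by
    rw [← mon'_zero F l ξ m hl]
    exact Submodule.subset_span (Set.mem_range_self _)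
  have hmulT : ∀ (i : Fin m), ∀ x ∈ T, yy F l ξ m i * x ∈ T := by
    intro i x hx
    induction hx using Submodule.span_induction with
    | mem x hx =>
      obtain ⟨v, rfl⟩ := hx
      rw [key_mul F l ξ m hl]
      exact T.smul_mem _ (Submodule.subset_span (Set.mem_range_self _))
    | zero => rw [mul_zero]; exact T.zero_mem
    | add a b _ _ ha hb => rw [mul_add]; exact T.add_mem ha hb
    | smul r a _ ha => rw [mul_smul_comm]; exact T.smul_mem r ha
  have hallT : ∀ (w : FreeAlgebra F (Fin m)), ∀ x ∈ T,
      RingQuot.mkAlgHom F (ClgRel F l ξ) w * x ∈ T := by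
    intro w
    induction w using FreeAlgebra.induction with
    | grade0 r =>
      intro x hx
      rw [AlgHom.commutes, ← Algebra.smul_def]
      exact T.smul_mem r hx
    | grade1 i => exact hmulT i
    | mul w1 w2 h1 h2 =>
      intro x hx
      rw [map_mul, mul_assoc]
      exact h1 _ (h2 x hx)
    | add w1 w2 h1 h2 =>
      intro x hx
      rw [map_add, add_mul]
      exact T.add_mem (h1 x hx) (h2 x hx)
  rw [eq_top_iff]
  intro x _
  obtain ⟨w, rfl⟩ := RingQuot.mkAlgHom_surjective F (ClgRel F l ξ) x
  have := hallT w 1 h1T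
  rwa [mul_one] at this

lemma clg_finite (hl : 1 < l) : Module.Finite F (Clg F l ξ (Fin m)) := by
  haveI : NeZero l := ⟨by omega⟩
  haveI : Module.Finite F (Submodule.span F (Set.range (mon' F l ξ m))) :=
    FiniteDimensional.span_of_finite F (Set.finite_range _)
  exact Module.Finite.equiv (LinearEquiv.ofTop _ (span_mon'_top F l ξ m hl))

lemma clg_finrank_le (hl : 1 < l) :
    Module.finrank F (Clg F l ξ (Fin m)) ≤ l ^ m := by
  classical
  haveI : NeZero l := ⟨by omega⟩
  haveI := (Set.finite_range (mon' F l ξ m)).fintype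
  have h1 : Module.finrank F (Clg F l ξ (Fin m))
      = Module.finrank F (Submodule.span F (Set.range (mon' F l ξ m))) := by
    rw [span_mon'_top F l ξ m hl, finrank_top]
  rw [h1]
  refine le_trans (finrank_span_le_card _) ?_
  rw [Set.toFinset_range]
  refine le_trans (Finset.card_image_le) ?_
  rw [Finset.card_univ, Fintype.card_fun, ZMod.card, Fintype.card_fin]

end Span

end ClgProof

namespace ClgProof

theorem main (F : Type*) [Field F] [IsAlgClosed F] (l : ℕ) (hl : 1 < l)
    (hchar : (l : F) ≠ 0) (ξ : F) (hξ : IsPrimitiveRoot ξ l) (n : ℕ) :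
    Nonempty (Clg F l ξ (Fin (2*n)) ≃ₐ[F] Matrix (Fin (l ^ n)) (Fin (l ^ n)) F) := by
  haveI : NeZero l := ⟨by omega⟩
  -- choose the scalars μ
  have hex : ∀ i : Fin (2*n), ∃ z : F,
      z ^ l = (ee ξ (dot (bv l i) (av l i)) ^ Nat.choose l 2)⁻¹ :=
    fun i => IsAlgClosed.exists_pow_nat_eq _ (by omega)
  choose μ hμ using hex
  have hμ1 : ∀ i, μ i ^ l * ee ξ (dot (bv l i) (av l i)) ^ Nat.choose l 2 = 1 := by
    intro i
    rw [hμ]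
    exact inv_mul_cancel₀ (pow_ne_zero _ (ee_ne_zero ξ hl hξ _))
  have hμ0 : ∀ i, μ i ≠ 0 := by
    intro i h
    have h1 := hμ1 i
    rw [h, zero_pow (by omega), zero_mul] at h1
    exact zero_ne_one h1
  -- the algebra hom
  have hrel : ∀ ⦃x y : FreeAlgebra F (Fin (2*n))⦄, ClgRel F l ξ x y →
      FreeAlgebra.lift F (X l ξ μ) x = FreeAlgebra.lift F (X l ξ μ) y := by
    intro x y h
    induction h with
    | pow i =>
      rw [map_pow, map_one, FreeAlgebra.lift_ι_apply]
      exact X_pow_l ξ hl hξ μ hμ1 i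
    | comm hij =>
      simp only [map_mul, map_smul, FreeAlgebra.lift_ι_apply]
      exact X_comm ξ hl hξ μ hij
  set φ : Clg F l ξ (Fin (2*n)) →ₐ[F] Matrix (Q l n) (Q l n) F :=
    RingQuot.liftAlgHom F ⟨FreeAlgebra.lift F (X l ξ μ), hrel⟩ with hφ
  have hφy : ∀ i, φ (yy F l ξ (2*n) i) = X l ξ μ i := by
    intro i
    rw [hφ, yy, RingQuot.liftAlgHom_mkAlgHom_apply, FreeAlgebra.lift_ι_apply]
  -- surjectivity
  have hWmem : ∀ a b : Q l n, W ξ a b ∈ φ.range :=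
    mem_range_W ξ hl hξ μ hμ0 φ.range
      (fun i => ⟨yy F l ξ (2*n) i, hφy i⟩)
  have hsurj : Function.Surjective φ := by
    intro M
    have hstd : ∀ i0 j0 : Q l n, Matrix.single i0 j0 (1:F) ∈ φ.range := by
      intro i0 j0
      rw [stdBasis_eq ξ hl hξ hchar i0 j0]
      exact Subalgebra.smul_mem _
        (sum_mem (fun b _ => Subalgebra.smul_mem _ (hWmem _ b) _)) _
    have hM : M ∈ φ.range := by
      rw [Matrix.matrix_eq_sum_single M]
      refine sum_mem (fun i _ => sum_mem (fun j _ => ?_))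
      have hsm : Matrix.single i j (M i j) = M i j • Matrix.single i j (1:F) := by
        ext i' j'
        simp only [Matrix.single, Matrix.of_apply, Matrix.smul_apply, smul_eq_mul,
          mul_ite, mul_one, mul_zero]
      rw [hsm]
      exact Subalgebra.smul_mem _ (hstd i j) _
    exact hM
  -- injectivity via dimension count
  haveI hfin : Module.Finite F (Clg F l ξ (Fin (2*n))) := clg_finite F l ξ (2*n) hl
  have hrank : Module.finrank F (Clg F l ξ (Fin (2*n))) ≤ l ^ (2*n) :=
    clg_finrank_le F l ξ (2*n) hl
  have hcardQ : Fintype.card (Q l n) = l ^ n := by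
    rw [Fintype.card_fun, ZMod.card, Fintype.card_fin]
  have hmat : Module.finrank F (Matrix (Q l n) (Q l n) F) = l ^ (2*n) := by
    rw [Module.finrank_matrix, hcardQ, Module.finrank_self, mul_one, ← pow_add, two_mul]
  have hinj : Function.Injective φ := by
    have hinj' : Function.Injective φ.toLinearMap := by
      rw [← LinearMap.ker_eq_bot]
      have hrn := LinearMap.finrank_range_add_finrank_ker φ.toLinearMap
      have hrange : LinearMap.range φ.toLinearMap = ⊤ := LinearMap.range_eq_top.mpr hsurj
      rw [hrange, finrank_top] at hrn
      have hker : Module.finrank F (LinearMap.ker φ.toLinearMap) = 0 := by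
        rw [hmat] at hrn
        omega
      exact Submodule.finrank_eq_zero.mp hker
    exact hinj'
  exact ⟨(AlgEquiv.ofBijective φ ⟨hinj, hsurj⟩).trans
    (Matrix.reindexAlgEquiv F F (Fintype.equivFinOfCardEq hcardQ))⟩

end ClgProof

theorem stmt_10 (F : Type*) [Field F] [IsAlgClosed F] (l : ℕ) (hl : 1 < l)
    (hchar : (l : F) ≠ 0) (ξ : F) (hξ : IsPrimitiveRoot ξ l)
    (m : ℕ) (hm : 0 < m) (hmeven : Even m) :
    Nonempty (Clg F l ξ (Fin m) ≃ₐ[F]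
      Matrix (Fin (l ^ (m / 2))) (Fin (l ^ (m / 2))) F) := by
  obtain ⟨r, hr⟩ := hmeven
  have h2 : m = 2 * r := by omega
  subst h2
  have hdiv : 2 * r / 2 = r := by omega
  rw [hdiv]
  exact ClgProof.main F l hl hchar ξ hξ r
end

section
/- Let F be an algebraically closed field, l > 1 an integer coprime to the characteristic of F, ξ ∈ F a primitive l-th root of unity, and m an odd positive integer. Then the generalized Clifford algebra Clg(l,m) is isomorphic as an F-algebra to the direct sum of l copies of the matrix algebra M_{l^{(m-1)/2}}(F). -/
namespace Clg

variable {F : Type*} [Field F] {l : ℕ} {ξ : F} {I : Type*} [LinearOrder I]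

variable (F l ξ) in
def ι (i : I) : Clg F l ξ I :=
  RingQuot.mkAlgHom F (ClgRel F l ξ) (FreeAlgebra.ι F i)

theorem ι_pow (i : I) : ι F l ξ i ^ l = 1 := by
  rw [ι, ← map_pow, RingQuot.mkAlgHom_rel F (ClgRel.pow i), map_one]

theorem ι_mul_ι {i j : I} (hij : i < j) :
    ι F l ξ j * ι F l ξ i = ξ • (ι F l ξ i * ι F l ξ j) := by
  rw [ι, ι, ← map_mul, RingQuot.mkAlgHom_rel F (ClgRel.comm hij), map_smul, map_mul]

theorem adjoin_range_ι : Algebra.adjoin F (Set.range (ι F l ξ (I := I))) = ⊤ := by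
  rw [← (AlgHom.range_eq_top _).mpr (RingQuot.mkAlgHom_surjective F (ClgRel F l ξ)),
    ← Algebra.map_top, ← FreeAlgebra.adjoin_range_ι, AlgHom.map_adjoin, ← Set.range_comp]
  rfl

variable {A : Type*} [Ring A] [Algebra F A]

def lift (x : I → A) (hpow : ∀ i, x i ^ l = 1)
    (hcomm : ∀ i j, i < j → x j * x i = ξ • (x i * x j)) : Clg F l ξ I →ₐ[F] A :=
  RingQuot.liftAlgHom F ⟨FreeAlgebra.lift F x, fun _ _ r => by
    cases r with
    | pow i => simp [hpow]
    | comm hij => simp [hcomm _ _ hij]⟩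

@[simp]
theorem lift_ι (x : I → A) (hpow : ∀ i, x i ^ l = 1)
    (hcomm : ∀ i j, i < j → x j * x i = ξ • (x i * x j)) (i : I) :
    lift x hpow hcomm (ι F l ξ i) = x i := by
  rw [lift, ι, RingQuot.liftAlgHom_mkAlgHom_apply, FreeAlgebra.lift_ι_apply]

end Clg

section OrderedMonomial

variable {F A : Type*} [Field F] [Ring A] [Algebra F A]

def orderedMonomial {m : ℕ} (x : Fin m → A) (a : Fin m → ℕ) : A :=
  (List.ofFn fun i => x i ^ a i).prod

theorem orderedMonomial_snoc {m : ℕ} (x : Fin (m + 1) → A) (a : Fin m → ℕ) (b : ℕ) :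
    orderedMonomial x (Fin.snoc a b) =
      orderedMonomial (fun i => x i.castSucc) a * x (Fin.last m) ^ b := by
  rw [orderedMonomial, List.ofFn_succ', List.prod_concat]
  simp [orderedMonomial]

theorem pow_mul_eq_smul_mul_pow {c : F} {y z : A} (h : y * z = c • (z * y)) (n : ℕ) :
    y ^ n * z = c ^ n • (z * y ^ n) := by
  induction n with
  | zero => simp
  | succ n ih =>
    rw [pow_succ, mul_assoc, h, mul_smul_comm, ← mul_assoc, ih, smul_mul_assoc, smul_smul,
      mul_assoc, ← pow_succ, ← pow_succ']

theorem orderedMonomial_mul_mem_span {c : F} {m : ℕ} {x : Fin m → A}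
    (hcomm : ∀ i j, i < j → x j * x i = c • (x i * x j)) (a : Fin m → ℕ) (i : Fin m) :
    orderedMonomial x a * x i ∈ Submodule.span F (Set.range (orderedMonomial x)) := by
  induction m with
  | zero => exact i.elim0
  | succ m ih =>
    rw [← Fin.snoc_init_self a, orderedMonomial_snoc]
    induction i using Fin.lastCases with
    | last =>
      rw [mul_assoc, ← pow_succ, ← orderedMonomial_snoc]
      exact Submodule.subset_span ⟨_, rfl⟩
    | cast i =>
      set y := x (Fin.last m) ^ a (Fin.last m)
      rw [mul_assoc, pow_mul_eq_smul_mul_pow (hcomm _ _ (Fin.castSucc_lt_last i)),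
        mul_smul_comm, ← mul_assoc]
      refine Submodule.smul_mem _ _ ?_
      have hmap : Submodule.map (LinearMap.mulRight F y)
          (Submodule.span F (Set.range (orderedMonomial fun i => x i.castSucc))) ≤
          Submodule.span F (Set.range (orderedMonomial x)) := by
        rw [← Submodule.span_image]
        refine Submodule.span_mono ?_
        rintro _ ⟨_, ⟨a', rfl⟩, rfl⟩
        exact ⟨Fin.snoc a' (a (Fin.last m)), orderedMonomial_snoc _ _ _⟩
      have hcomm' (i j : Fin m) (hij : i < j) : x j.castSucc * x i.castSucc =
          c • (x i.castSucc * x j.castSucc) := hcomm _ _ (Fin.castSucc_lt_castSucc_iff.mpr hij)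
      exact hmap ⟨_, ih hcomm' _ i, rfl⟩

theorem span_orderedMonomial_eq_top {c : F} {m : ℕ} {x : Fin m → A}
    (hcomm : ∀ i j, i < j → x j * x i = c • (x i * x j))
    (hgen : Algebra.adjoin F (Set.range x) = ⊤) :
    Submodule.span F (Set.range (orderedMonomial x)) = ⊤ := by
  set S := Submodule.span F (Set.range (orderedMonomial x))
  have hS : ∀ y ∈ Algebra.adjoin F (Set.range x), ∀ s ∈ S, s * y ∈ S := by
    intro y hy
    induction hy using Algebra.adjoin_induction with
    | mem _ hy =>
      obtain ⟨i, rfl⟩ := hy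
      intro s hs
      induction hs using Submodule.span_induction with
      | mem _ hs =>
        obtain ⟨a, rfl⟩ := hs
        exact orderedMonomial_mul_mem_span hcomm a i
      | zero => simp
      | add _ _ _ _ h₁ h₂ => rw [add_mul]; exact S.add_mem h₁ h₂
      | smul r _ _ h => rw [smul_mul_assoc]; exact S.smul_mem r h
    | algebraMap r =>
      intro s hs
      rw [← Algebra.commutes, ← Algebra.smul_def]
      exact S.smul_mem r hs
    | add _ _ _ _ h₁ h₂ => intro s hs; rw [mul_add]; exact S.add_mem (h₁ s hs) (h₂ s hs)
    | mul _ _ _ _ h₁ h₂ => intro s hs; rw [← mul_assoc]; exact h₂ _ (h₁ s hs)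
  have h1 : (1 : A) ∈ S := Submodule.subset_span ⟨0, by simp [orderedMonomial]⟩
  refine eq_top_iff.mpr fun y _ => ?_
  simpa using hS y (hgen ▸ Algebra.mem_top) 1 h1

theorem span_orderedMonomial_fin_eq_top {c : F} {l m : ℕ} [NeZero l] {x : Fin m → A}
    (hpow : ∀ i, x i ^ l = 1) (hcomm : ∀ i j, i < j → x j * x i = c • (x i * x j))
    (hgen : Algebra.adjoin F (Set.range x) = ⊤) :
    Submodule.span F (Set.range fun a : Fin m → Fin l => orderedMonomial x fun i => a i) =
      ⊤ := by
  refine eq_top_iff.mpr ((span_orderedMonomial_eq_top hcomm hgen).symm.le.trans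
    (Submodule.span_mono ?_))
  rintro _ ⟨a, rfl⟩
  refine ⟨fun i => ⟨a i % l, Nat.mod_lt _ (NeZero.pos l)⟩, ?_⟩
  simp only [orderedMonomial, ← pow_eq_pow_mod _ (hpow _)]

end OrderedMonomial

namespace Clg

variable {F : Type*} [Field F] {l : ℕ} [NeZero l] {ξ : F} {m : ℕ}

theorem span_orderedMonomial_ι :
    Submodule.span F (Set.range fun a : Fin m → Fin l =>
      orderedMonomial (ι F l ξ) fun i => a i) = ⊤ :=
  span_orderedMonomial_fin_eq_top ι_pow (fun _ _ => ι_mul_ι) adjoin_range_ι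

instance : Module.Finite F (Clg F l ξ (Fin m)) :=
  Module.finite_def.mpr (Submodule.fg_def.mpr ⟨_, Set.finite_range _, span_orderedMonomial_ι⟩)

theorem finrank_le : Module.finrank F (Clg F l ξ (Fin m)) ≤ l ^ m := by
  have := finrank_range_le_card (R := F) fun a : Fin m → Fin l =>
    orderedMonomial (ι F l ξ) fun i => a i
  rwa [Set.finrank, span_orderedMonomial_ι, finrank_top, Fintype.card_fun, Fintype.card_fin,
    Fintype.card_fin] at this

end Clg

section ClockShift

variable {F A ι : Type*} [Field F] [CommRing A] [DecidableEq A] [Fintype ι] (ψ : AddChar A F)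

def clockShift (s u : ι → A) : Matrix (ι → A) (ι → A) F :=
  Matrix.of fun v w => if w = v - u then ψ (s ⬝ᵥ v) else 0

theorem clockShift_apply (s u v w : ι → A) :
    clockShift ψ s u v w = if w = v - u then ψ (s ⬝ᵥ v) else 0 := rfl

theorem clockShift_zero : clockShift ψ (0 : ι → A) 0 = 1 := by
  ext v w
  simp [clockShift_apply, Matrix.one_apply, eq_comm]

variable [Fintype A] [DecidableEq ι]

theorem clockShift_mul (s u s' u' : ι → A) :
    clockShift ψ s u * clockShift ψ s' u' =
      ψ (-(s' ⬝ᵥ u)) • clockShift ψ (s + s') (u + u') := by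
  ext v w
  rw [Matrix.mul_apply,
    Finset.sum_eq_single (v - u) (fun x _ hx => by simp [clockShift_apply, hx]) (by simp)]
  simp only [clockShift_apply, Matrix.smul_apply, smul_eq_mul, mul_ite, mul_zero,
    ite_mul, zero_mul, sub_sub]
  split_ifs
  · rw [← AddChar.map_add_eq_mul, ← AddChar.map_add_eq_mul]
    congr 1
    simp only [dotProduct_sub, add_dotProduct]
    ring
  · rfl

theorem clockShift_mul_comm (s u s' u' : ι → A) :
    clockShift ψ s' u' * clockShift ψ s u =
      ψ (s' ⬝ᵥ u - s ⬝ᵥ u') • (clockShift ψ s u * clockShift ψ s' u') := by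
  rw [clockShift_mul, clockShift_mul, smul_smul, ← AddChar.map_add_eq_mul, add_comm s,
    add_comm u]
  ring_nf

theorem clockShift_pow (s u : ι → A) (n : ℕ) :
    clockShift ψ s u ^ n = ψ (-(s ⬝ᵥ u)) ^ n.choose 2 • clockShift ψ (n • s) (n • u) := by
  induction n with
  | zero => simp [clockShift_zero]
  | succ n ih =>
    rw [pow_succ, ih, smul_mul_assoc, clockShift_mul, smul_smul, succ_nsmul, succ_nsmul,
      Nat.choose_succ_succ, Nat.choose_one_right, pow_add, dotProduct_smul, ← smul_neg,
      AddChar.map_nsmul_eq_pow, mul_comm]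

theorem sum_addChar_dotProduct (hψ : ψ.IsPrimitive) (d : ι → A) :
    ∑ s : ι → A, ψ (s ⬝ᵥ d) = if d = 0 then (Fintype.card (ι → A) : F) else 0 := by
  let φ : AddChar (ι → A) F :=
    { toFun s := ψ (s ⬝ᵥ d)
      map_zero_eq_one' := by simp
      map_add_eq_mul' s s' := by simp [add_dotProduct, AddChar.map_add_eq_mul] }
  have hφ : φ = 0 ↔ d = 0 := by
    refine ⟨fun h => ?_, fun h => by ext s; simp [φ, h]⟩
    by_contra hd
    obtain ⟨j, hj⟩ := Function.ne_iff.mp hd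
    obtain ⟨a, ha⟩ := AddChar.ne_one_iff.mp (hψ hj)
    have := DFunLike.congr_fun h (Pi.single j a)
    simp [φ, mul_comm a] at this
    exact ha this
  classical
  rw [← if_congr hφ rfl rfl]
  exact AddChar.sum_eq_ite φ

end ClockShift

section ClockShiftSpan

variable {F A ι : Type*} [Field F] [CommRing A] [Fintype A] [DecidableEq A] [Fintype ι]
  [DecidableEq ι] {ψ : AddChar A F}

theorem sum_smul_clockShift (hψ : ψ.IsPrimitive) (v w : ι → A) :
    ∑ s, ψ (-(s ⬝ᵥ v)) • clockShift ψ s (v - w) =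
      (Fintype.card (ι → A) : F) • Matrix.single v w 1 := by
  ext a b
  simp only [Matrix.sum_apply, Matrix.smul_apply, clockShift_apply, smul_eq_mul, mul_ite,
    mul_zero, Matrix.single_apply]
  by_cases hb : b = a - (v - w)
  · simp only [hb, if_true]
    simp_rw [← AddChar.map_add_eq_mul, neg_add_eq_sub, ← dotProduct_sub]
    rw [sum_addChar_dotProduct ψ hψ]
    by_cases ha : a = v
    · simp [ha]
    · simp [sub_eq_zero, ha, Ne.symm ha]
  · simp only [hb, if_false, Finset.sum_const_zero]
    rw [if_neg]
    rintro ⟨rfl, rfl⟩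
    exact hb (by abel)

theorem span_clockShift_eq_top (hψ : ψ.IsPrimitive) (hcard : (Fintype.card A : F) ≠ 0) :
    Submodule.span F (Set.range fun p : (ι → A) × (ι → A) => clockShift ψ p.1 p.2) = ⊤ := by
  have hsingle (v w : ι → A) : Matrix.single v w (1 : F) ∈
      Submodule.span F (Set.range fun p : (ι → A) × (ι → A) => clockShift ψ p.1 p.2) := by
    have hc : (Fintype.card (ι → A) : F) ≠ 0 := by
      simpa [Fintype.card_fun] using pow_ne_zero (Fintype.card ι) hcard
    rw [← inv_smul_smul₀ hc (Matrix.single v w 1), ← sum_smul_clockShift hψ]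
    exact Submodule.smul_mem _ _ (Submodule.sum_mem _ fun s _ =>
      Submodule.smul_mem _ _ (Submodule.subset_span ⟨(s, v - w), rfl⟩))
  refine eq_top_iff.mpr fun x _ => ?_
  rw [Matrix.matrix_eq_sum_single x]
  refine Submodule.sum_mem _ fun v _ => Submodule.sum_mem _ fun w _ => ?_
  simpa [Matrix.smul_single] using Submodule.smul_mem _ (x v w) (hsingle v w)

end ClockShiftSpan

section ClockShiftSupport

variable {F ι : Type*} [Field F] [Fintype ι] [DecidableEq ι] {n : ℕ} [NeZero n]
  (ψ : AddChar (ZMod n) F)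

def clockShiftSupport (R : Subalgebra F (Matrix (ι → ZMod n) (ι → ZMod n) F)) :
    Submodule (ZMod n) ((ι → ZMod n) × (ι → ZMod n)) :=
  let S : AddSubmonoid ((ι → ZMod n) × (ι → ZMod n)) :=
    { carrier := {p | clockShift ψ p.1 p.2 ∈ R}
      zero_mem' := by simp [clockShift_zero]
      add_mem' {p q} hp hq := by
        have := R.smul_mem (R.mul_mem hp hq) (ψ (-(q.1 ⬝ᵥ p.2)))⁻¹
        rwa [clockShift_mul, inv_smul_smul₀ (ψ.val_isUnit _).ne_zero] at this }
  { S with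
    smul_mem' c p hp := by
      rw [← ZMod.natCast_zmod_val c, Nat.cast_smul_eq_nsmul]
      exact S.nsmul_mem hp _ }

variable {ψ}

theorem Subalgebra.eq_top_of_clockShift_mem (hψ : ψ.IsPrimitive)
    (hn : (n : F) ≠ 0) {R : Subalgebra F (Matrix (ι → ZMod n) (ι → ZMod n) F)}
    {G : Set ((ι → ZMod n) × (ι → ZMod n))} (hG : Submodule.span (ZMod n) G = ⊤)
    (hR : ∀ p ∈ G, clockShift ψ p.1 p.2 ∈ R) : R = ⊤ := by
  have hsupp : clockShiftSupport ψ R = ⊤ :=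
    eq_top_iff.mpr (hG ▸ Submodule.span_le.mpr hR)
  rw [← Algebra.toSubmodule_eq_top, eq_top_iff,
    ← span_clockShift_eq_top hψ (by rwa [ZMod.card]), Submodule.span_le]
  rintro _ ⟨p, rfl⟩
  exact (hsupp ▸ Submodule.mem_top : p ∈ clockShiftSupport ψ R)

end ClockShiftSupport

theorem Subalgebra.pi_eq_top_of_const_mem {F ι B : Type*} [Field F] [Fintype ι] [DecidableEq ι]
    [Ring B] [Algebra F B] {S : Subalgebra F (ι → B)} (hconst : ∀ b, Function.const ι b ∈ S)
    {c : ι → F} (hc : Function.Injective c) (hcS : (fun t => algebraMap F B (c t)) ∈ S) :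
    S = ⊤ := by
  have hsingle (t₀ : ι) : Pi.single t₀ (1 : B) ∈ S := by
    set S' := S.comap (AlgHom.compLeft (Algebra.ofId F B) ι)
    -- an unnormalized Lagrange basis polynomial for the node `c t₀`, evaluated at `c`
    set P : ι → F := ∏ t ∈ Finset.univ.erase t₀, (c - algebraMap F _ (c t)) with hPdef
    have hPS : P ∈ S' :=
      Subalgebra.prod_mem _ fun t _ => S'.sub_mem (show c ∈ S' from hcS) (S'.algebraMap_mem _)
    have hd : ∏ t ∈ Finset.univ.erase t₀, (c t₀ - c t) ≠ 0 := Finset.prod_ne_zero_iff.mpr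
      fun t ht => sub_ne_zero.mpr (hc.ne (Finset.ne_of_mem_erase ht).symm)
    have hP : (∏ t ∈ Finset.univ.erase t₀, (c t₀ - c t))⁻¹ • P = Pi.single t₀ 1 := by
      funext s
      by_cases hs : s = t₀
      · subst hs; simp [P, Finset.prod_apply, hd]
      · rw [Pi.single_eq_of_ne hs, Pi.smul_apply, hPdef, Finset.prod_apply, smul_eq_zero]
        exact Or.inr <|
          Finset.prod_eq_zero (Finset.mem_erase.mpr ⟨hs, Finset.mem_univ s⟩) (by simp)
    have : Pi.single t₀ 1 ∈ S' := hP ▸ S'.smul_mem hPS _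
    convert (show AlgHom.compLeft (Algebra.ofId F B) ι (Pi.single t₀ 1) ∈ S from this) using 1
    funext s
    by_cases hs : s = t₀ <;> simp [hs]
  refine eq_top_iff.mpr fun f _ => ?_
  have hf : f = ∑ t, Pi.single t 1 * Function.const ι (f t) := by
    conv_lhs => rw [← Finset.univ_sum_single f]
    simp_rw [← Pi.single_mul_left, one_mul, Function.const_apply]
  rw [hf]
  exact S.sum_mem fun t _ => S.mul_mem (hsingle t) (hconst (f t))

theorem AddChar.IsPrimitive.zmod_injective {F : Type*} [Field F] {n : ℕ} [NeZero n]
    {ψ : AddChar (ZMod n) F} (hψ : ψ.IsPrimitive) : Function.Injective ψ := fun a b hab => by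
  rw [← sub_eq_zero, ← hψ.zmod_char_eq_one_iff n, AddChar.map_sub_eq_div, hab,
    div_self (ψ.val_isUnit b).ne_zero]

section JordanWigner

variable {l k : ℕ}

def jwClock (i : ℕ) : Fin k → ZMod l := fun j => if 2 * (j : ℕ) < i then 1 else 0

def jwShift (i : ℕ) : Fin k → ZMod l := fun j => if (j : ℕ) = i / 2 then 1 else 0

theorem jwClock_dotProduct_jwShift (i i' : ℕ) :
    (jwClock i' : Fin k → ZMod l) ⬝ᵥ jwShift i =
      if i / 2 < k ∧ 2 * (i / 2) < i' then 1 else 0 := by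
  simp only [dotProduct, jwClock, jwShift, mul_ite, mul_one, mul_zero]
  rw [Fin.sum_univ_eq_sum_range (fun j => if j = i / 2 then if 2 * j < i' then 1 else 0 else 0),
    Finset.sum_ite_eq']
  simp [ite_and]

theorem jwShift_of_div_two_eq {i : ℕ} (j : Fin k) (hi : i / 2 = j) :
    (jwShift i : Fin k → ZMod l) = Pi.single j 1 := by
  funext j'
  simp [jwShift, Pi.single_apply, hi, Fin.val_inj]

theorem jwShift_eq_zero {i : ℕ} (hi : k ≤ i / 2) : (jwShift i : Fin k → ZMod l) = 0 := by
  funext j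
  simp only [jwShift, Pi.zero_apply, ite_eq_right_iff]
  omega

theorem jwClock_succ_sub_jwClock (j : Fin k) :
    (jwClock (2 * j + 1) - jwClock (2 * j) : Fin k → ZMod l) = Pi.single j 1 := by
  funext j'
  simp only [Pi.sub_apply, jwClock, Pi.single_apply, Fin.ext_iff]
  split_ifs <;> first | (exfalso; omega) | simp

theorem span_jwClock_jwShift_eq_top :
    Submodule.span (ZMod l) (Set.range fun i : Fin (2 * k) =>
      ((jwClock i : Fin k → ZMod l), (jwShift i : Fin k → ZMod l))) = ⊤ := by
  set N := Submodule.span (ZMod l) (Set.range fun i : Fin (2 * k) =>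
    ((jwClock i : Fin k → ZMod l), (jwShift i : Fin k → ZMod l)))
  have hgen (i : ℕ) (hi : i < 2 * k) :
      ((jwClock i : Fin k → ZMod l), (jwShift i : Fin k → ZMod l)) ∈ N :=
    Submodule.subset_span ⟨⟨i, hi⟩, rfl⟩
  have hbasis (f : (Fin k → ZMod l) →ₗ[ZMod l] (Fin k → ZMod l) × (Fin k → ZMod l))
      (hf : ∀ j, f (Pi.single j 1) ∈ N) (s : Fin k → ZMod l) : f s ∈ N := by
    have : Submodule.span (ZMod l) (Set.range (Pi.basisFun (ZMod l) (Fin k))) ≤ N.comap f :=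
      Submodule.span_le.mpr (by rintro _ ⟨j, rfl⟩; simpa using hf j)
    exact this ((Pi.basisFun (ZMod l) (Fin k)).span_eq ▸ Submodule.mem_top)
  have hclock (j : Fin k) : LinearMap.inl (ZMod l) _ _ (Pi.single j 1) ∈ N := by
    convert N.sub_mem (hgen (2 * j + 1) (by omega)) (hgen (2 * j) (by omega)) using 1
    rw [LinearMap.inl_apply, ← jwClock_succ_sub_jwClock, jwShift_of_div_two_eq j (by omega),
      jwShift_of_div_two_eq j (by omega)]
    simp
  have hshift (j : Fin k) : LinearMap.inr (ZMod l) _ _ (Pi.single j 1) ∈ N := by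
    convert N.sub_mem (hgen (2 * j) (by omega)) (hbasis _ hclock (jwClock (2 * j))) using 1
    rw [LinearMap.inr_apply, jwShift_of_div_two_eq j (by omega)]
    simp
  refine eq_top_iff.mpr fun p _ => ?_
  simpa using N.add_mem (hbasis _ hclock p.1) (hbasis _ hshift p.2)

end JordanWigner

section JordanWignerRep

variable {F : Type*} [Field F] {l : ℕ} [NeZero l] (ψ : AddChar (ZMod l) F) (ν : F) (k : ℕ)

-- `ν` rescales the generators with `jwClock i ⬝ᵥ jwShift i = 1`, whose `l`-th power is
-- otherwise `ψ (-1) ^ l.choose 2`.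
def jwGen (i : ℕ) : ZMod l → Matrix (Fin k → ZMod l) (Fin k → ZMod l) F :=
  fun t => (if i = 2 * k then ψ t else ν ^ (i % 2)) • clockShift ψ (jwClock i) (jwShift i)

variable {ψ ν k}

theorem jwGen_pow (hν : ν ^ l = ψ 1 ^ l.choose 2) {i : ℕ} (hi : i ≤ 2 * k) :
    jwGen ψ ν k i ^ l = 1 := by
  funext t
  have hlv (v : Fin k → ZMod l) : l • v = 0 := by funext j; simp
  rw [Pi.pow_apply, jwGen, smul_pow, clockShift_pow, hlv, hlv, clockShift_zero, smul_smul,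
    jwClock_dotProduct_jwShift, Pi.one_apply]
  by_cases hk : i = 2 * k
  · simp [hk, ← AddChar.map_nsmul_eq_pow]
  · rcases Nat.mod_two_eq_zero_or_one i with h | h
    · simp [hk, h, show ¬ (i / 2 < k ∧ 2 * (i / 2) < i) by omega]
    · rw [if_neg hk, if_pos (by omega), h, pow_one, hν, ← mul_pow, ← AddChar.map_add_eq_mul,
        add_neg_cancel, AddChar.map_zero_eq_one, one_pow, one_smul]

theorem jwGen_mul_jwGen {i i' : ℕ} (hii' : i < i') (hi' : i' ≤ 2 * k) :
    jwGen ψ ν k i' * jwGen ψ ν k i = ψ 1 • (jwGen ψ ν k i * jwGen ψ ν k i') := by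
  funext t
  simp only [jwGen, Pi.mul_apply, Pi.smul_apply, smul_mul_smul_comm, clockShift_mul_comm ψ
    (jwClock i) (jwShift i), jwClock_dotProduct_jwShift]
  rw [if_pos (show i / 2 < k ∧ 2 * (i / 2) < i' by omega),
    if_neg (show ¬(i' / 2 < k ∧ 2 * (i' / 2) < i) by omega), sub_zero, smul_comm, mul_comm]

variable {ξ : F}

def jwRep (hψξ : ψ 1 = ξ) (hν : ν ^ l = ξ ^ l.choose 2) :
    Clg F l ξ (Fin (2 * k + 1)) →ₐ[F] ZMod l → Matrix (Fin k → ZMod l) (Fin k → ZMod l) F :=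
  Clg.lift (fun i => jwGen ψ ν k i) (fun i => jwGen_pow (hψξ ▸ hν) (by omega))
    (fun _ _ hij => hψξ ▸ jwGen_mul_jwGen hij (by omega))

theorem jwRep_surjective (hψ : ψ.IsPrimitive) (hl : (l : F) ≠ 0) (hψξ : ψ 1 = ξ)
    (hν : ν ^ l = ξ ^ l.choose 2) : Function.Surjective (jwRep (k := k) hψξ hν) := by
  set Ψ := jwRep (k := k) hψξ hν
  have hΨ (i : Fin (2 * k + 1)) : Ψ (Clg.ι F l ξ i) = jwGen ψ ν k i := Clg.lift_ι _ _ _ i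
  have hν0 : ν ≠ 0 := by
    rintro rfl
    rw [zero_pow (NeZero.ne l), ← hψξ] at hν
    exact (pow_ne_zero _ (ψ.val_isUnit 1).ne_zero) hν.symm
  set R := Ψ.range.comap (Pi.constAlgHom F (ZMod l) (Matrix (Fin k → ZMod l) (Fin k → ZMod l) F))
  have hR : R = ⊤ := by
    refine Subalgebra.eq_top_of_clockShift_mem hψ hl span_jwClock_jwShift_eq_top ?_
    rintro _ ⟨i, rfl⟩
    have : Function.const (ZMod l) (clockShift ψ (jwClock i) (jwShift i)) =
        (ν ^ ((i : ℕ) % 2))⁻¹ • Ψ (Clg.ι F l ξ (Fin.castLE (by omega) i)) := by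
      funext t
      simp [hΨ, jwGen, show (i : ℕ) ≠ 2 * k by omega, hν0]
    change Function.const (ZMod l) (clockShift ψ (jwClock i) (jwShift i)) ∈ Ψ.range
    rw [this]
    exact Ψ.range.smul_mem ⟨_, rfl⟩ _
  have hconst (M : Matrix (Fin k → ZMod l) (Fin k → ZMod l) F) :
      Function.const (ZMod l) M ∈ Ψ.range :=
    (hR ▸ Algebra.mem_top : M ∈ R)
  -- the image of the last generator separates the `l` blocks
  have hlast : (fun t => algebraMap F _ (ψ t)) = Ψ (Clg.ι F l ξ (Fin.last _)) *
      Function.const (ZMod l) (clockShift ψ (-jwClock (2 * k)) 0) := by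
    funext t
    simp [hΨ, jwGen, jwShift_eq_zero (show k ≤ 2 * k / 2 by omega), clockShift_mul,
      clockShift_zero, Algebra.algebraMap_eq_smul_one]
  rw [← AlgHom.range_eq_top]
  exact Subalgebra.pi_eq_top_of_const_mem hconst hψ.zmod_injective
    (hlast ▸ Ψ.range.mul_mem ⟨_, rfl⟩ (hconst _))

end JordanWignerRep

theorem Clg.nonempty_algEquiv_pi_matrix {F : Type*} [Field F] {l : ℕ} [NeZero l]
    (hl : (l : F) ≠ 0) {ξ ν : F} (hξ : IsPrimitiveRoot ξ l) (hν : ν ^ l = ξ ^ l.choose 2) (k : ℕ) :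
    Nonempty (Clg F l ξ (Fin (2 * k + 1)) ≃ₐ[F]
      (ZMod l → Matrix (Fin k → ZMod l) (Fin k → ZMod l) F)) := by
  have hψξ : AddChar.zmodChar l hξ.pow_eq_one 1 = ξ := by
    simpa using AddChar.zmodChar_apply' hξ.pow_eq_one 1
  have hsurj := jwRep_surjective (k := k) (AddChar.zmodChar_primitive_of_primitive_root l hξ) hl
    hψξ hν
  have hdim : Module.finrank F (Clg F l ξ (Fin (2 * k + 1))) =
      Module.finrank F (ZMod l → Matrix (Fin k → ZMod l) (Fin k → ZMod l) F) := by
    refine le_antisymm (Clg.finrank_le.trans_eq ?_)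
      (LinearMap.finrank_le_finrank_of_surjective (f := (jwRep hψξ hν).toLinearMap) hsurj)
    simp [Module.finrank_pi_fintype, Module.finrank_matrix, ZMod.card]
    ring
  exact ⟨AlgEquiv.ofBijective _
    ⟨(LinearMap.injective_iff_surjective_of_finrank_eq_finrank hdim
      (f := (jwRep hψξ hν).toLinearMap)).mpr hsurj, hsurj⟩⟩

theorem stmt_11_general (F : Type*) [Field F] [IsAlgClosed F] (l : ℕ)
    (hchar : (l : F) ≠ 0) (ξ : F) (hξ : IsPrimitiveRoot ξ l)
    (m : ℕ) (hmodd : Odd m) :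
    Nonempty (Clg F l ξ (Fin m) ≃ₐ[F]
      (Fin l → Matrix (Fin (l ^ ((m - 1) / 2))) (Fin (l ^ ((m - 1) / 2))) F)) := by
  have : NeZero l := ⟨by rintro rfl; simp at hchar⟩
  obtain ⟨k, rfl⟩ := hmodd
  obtain ⟨ν, hν⟩ := IsAlgClosed.exists_pow_nat_eq (ξ ^ l.choose 2) (NeZero.pos l)
  obtain ⟨e⟩ := Clg.nonempty_algEquiv_pi_matrix hchar hξ hν k
  have hk : (2 * k + 1 - 1) / 2 = k := by omega
  rw [hk]
  let eV : (Fin k → ZMod l) ≃ Fin (l ^ k) := Fintype.equivFinOfCardEq (by simp [ZMod.card])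
  exact ⟨(e.trans (AlgEquiv.piCongrRight fun _ => Matrix.reindexAlgEquiv F F eV)).trans
    (AlgEquiv.piCongrLeft' F _ (ZMod.finEquiv l).toEquiv.symm)⟩

theorem stmt_11 (F : Type*) [Field F] [IsAlgClosed F] (l : ℕ) (hl : 1 < l)
    (hchar : (l : F) ≠ 0) (ξ : F) (hξ : IsPrimitiveRoot ξ l)
    (m : ℕ) (hm : 0 < m) (hmodd : Odd m) :
    Nonempty (Clg F l ξ (Fin m) ≃ₐ[F]
      (Fin l → Matrix (Fin (l ^ ((m - 1) / 2))) (Fin (l ^ ((m - 1) / 2))) F)) :=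
  stmt_11_general F l hchar ξ hξ m hmodd
end

section
/- Let V be a complex vector space with quadratic form f, Cl(V,f) its Clifford algebra with canonical map ι, and v ∈ V with f(v) = 1. Let v^⊥ = { u ∈ V : f(v+u) − f(v) − f(u) = 0 } and let E denote the even part Cl(v^⊥,f)_0̄, i.e. the ℂ-linear span of 1 together with all products ι(u₁)⋯ι(u_{2k}) of evenly many elements u_j ∈ v^⊥. Then the centralizer C(ι(v)) = { a ∈ Cl(V,f) : ι(v)·a = a·ι(v) } equals E + ι(v)·E (as a ℂ-subspace of Cl(V,f)). -/
/-!
Conjugation `σ a = x a x` by `x = ι v` (an involution, as `x² = f v = 1`) is an algebra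
automorphism whose fixed points are exactly the centralizer of `x`. It fixes `x` and negates
`ι u` for `u ∈ v^⊥`, so it acts on a product of `n` such vectors by `(-1)ⁿ`; hence `b + σ b`
lies in the even part `E` for every `b` in the subalgebra `A` generated by `ι(v^⊥)`.
Since `V = ℂ v ⊕ v^⊥` (split off `(f(v,w)/2) v`), left multiplication by `ι w` preserves
`A + x A`, which is therefore all of `Cl(V,f)`. If `a = a₁ + x a₂` commutes with `x`, then
`2 a = a + σ a = (a₁ + σ a₁) + x (a₂ + σ a₂) ∈ E + x E`.
-/

/-- The even part `Cl(U,f)ō` of the Clifford subalgebra generated by a subset `U ⊆ V`: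
the `ℂ`-linear span of `1` together with all products of evenly many elements `ι(u)`,
`u ∈ U`. -/
def evenCliffordPart {V : Type*} [AddCommGroup V] [Module ℂ V] (f : QuadraticForm ℂ V)
    (U : Set V) : Submodule ℂ (CliffordAlgebra f) :=
  Submodule.span ℂ {x | ∃ (k : ℕ) (u : Fin (2 * k) → V), (∀ j, u j ∈ U) ∧
    x = ((List.finRange (2 * k)).map fun j => CliffordAlgebra.ι f (u j)).prod}

section Involution

variable (R : Type*) {A : Type*} [CommSemiring R] [Semiring A] [Algebra R A]

def conjByInvolution (x : A) (hx : x * x = 1) : A →ₐ[R] A :=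
  AlgHom.ofLinearMap (LinearMap.mulRight R x ∘ₗ LinearMap.mulLeft R x) (by simp [hx])
    fun a b => by
      simp only [LinearMap.comp_apply, LinearMap.mulLeft_apply, LinearMap.mulRight_apply]
      rw [show x * a * x * (x * b * x) = x * a * (x * x) * b * x by simp only [mul_assoc], hx,
        mul_one, mul_assoc x a b]

variable {R} {x : A} (hx : x * x = 1)

theorem conjByInvolution_apply (a : A) : conjByInvolution R x hx a = x * a * x := rfl

theorem conjByInvolution_self : conjByInvolution R x hx x = x := by
  rw [conjByInvolution_apply, hx, one_mul]

theorem conjByInvolution_eq_self_iff {a : A} : conjByInvolution R x hx a = a ↔ x * a = a * x := by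
  rw [conjByInvolution_apply]
  constructor
  · intro h
    calc x * a = x * a * x * x := by rw [mul_assoc _ x x, hx, mul_one]
      _ = a * x := by rw [h]
  · intro h
    rw [h, mul_assoc, hx, mul_one]

end Involution

namespace CliffordAlgebra

open QuadraticMap

section CommRing

variable {R M : Type*} [CommRing R] [AddCommGroup M] [Module R M] {Q : QuadraticForm R M}
  {v : M}

theorem ι_mul_self_of_eq_one (hv : Q v = 1) : ι Q v * ι Q v = 1 := by
  rw [ι_sq_scalar, hv, map_one]

variable (Q v) in
def orthogonalSubalgebra : Subalgebra R (CliffordAlgebra Q) :=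
  Algebra.adjoin R (ι Q '' {u | polar Q v u = 0})

theorem conjByInvolution_ι_of_polar_eq_zero (hv : Q v = 1) {u : M} (hu : polar Q v u = 0) :
    conjByInvolution R (ι Q v) (ι_mul_self_of_eq_one hv) (ι Q u) = -ι Q u := by
  rw [conjByInvolution_apply, ι_mul_ι_comm_of_isOrtho (isOrtho_polarBilin.mp hu), neg_mul,
    mul_assoc, ι_mul_self_of_eq_one hv, mul_one]

theorem conjByInvolution_list_prod (hv : Q v = 1) {l : List (CliffordAlgebra Q)}
    (hl : ∀ y ∈ l, y ∈ ι Q '' {u | polar Q v u = 0}) :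
    conjByInvolution R (ι Q v) (ι_mul_self_of_eq_one hv) l.prod = (-1) ^ l.length * l.prod := by
  rw [map_list_prod, List.map_congr_left (g := Neg.neg) fun y hy => ?_, List.prod_map_neg]
  obtain ⟨u, hu, rfl⟩ := hl y hy
  exact conjByInvolution_ι_of_polar_eq_zero hv hu

theorem polar_sub_smul_eq_zero [Invertible (2 : R)] (hv : Q v = 1) (w : M) :
    polar Q v (w - (⅟2 * polar Q v w) • v) = 0 := by
  rw [polar_sub_right, polar_smul_right, polar_self, hv, smul_eq_mul, nsmul_eq_mul,
    Nat.cast_ofNat, mul_one, mul_right_comm, invOf_mul_self, one_mul, sub_self]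

theorem orthogonalSubalgebra_sup_map_mulLeft_eq_top [Invertible (2 : R)] (hv : Q v = 1) :
    Subalgebra.toSubmodule (orthogonalSubalgebra Q v) ⊔
      (Subalgebra.toSubmodule (orthogonalSubalgebra Q v)).map (LinearMap.mulLeft R (ι Q v)) =
      ⊤ := by
  set A := Subalgebra.toSubmodule (orthogonalSubalgebra Q v)
  set x := ι Q v
  have x_mul_mem {a : CliffordAlgebra Q} (ha : a ∈ A ⊔ A.map (LinearMap.mulLeft R x)) :
      x * a ∈ A ⊔ A.map (LinearMap.mulLeft R x) := by
    obtain ⟨a₁, h₁, _, ⟨a₂, h₂, rfl⟩, rfl⟩ := Submodule.mem_sup.1 ha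
    rw [LinearMap.mulLeft_apply, mul_add, ← mul_assoc, ι_mul_self_of_eq_one hv, one_mul,
      add_comm]
    exact Submodule.add_mem_sup h₂ (Submodule.mem_map_of_mem h₁)
  have ι_mul_mem {u : M} (hu : polar Q v u = 0) {a : CliffordAlgebra Q}
      (ha : a ∈ A ⊔ A.map (LinearMap.mulLeft R x)) :
      ι Q u * a ∈ A ⊔ A.map (LinearMap.mulLeft R x) := by
    have hu' : ι Q u ∈ orthogonalSubalgebra Q v := Algebra.subset_adjoin ⟨u, hu, rfl⟩
    obtain ⟨a₁, h₁, _, ⟨a₂, h₂, rfl⟩, rfl⟩ := Submodule.mem_sup.1 ha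
    rw [LinearMap.mulLeft_apply, mul_add, ← mul_assoc,
      ι_mul_ι_comm_of_isOrtho (isOrtho_polarBilin.mp hu).symm, neg_mul, mul_assoc, ← mul_neg]
    exact Submodule.add_mem_sup (Subalgebra.mul_mem _ hu' h₁)
      (Submodule.mem_map_of_mem (neg_mem (Subalgebra.mul_mem _ hu' h₂)))
  refine Submodule.eq_top_iff'.2 fun a => ?_
  induction a using left_induction with
  | algebraMap r => exact Submodule.mem_sup_left (Subalgebra.algebraMap_mem _ r)
  | add a b ha hb => exact add_mem ha hb
  | ι_mul a w ha =>
    rw [← sub_add_cancel w ((⅟2 * polar Q v w) • v), map_add, add_mul, map_smul,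
      smul_mul_assoc]
    exact add_mem (ι_mul_mem (polar_sub_smul_eq_zero hv w) ha)
      (Submodule.smul_mem _ _ (x_mul_mem ha))

end CommRing

section Complex

variable {V : Type*} [AddCommGroup V] [Module ℂ V] {f : QuadraticForm ℂ V} {v : V}

theorem list_prod_mem_evenCliffordPart {U : Set V} {l : List (CliffordAlgebra f)}
    (hl : ∀ y ∈ l, y ∈ ι f '' U) (he : Even l.length) : l.prod ∈ evenCliffordPart f U := by
  obtain ⟨k, hk⟩ := he
  have hlen : 2 * k = l.length := by omega
  choose u hu hul using fun j : Fin (2 * k) => hl _ (l.get_mem (j.cast hlen))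
  refine Submodule.subset_span ⟨k, u, hu, ?_⟩
  congr 1
  refine List.ext_get (by simp [hlen]) fun _ _ _ => ?_
  simp [hul]

theorem evenCliffordPart_le_centralizer (hv : f v = 1) :
    evenCliffordPart f {u | polar f v u = 0} ≤
      Subalgebra.toSubmodule (Subalgebra.centralizer ℂ {ι f v}) := by
  refine Submodule.span_le.2 ?_
  rintro _ ⟨k, u, hu, rfl⟩
  simp only [SetLike.mem_coe, Subalgebra.mem_toSubmodule, Subalgebra.mem_centralizer_iff,
    Set.mem_singleton_iff, forall_eq]
  rw [← conjByInvolution_eq_self_iff (ι_mul_self_of_eq_one hv) (R := ℂ),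
    conjByInvolution_list_prod hv (by simpa using fun j => ⟨u j, hu j, rfl⟩)]
  simp

theorem add_conjByInvolution_mem_evenCliffordPart (hv : f v = 1) {b : CliffordAlgebra f}
    (hb : b ∈ orthogonalSubalgebra f v) :
    b + conjByInvolution ℂ (ι f v) (ι_mul_self_of_eq_one hv) b ∈
      evenCliffordPart f {u | polar f v u = 0} := by
  rw [← Subalgebra.mem_toSubmodule, orthogonalSubalgebra, Algebra.adjoin_eq_span] at hb
  induction hb using Submodule.span_induction with
  | mem b hb =>
    obtain ⟨l, hl, rfl⟩ := Submonoid.exists_list_of_mem_closure hb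
    rw [conjByInvolution_list_prod hv hl]
    rcases Nat.even_or_odd l.length with he | ho
    · rw [he.neg_one_pow, one_mul, ← two_smul ℂ]
      exact Submodule.smul_mem _ _ (list_prod_mem_evenCliffordPart hl he)
    · rw [ho.neg_one_pow, neg_one_mul, add_neg_cancel]
      exact zero_mem _
  | zero => simp
  | add b c _ _ hb hc =>
    rw [map_add, add_add_add_comm]
    exact add_mem hb hc
  | smul r b _ hb =>
    rw [map_smul, ← smul_add]
    exact Submodule.smul_mem _ r hb

theorem centralizer_ι_le (hv : f v = 1) :
    Subalgebra.toSubmodule (Subalgebra.centralizer ℂ {ι f v}) ≤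
      evenCliffordPart f {u | polar f v u = 0} ⊔
        (evenCliffordPart f {u | polar f v u = 0}).map (LinearMap.mulLeft ℂ (ι f v)) := by
  set x := ι f v
  set σ := conjByInvolution ℂ x (ι_mul_self_of_eq_one hv)
  intro a ha
  have ha' : a ∈ Subalgebra.toSubmodule (orthogonalSubalgebra f v) ⊔
      (Subalgebra.toSubmodule (orthogonalSubalgebra f v)).map (LinearMap.mulLeft ℂ x) := by
    rw [orthogonalSubalgebra_sup_map_mulLeft_eq_top hv]
    exact Submodule.mem_top
  obtain ⟨a₁, h₁, _, ⟨a₂, h₂, rfl⟩, rfl⟩ := Submodule.mem_sup.1 ha'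
  rw [LinearMap.mulLeft_apply] at ha ⊢
  have hσa : σ (a₁ + x * a₂) = a₁ + x * a₂ := (conjByInvolution_eq_self_iff _).2 <| by
    simpa [Subalgebra.mem_centralizer_iff] using ha
  have two_smul_eq : (2 : ℂ) • (a₁ + x * a₂) = (a₁ + σ a₁) + x * (a₂ + σ a₂) := by
    rw [two_smul]
    nth_rw 2 [← hσa]
    rw [map_add, map_mul, conjByInvolution_self, mul_add]
    abel
  have h2 : (2 : ℂ) • (a₁ + x * a₂) ∈ evenCliffordPart f {u | polar f v u = 0} ⊔
      (evenCliffordPart f {u | polar f v u = 0}).map (LinearMap.mulLeft ℂ x) := by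
    rw [two_smul_eq]
    exact Submodule.add_mem_sup (add_conjByInvolution_mem_evenCliffordPart hv h₁)
      (Submodule.mem_map_of_mem (add_conjByInvolution_mem_evenCliffordPart hv h₂))
  simpa using Submodule.smul_mem _ (2 : ℂ)⁻¹ h2

theorem centralizer_ι_eq (hv : f v = 1) :
    Subalgebra.toSubmodule (Subalgebra.centralizer ℂ {ι f v}) =
      evenCliffordPart f {u | polar f v u = 0} ⊔
        (evenCliffordPart f {u | polar f v u = 0}).map (LinearMap.mulLeft ℂ (ι f v)) := by
  have hx : ι f v ∈ Subalgebra.centralizer ℂ {ι f v} := by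
    simp [Subalgebra.mem_centralizer_iff]
  refine le_antisymm (centralizer_ι_le hv) (sup_le (evenCliffordPart_le_centralizer hv) ?_)
  rintro _ ⟨e, he, rfl⟩
  exact Subalgebra.mul_mem _ hx (evenCliffordPart_le_centralizer hv he)

end Complex

end CliffordAlgebra

theorem stmt_15 (V : Type*) [AddCommGroup V] [Module ℂ V] (f : QuadraticForm ℂ V)
    (v : V) (hv : f v = 1) :
    Subalgebra.toSubmodule
        (Subalgebra.centralizer ℂ ({CliffordAlgebra.ι f v} : Set (CliffordAlgebra f))) =
      evenCliffordPart f {u : V | f (v + u) - f v - f u = 0} ⊔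
        Submodule.map (LinearMap.mulLeft ℂ (CliffordAlgebra.ι f v))
          (evenCliffordPart f {u : V | f (v + u) - f v - f u = 0}) :=
  CliffordAlgebra.centralizer_ι_eq hv
end

section
/- Let V = { a = (a₁, a₂, …) : a_i ∈ ℂ, ∑_{i=1}^∞ |a_i|² < ∞ } be the complex vector space of square-summable sequences, with the quadratic form f(a) = ∑_{i=1}^∞ a_i² (the series converges absolutely for a ∈ V), and let Cl(V,f) be its Clifford algebra with canonical map ι. Let n be an odd positive integer and let v₁, …, v_n ∈ V be the standard unit vectors (v_i has 1 in the i-th coordinate and 0 elsewhere). Let U = v₁^⊥ ∩ … ∩ v_n^⊥ = { u ∈ V : u₁ = … = u_n = 0 } and let E = Cl(U,f)_0̄ be the ℂ-linear span of 1 together with all products of evenly many elements of ι(U). Then C(ι(v₁)) ∩ C(ι(v₂)) ∩ … ∩ C(ι(v_n)) = E + ι(v₁)ι(v₂)⋯ι(v_n)·E, where C(x) denotes the centralizer of x in Cl(V,f). -/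
section Conjugation

variable (R : Type*) {A : Type*} [CommRing R] [Ring A] [Algebra R A]

lemma mul_mul_mul_of_mul_self_eq_one {e : A} (he : e * e = 1) (x y : A) :
    e * (x * y) * e = (e * x * e) * (e * y * e) := by
  simp only [mul_assoc, ← mul_assoc e e, he, one_mul]

lemma mul_list_prod_map_mul_of_mul_self_eq_one {ι : Type*} {e : A} (he : e * e = 1) {f : ι → A}
    {k : ι → ℕ} (l : List ι) (h : ∀ a ∈ l, e * f a * e = (-1 : R) ^ k a • f a) :
    e * (l.map f).prod * e = (-1 : R) ^ (l.map k).sum • (l.map f).prod := by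
  induction l with
  | nil => simp [he]
  | cons a t ih =>
    simp only [List.map_cons, List.prod_cons, List.sum_cons]
    rw [mul_mul_mul_of_mul_self_eq_one he, h a List.mem_cons_self,
      ih fun b hb => h b (List.mem_cons_of_mem a hb), smul_mul_smul_comm, pow_add]

lemma mul_eq_mul_mul_mul_of_mul_self_eq_one {e : A} (he : e * e = 1) (x : A) :
    x * e = e * (e * x * e) := by
  rw [← mul_assoc, ← mul_assoc, he, one_mul]

variable {R}

lemma commute_iff_mul_mul_eq_of_mul_self_eq_one {e : A} (he : e * e = 1) {x : A} :
    Commute e x ↔ e * x * e = x := by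
  refine ⟨fun h => by rw [h.eq, mul_assoc, he, mul_one], fun h => ?_⟩
  calc e * x = e * (e * x * e) := by rw [h]
    _ = x * e := by rw [← mul_assoc, ← mul_assoc, he, one_mul]

lemma list_prod_map_perm_of_anticomm {ι : Type*} {f : ι → A}
    (hf : Pairwise fun i j => f i * f j = -(f j * f i)) {w w' : List ι} (hw : w.Nodup)
    (h : w.Perm w') : ∃ k : ℕ, (w.map f).prod = (-1 : R) ^ k • (w'.map f).prod := by
  induction h with
  | nil => exact ⟨0, by simp⟩
  | cons a _ ih =>
    obtain ⟨k, hk⟩ := ih (List.nodup_cons.1 hw).2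
    exact ⟨k, by simp [hk]⟩
  | swap a b t =>
    have hba : b ≠ a := fun hab => by simp [hab] at hw
    exact ⟨1, by simp [← mul_assoc, hf hba]⟩
  | trans h₁ _ ih₁ ih₂ =>
    obtain ⟨k₁, hk₁⟩ := ih₁ hw
    obtain ⟨k₂, hk₂⟩ := ih₂ (h₁.nodup_iff.1 hw)
    exact ⟨k₁ + k₂, by rw [hk₁, hk₂, smul_smul, pow_add]⟩

variable (R) in
def conjAverage [Invertible (2 : R)] (e : A) : Module.End R A :=
  (⅟2 : R) • (1 + LinearMap.mulLeftRight R (e, e))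

lemma conjAverage_apply_of_mul_mul_eq [Invertible (2 : R)] {e x : A} {k : ℕ}
    (h : e * x * e = (-1 : R) ^ k • x) :
    conjAverage R e x = (if Even k then 1 else 0 : R) • x := by
  simp only [conjAverage, LinearMap.smul_apply, LinearMap.add_apply, Module.End.one_apply,
    LinearMap.mulLeftRight_apply, h]
  rcases Nat.even_or_odd k with hk | hk
  · rw [hk.neg_one_pow, if_pos hk, one_smul, ← two_smul R x, smul_smul, invOf_mul_self, one_smul]
  · rw [hk.neg_one_pow, if_neg (Nat.not_even_iff_odd.2 hk), neg_one_smul, add_neg_cancel,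
      smul_zero, zero_smul]

lemma mul_mem_span_of_forall_mem {S : Set A} {a : A} (h : ∀ s ∈ S, s * a ∈ Submodule.span R S)
    {x : A} (hx : x ∈ Submodule.span R S) : x * a ∈ Submodule.span R S :=
  Submodule.span_le (p := (Submodule.span R S).comap (LinearMap.mulRight R a)) |>.2 h hx

end Conjugation

lemma List.sum_map_ite_eq_length_add_count {α : Type*} [DecidableEq α] (i : α) (w : List α) :
    (w.map fun j => if j = i then 2 else 1).sum = w.length + w.count i := by
  induction w with
  | nil => rfl
  | cons a t ih => by_cases h : a = i <;> simp [h, ih] <;> omega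

lemma Module.End.list_prod_map_apply_of_eq_smul {R N ι : Type*} [CommRing R] [AddCommGroup N]
    [Module R N] (f : ι → Module.End R N) (c : ι → R) {x : N} (l : List ι)
    (h : ∀ i ∈ l, f i x = c i • x) : (l.map f).prod x = (l.map c).prod • x := by
  induction l with
  | nil => simp
  | cons a t ih =>
    simp only [List.map_cons, List.prod_cons, Module.End.mul_apply]
    rw [ih fun i hi => h i (List.mem_cons_of_mem a hi), map_smul, h a List.mem_cons_self,
      smul_smul, mul_comm]

open QuadraticMap

namespace CliffordAlgebra

variable {R M : Type*} [CommRing R] [AddCommGroup M] [Module R M] {Q : QuadraticForm R M}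
  {n : ℕ} {v : Fin n → M}

lemma exists_eq_sum_smul_add_of_orthonormal [Invertible (2 : R)] (hv : ∀ i, Q (v i) = 1)
    (hvv : Pairwise fun i j => polar Q (v i) (v j) = 0) (y : M) :
    ∃ u, (∀ i, polar Q (v i) u = 0) ∧ y = ∑ i, (⅟2 * polar Q (v i) y) • v i + u := by
  refine ⟨y - ∑ i, (⅟2 * polar Q (v i) y) • v i, fun j => ?_, by abel⟩
  have hjj : polar Q (v j) (v j) = 2 := by rw [polar_self, hv, nsmul_eq_mul, mul_one]; norm_num
  rw [← polarBilin_apply_apply, map_sub, map_sum, Finset.sum_eq_single j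
    (fun i _ hij => by rw [map_smul, polarBilin_apply_apply, hvv hij.symm, smul_zero])
    (by simp), map_smul]
  simp only [polarBilin_apply_apply, hjj, smul_eq_mul]
  rw [mul_right_comm, invOf_mul_self, one_mul, sub_self]

variable (Q) in
def evenProductSpan (U : Set M) : Submodule R (CliffordAlgebra Q) :=
  Submodule.span R {x | ∃ m : List M, (∀ u ∈ m, u ∈ U) ∧ Even m.length ∧ (m.map (ι Q)).prod = x}

lemma ι_mul_ι_eq_neg_of_polar_eq_zero {a b : M} (h : polar Q a b = 0) :
    ι Q a * ι Q b = -(ι Q b * ι Q a) :=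
  ι_mul_ι_comm_of_isOrtho (isOrtho_polarBilin.mp h)

lemma ι_mul_self_eq_one {a : M} (h : Q a = 1) : ι Q a * ι Q a = 1 := by
  rw [ι_sq_scalar, h, map_one]

lemma ι_mul_ι_mul_ι_of_polar_eq_zero {a b : M} (ha : Q a = 1) (h : polar Q a b = 0) :
    ι Q a * ι Q b * ι Q a = -ι Q b := by
  rw [ι_mul_ι_eq_neg_of_polar_eq_zero h, neg_mul, mul_assoc, ι_mul_self_eq_one ha, mul_one]

lemma ι_mul_list_prod_mul_ι {a : M} (ha : Q a = 1) {m : List M} (hm : ∀ u ∈ m, polar Q a u = 0) :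
    ι Q a * (m.map (ι Q)).prod * ι Q a = (-1 : R) ^ m.length • (m.map (ι Q)).prod := by
  simpa using mul_list_prod_map_mul_of_mul_self_eq_one R (ι_mul_self_eq_one ha) (k := fun _ => 1) m
    fun u hu => by simpa using ι_mul_ι_mul_ι_of_polar_eq_zero ha (hm u hu)

/-- `w.length + w.count i` has the parity of the number of letters of `w` other than `i`, each of
which anticommutes with `ι Q (v i)`. -/
lemma ι_mul_prod_mul_ι (hv : ∀ i, Q (v i) = 1) (hvv : Pairwise fun i j => polar Q (v i) (v j) = 0)
    (i : Fin n) (w : List (Fin n)) :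
    ι Q (v i) * (w.map fun j => ι Q (v j)).prod * ι Q (v i) =
      (-1 : R) ^ (w.length + w.count i) • (w.map fun j => ι Q (v j)).prod := by
  rw [mul_list_prod_map_mul_of_mul_self_eq_one R (ι_mul_self_eq_one (hv i))
    (k := fun j => if j = i then 2 else 1) w, List.sum_map_ite_eq_length_add_count]
  intro j _
  by_cases hji : j = i
  · subst hji
    simp [ι_mul_self_eq_one (hv j)]
  · simpa [hji] using ι_mul_ι_mul_ι_of_polar_eq_zero (hv i) (hvv (Ne.symm hji))

variable (Q v) in
def normalWords : Set (CliffordAlgebra Q) :=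
  {x | ∃ w : List (Fin n), w.Nodup ∧ ∃ m : List M, (∀ u ∈ m, ∀ i, polar Q (v i) u = 0) ∧
    x = (w.map fun j => ι Q (v j)).prod * (m.map (ι Q)).prod}

lemma exists_prod_mul_ι_eq_smul_prod (hv : ∀ i, Q (v i) = 1)
    (hvv : Pairwise fun i j => polar Q (v i) (v j) = 0) {w : List (Fin n)} (hw : w.Nodup)
    (i : Fin n) : ∃ w' : List (Fin n), w'.Nodup ∧ ∃ k : ℕ,
      (w.map fun j => ι Q (v j)).prod * ι Q (v i) =
        (-1 : R) ^ k • (w'.map fun j => ι Q (v j)).prod := by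
  by_cases hi : i ∈ w
  · obtain ⟨w₁, w₂, rfl⟩ := List.append_of_mem hi
    have hi₂ : i ∉ w₂ := (List.nodup_cons.1 (List.nodup_append.1 hw).2.1).1
    refine ⟨w₁ ++ w₂, hw.sublist ((List.sublist_cons_self i w₂).append_left w₁), w₂.length, ?_⟩
    have h := ι_mul_prod_mul_ι hv hvv i w₂
    rw [List.count_eq_zero_of_not_mem hi₂, add_zero] at h
    simp only [List.map_append, List.map_cons, List.prod_append, List.prod_cons]
    rw [← mul_smul_comm, ← h]
    simp only [mul_assoc]
  · exact ⟨w.concat i, hw.concat hi, 0, by simp⟩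

lemma normalWords_mul_ι_mem {x : CliffordAlgebra Q} (hx : x ∈ normalWords Q v) {u : M}
    (hu : ∀ i, polar Q (v i) u = 0) :
    x * ι Q u ∈ normalWords Q v := by
  obtain ⟨w, hw, m, hm, rfl⟩ := hx
  refine ⟨w, hw, m ++ [u], ?_, by simp [mul_assoc]⟩
  intro a ha
  rcases List.mem_append.1 ha with ha | ha
  · exact hm a ha
  · exact List.mem_singleton.1 ha ▸ hu

lemma normalWords_mul_ι_mem_span (hv : ∀ i, Q (v i) = 1)
    (hvv : Pairwise fun i j => polar Q (v i) (v j) = 0) {x : CliffordAlgebra Q}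
    (hx : x ∈ normalWords Q v) (i : Fin n) :
    x * ι Q (v i) ∈ Submodule.span R (normalWords Q v) := by
  obtain ⟨w, hw, m, hm, rfl⟩ := hx
  obtain ⟨w', hw', k, hk⟩ := exists_prod_mul_ι_eq_smul_prod hv hvv hw i
  have hm' : ∀ u ∈ m, polar Q (v i) u = 0 := fun u hu => hm u hu i
  rw [mul_assoc, mul_eq_mul_mul_mul_of_mul_self_eq_one (ι_mul_self_eq_one (hv i)),
    ι_mul_list_prod_mul_ι (hv i) hm', mul_smul_comm, mul_smul_comm, ← mul_assoc, hk,
    smul_mul_assoc]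
  exact Submodule.smul_mem _ _
    (Submodule.smul_mem _ _ (Submodule.subset_span ⟨w', hw', m, hm, rfl⟩))

theorem span_normalWords_eq_top [Invertible (2 : R)] (hv : ∀ i, Q (v i) = 1)
    (hvv : Pairwise fun i j => polar Q (v i) (v j) = 0) :
    Submodule.span R (normalWords Q v) = ⊤ := by
  refine Submodule.eq_top_iff'.2 fun x => ?_
  induction x using CliffordAlgebra.right_induction with
  | algebraMap r =>
    rw [Algebra.algebraMap_eq_smul_one]
    exact Submodule.smul_mem _ _ (Submodule.subset_span ⟨[], List.nodup_nil, [], by simp, by simp⟩)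
  | add x y hx hy => exact add_mem hx hy
  | mul_ι y x hx =>
    obtain ⟨u, hu, hy⟩ := exists_eq_sum_smul_add_of_orthonormal hv hvv y
    rw [hy, map_add, map_sum, mul_add, Finset.mul_sum]
    refine add_mem (Submodule.sum_mem _ fun i _ => ?_) (mul_mem_span_of_forall_mem
      (fun s hs => Submodule.subset_span (normalWords_mul_ι_mem hs hu)) hx)
    rw [map_smul, mul_smul_comm]
    exact Submodule.smul_mem _ _
      (mul_mem_span_of_forall_mem (fun s hs => normalWords_mul_ι_mem_span hv hvv hs i) hx)

lemma ι_mul_normalWord_mul_ι (hv : ∀ i, Q (v i) = 1)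
    (hvv : Pairwise fun i j => polar Q (v i) (v j) = 0) {m : List M}
    (hm : ∀ u ∈ m, ∀ i, polar Q (v i) u = 0) (i : Fin n) (w : List (Fin n)) :
    ι Q (v i) * ((w.map fun j => ι Q (v j)).prod * (m.map (ι Q)).prod) * ι Q (v i) =
      (-1 : R) ^ (w.length + w.count i + m.length) •
        ((w.map fun j => ι Q (v j)).prod * (m.map (ι Q)).prod) := by
  rw [mul_mul_mul_of_mul_self_eq_one (ι_mul_self_eq_one (hv i)), ι_mul_prod_mul_ι hv hvv,
    ι_mul_list_prod_mul_ι (hv i) fun u hu => hm u hu i, smul_mul_smul_comm, ← pow_add]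

lemma mem_centralizer_ι_iff {a : M} (ha : Q a = 1) {x : CliffordAlgebra Q} :
    x ∈ Subalgebra.centralizer R {ι Q a} ↔ ι Q a * x * ι Q a = x := by
  simp only [Subalgebra.mem_centralizer_iff, Set.mem_singleton_iff, forall_eq]
  exact commute_iff_mul_mul_eq_of_mul_self_eq_one (ι_mul_self_eq_one ha)

variable (Q v) in
def centralizerProjection [Invertible (2 : R)] : Module.End R (CliffordAlgebra Q) :=
  ((List.finRange n).map fun i => conjAverage R (ι Q (v i))).prod

lemma centralizerProjection_apply_of_forall [Invertible (2 : R)] {x : CliffordAlgebra Q}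
    (h : ∀ i, ι Q (v i) * x * ι Q (v i) = x) : centralizerProjection Q v x = x := by
  have h' : ∀ i, ι Q (v i) * x * ι Q (v i) = (-1 : R) ^ 0 • x := by simpa using h
  rw [centralizerProjection, Module.End.list_prod_map_apply_of_eq_smul _ (fun _ => 1) _
    fun i _ => by simpa using conjAverage_apply_of_mul_mul_eq (h' i)]
  simp

lemma normalWord_mem_of_forall_even (hn : Odd n)
    (hvv : Pairwise fun i j => polar Q (v i) (v j) = 0) {w : List (Fin n)} (hw : w.Nodup)
    {m : List M} (hm : ∀ u ∈ m, ∀ i, polar Q (v i) u = 0)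
    (heven : ∀ i, Even (w.length + w.count i + m.length)) :
    (w.map fun j => ι Q (v j)).prod * (m.map (ι Q)).prod ∈
      evenProductSpan Q {u | ∀ i, polar Q (v i) u = 0} ⊔
        (evenProductSpan Q {u | ∀ i, polar Q (v i) u = 0}).map
          (LinearMap.mulLeft R ((List.finRange n).map fun i => ι Q (v i)).prod) := by
  rcases w with _ | ⟨a, t⟩
  · have hm_even : Even m.length := by simpa using heven ⟨0, hn.pos⟩
    exact Submodule.mem_sup_left (Submodule.subset_span ⟨m, hm, hm_even, by simp⟩)
  have hmem : ∀ j, j ∈ a :: t := by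
    intro j
    by_contra hj
    have ha := heven a
    have hj' := heven j
    rw [List.count_eq_one_of_mem hw List.mem_cons_self] at ha
    rw [List.count_eq_zero_of_not_mem hj] at hj'
    rw [Nat.even_iff] at ha hj'
    omega
  have hperm : (a :: t).Perm (List.finRange n) :=
    (List.perm_ext_iff_of_nodup hw (List.nodup_finRange n)).2 fun j => by simp [hmem j]
  obtain ⟨k, hk⟩ := list_prod_map_perm_of_anticomm (R := R)
    (fun i j hij => ι_mul_ι_eq_neg_of_polar_eq_zero (hvv hij)) hw hperm
  have hm_even : Even m.length := by
    have ha := heven a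
    rw [List.count_eq_one_of_mem hw List.mem_cons_self, hperm.length_eq, List.length_finRange]
      at ha
    rw [Nat.even_iff] at ha ⊢
    rw [Nat.odd_iff] at hn
    omega
  refine Submodule.mem_sup_right ⟨(-1 : R) ^ k • (m.map (ι Q)).prod,
    Submodule.smul_mem _ _ (Submodule.subset_span ⟨m, hm, hm_even, rfl⟩), ?_⟩
  rw [LinearMap.mulLeft_apply, hk, smul_mul_assoc, mul_smul_comm]

lemma centralizerProjection_mem [Invertible (2 : R)] (hn : Odd n) (hv : ∀ i, Q (v i) = 1)
    (hvv : Pairwise fun i j => polar Q (v i) (v j) = 0) {x : CliffordAlgebra Q}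
    (hx : x ∈ normalWords Q v) :
    centralizerProjection Q v x ∈
      evenProductSpan Q {u | ∀ i, polar Q (v i) u = 0} ⊔
        (evenProductSpan Q {u | ∀ i, polar Q (v i) u = 0}).map
          (LinearMap.mulLeft R ((List.finRange n).map fun i => ι Q (v i)).prod) := by
  obtain ⟨w, hw, m, hm, rfl⟩ := hx
  rw [centralizerProjection, Module.End.list_prod_map_apply_of_eq_smul _ _ _
    fun i _ => conjAverage_apply_of_mul_mul_eq (ι_mul_normalWord_mul_ι hv hvv hm i w)]
  by_cases heven : ∀ i, Even (w.length + w.count i + m.length)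
  · simpa [heven] using normalWord_mem_of_forall_even hn hvv hw hm heven
  · obtain ⟨i, hi⟩ := not_forall.1 heven
    have hzero : (0 : R) ∈ (List.finRange n).map fun j =>
        if Even (w.length + w.count j + m.length) then 1 else 0 :=
      List.mem_map.2 ⟨i, List.mem_finRange i, if_neg hi⟩
    rw [List.prod_eq_zero hzero, zero_smul]
    exact Submodule.zero_mem _

lemma evenProductSpan_le_centralizer (hv : ∀ i, Q (v i) = 1) (i : Fin n) :
    evenProductSpan Q {u | ∀ i, polar Q (v i) u = 0} ≤
      Subalgebra.toSubmodule (Subalgebra.centralizer R {ι Q (v i)}) := by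
  refine Submodule.span_le.2 ?_
  rintro _ ⟨m, hm, hm_even, rfl⟩
  rw [SetLike.mem_coe, Subalgebra.mem_toSubmodule, mem_centralizer_ι_iff (hv i),
    ι_mul_list_prod_mul_ι (hv i) fun u hu => hm u hu i, hm_even.neg_one_pow, one_smul]

lemma prod_finRange_mem_centralizer (hn : Odd n) (hv : ∀ i, Q (v i) = 1)
    (hvv : Pairwise fun i j => polar Q (v i) (v j) = 0) (i : Fin n) :
    ((List.finRange n).map fun j => ι Q (v j)).prod ∈ Subalgebra.centralizer R {ι Q (v i)} := by
  rw [mem_centralizer_ι_iff (hv i), ι_mul_prod_mul_ι hv hvv, List.length_finRange,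
    List.count_eq_one_of_mem (List.nodup_finRange n) (List.mem_finRange i),
    (hn.add_one).neg_one_pow, one_smul]

theorem iInf_centralizer_ι_eq [Invertible (2 : R)] (hn : Odd n) (hv : ∀ i, Q (v i) = 1)
    (hvv : Pairwise fun i j => polar Q (v i) (v j) = 0) :
    (⨅ i, Subalgebra.toSubmodule (Subalgebra.centralizer R {ι Q (v i)})) =
      evenProductSpan Q {u | ∀ i, polar Q (v i) u = 0} ⊔
        (evenProductSpan Q {u | ∀ i, polar Q (v i) u = 0}).map
          (LinearMap.mulLeft R ((List.finRange n).map fun i => ι Q (v i)).prod) := by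
  refine le_antisymm (fun x hx => ?_) (sup_le (le_iInf (evenProductSpan_le_centralizer hv)) ?_)
  · have hfix : ∀ i, ι Q (v i) * x * ι Q (v i) = x := fun i =>
      (mem_centralizer_ι_iff (hv i)).1 ((Submodule.mem_iInf _).1 hx i)
    have hspan : x ∈ Submodule.span R (normalWords Q v) := by
      rw [span_normalWords_eq_top hv hvv]
      exact Submodule.mem_top
    rw [← centralizerProjection_apply_of_forall hfix]
    exact Submodule.span_le (p := Submodule.comap (centralizerProjection Q v) _).2
      (fun y hy => Submodule.mem_comap.2 (centralizerProjection_mem hn hv hvv hy)) hspan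
  · rintro _ ⟨y, hy, rfl⟩
    exact (Submodule.mem_iInf _).2 fun i => Subalgebra.mul_mem _
      (prod_finRange_mem_centralizer hn hv hvv i) (evenProductSpan_le_centralizer hv i hy)

end CliffordAlgebra

lemma evenCliffordPart_eq_evenProductSpan {V : Type*} [AddCommGroup V] [Module ℂ V]
    (Q : QuadraticForm ℂ V) (U : Set V) :
    evenCliffordPart Q U = CliffordAlgebra.evenProductSpan Q U := by
  refine congrArg (Submodule.span ℂ) (Set.ext fun x => ⟨?_, ?_⟩)
  · rintro ⟨k, u, hu, rfl⟩
    exact ⟨(List.finRange (2 * k)).map u, by simpa using fun j => hu j, by simp,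
      by simp [Function.comp_def]⟩
  · rintro ⟨m, hm, ⟨r, hr⟩, rfl⟩
    refine ⟨r, fun j => m[j.val], fun j => hm _ (List.getElem_mem _), ?_⟩
    congr 1
    apply List.ext_getElem <;> simp [hr, two_mul]

lemma apply_lp_single_of_tsum_sq {Q : QuadraticForm ℂ (lp (fun _ : ℕ => ℂ) 2)}
    (hQ : ∀ a : lp (fun _ : ℕ => ℂ) 2, Q a = ∑' i, a i ^ 2) (k : ℕ) :
    Q (lp.single 2 k 1) = 1 := by
  rw [hQ, tsum_eq_single k fun j hj => by simp [lp.single_apply, hj]]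
  simp [lp.single_apply]

lemma polar_lp_single_of_tsum_sq {Q : QuadraticForm ℂ (lp (fun _ : ℕ => ℂ) 2)}
    (hQ : ∀ a : lp (fun _ : ℕ => ℂ) 2, Q a = ∑' i, a i ^ 2) {k l : ℕ} (hkl : k ≠ l) :
    polar Q (lp.single 2 k 1) (lp.single 2 l 1) = 0 := by
  rw [polar, apply_lp_single_of_tsum_sq hQ, apply_lp_single_of_tsum_sq hQ, hQ,
    tsum_eq_sum (s := {k, l}) fun j hj => by
      simp only [Finset.mem_insert, Finset.mem_singleton, not_or] at hj
      simp [lp.single_apply, hj.1, hj.2]]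
  simp [Finset.sum_pair hkl, lp.single_apply, hkl, hkl.symm]

theorem stmt_16_general (Q : QuadraticForm ℂ (lp (fun _ : ℕ => ℂ) 2))
    (hQ : ∀ a : lp (fun _ : ℕ => ℂ) 2, Q a = ∑' i, (a i) ^ 2)
    (n : ℕ) (hodd : Odd n)
    -- the standard unit vectors `v₁, …, v_n`
    (v : Fin n → lp (fun _ : ℕ => ℂ) 2) (hv : ∀ i, v i = lp.single 2 (i : ℕ) 1)
    -- `U = v₁^⊥ ∩ … ∩ v_n^⊥`
    (U : Set (lp (fun _ : ℕ => ℂ) 2))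
    (hU : U = {u | ∀ i : Fin n, Q (v i + u) - Q (v i) - Q u = 0}) :
    (⨅ i : Fin n, Subalgebra.toSubmodule
        (Subalgebra.centralizer ℂ
          ({CliffordAlgebra.ι Q (v i)} : Set (CliffordAlgebra Q)))) =
      evenCliffordPart Q U ⊔
        Submodule.map
          (LinearMap.mulLeft ℂ
            (((List.finRange n).map fun i : Fin n => CliffordAlgebra.ι Q (v i)).prod))
          (evenCliffordPart Q U) := by
  have hv₁ : ∀ i, Q (v i) = 1 := fun i => by rw [hv, apply_lp_single_of_tsum_sq hQ]
  have hvv : Pairwise fun i j => polar Q (v i) (v j) = 0 := fun i j hij => by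
    dsimp only
    rw [hv, hv, polar_lp_single_of_tsum_sq hQ (Fin.val_ne_of_ne hij)]
  subst hU
  rw [evenCliffordPart_eq_evenProductSpan]
  exact CliffordAlgebra.iInf_centralizer_ι_eq hodd hv₁ hvv

theorem stmt_16 (Q : QuadraticForm ℂ (lp (fun _ : ℕ => ℂ) 2))
    (hQ : ∀ a : lp (fun _ : ℕ => ℂ) 2, Q a = ∑' i, (a i) ^ 2)
    (n : ℕ) (hpos : 0 < n) (hodd : Odd n)
    -- the standard unit vectors `v₁, …, v_n`
    (v : Fin n → lp (fun _ : ℕ => ℂ) 2) (hv : ∀ i, v i = lp.single 2 (i : ℕ) 1)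
    -- `U = v₁^⊥ ∩ … ∩ v_n^⊥`
    (U : Set (lp (fun _ : ℕ => ℂ) 2))
    (hU : U = {u | ∀ i : Fin n, Q (v i + u) - Q (v i) - Q u = 0}) :
    (⨅ i : Fin n, Subalgebra.toSubmodule
        (Subalgebra.centralizer ℂ
          ({CliffordAlgebra.ι Q (v i)} : Set (CliffordAlgebra Q)))) =
      evenCliffordPart Q U ⊔
        Submodule.map
          (LinearMap.mulLeft ℂ
            (((List.finRange n).map fun i : Fin n => CliffordAlgebra.ι Q (v i)).prod))
          (evenCliffordPart Q U) :=
  stmt_16_general Q hQ n hodd v hv U hU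
end

section
/- Let V = { a = (a₁, a₂, …) : a_i ∈ ℂ, ∑_{i=1}^∞ |a_i|² < ∞ } with quadratic form f(a) = ∑_{i=1}^∞ a_i², and let Cl(V,f) be its Clifford algebra with canonical map ι. Let 𝒱 = { v_i : i ≥ 1 } be the set of standard unit vectors of V. Then the centralizer of the set { ι(v_i) : i ≥ 1 } in Cl(V,f) is exactly ℂ·1; that is, the only elements of Cl(V,f) commuting with every ι(v_i) are the scalar multiples of the identity. -/
open CliffordAlgebra

variable {R M : Type*} [CommRing R] [AddCommGroup M] [Module R M] {Q : QuadraticForm R M}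

theorem contractLeft_mul (d : Module.Dual R M) (x y : CliffordAlgebra Q) :
    contractLeft d (x * y) =
      contractLeft d x * y + involute x * contractLeft d y := by
  induction x using CliffordAlgebra.induction generalizing y with
  | algebraMap r =>
      rw [contractLeft_algebraMap_mul, involute.commutes, contractLeft_algebraMap,
        zero_mul, zero_add]
  | ι m =>
      rw [contractLeft_ι_mul, contractLeft_ι, involute_ι, Algebra.smul_def, neg_mul,
        sub_eq_add_neg]
  | mul a b ha hb =>
      rw [mul_assoc, ha, ha b, hb, map_mul, add_mul, mul_assoc, mul_assoc, mul_add, add_assoc, mul_assoc]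
  | add a b ha hb =>
      rw [add_mul, map_add, ha, hb, map_add, add_mul, map_add, add_mul]
      abel
-- Lemma 2
theorem contract_eq_zero_of_adjoin {S : Set M} (d : Module.Dual R M)
    (hd : ∀ u ∈ S, d u = 0) {y : CliffordAlgebra Q}
    (hy : y ∈ Algebra.adjoin R (ι Q '' S)) : contractLeft d y = 0 := by
  refine Algebra.adjoin_induction (p := fun y _ => contractLeft d y = 0) ?_ ?_ ?_ ?_ hy
  · rintro x ⟨u, hu, rfl⟩
    rw [contractLeft_ι, hd u hu, map_zero]
  · intro r; exact contractLeft_algebraMap Q d r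
  · intro x y _ _ hx' hy'
    rw [map_add, hx', hy', add_zero]
  · intro x y _ _ hx' hy'
    rw [contractLeft_mul, hx', hy', zero_mul, mul_zero, add_zero]

-- Lemma 3
theorem ι_mul_sub_involute_mul (m : M) (x : CliffordAlgebra Q) :
    ι Q m * x - involute x * ι Q m = contractLeft (QuadraticMap.polarBilin Q m) x := by
  induction x using CliffordAlgebra.induction with
  | algebraMap r =>
      rw [involute.commutes, contractLeft_algebraMap, Algebra.commutes, sub_self]
  | ι w =>
      rw [involute_ι, contractLeft_ι, neg_mul, sub_neg_eq_add]
      exact CliffordAlgebra.ι_mul_ι_add_swap m w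
  | mul a b ha hb =>
      rw [contractLeft_mul, ← ha, ← hb, map_mul]
      noncomm_ring
  | add a b ha hb =>
      rw [map_add, map_add, ← ha, ← hb]
      noncomm_ring

-- claim C: moving ι w across elements of the adjoin of S
theorem ι_mul_mem_adjoin {S : Set M} (w : M) {a : CliffordAlgebra Q}
    (ha : a ∈ Algebra.adjoin R (ι Q '' S)) :
    ∃ a' a'' : CliffordAlgebra Q, a' ∈ Algebra.adjoin R (ι Q '' S) ∧
      a'' ∈ Algebra.adjoin R (ι Q '' S) ∧ ι Q w * a = a' + a'' * ι Q w := by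
  refine Algebra.adjoin_induction (p := fun a _ => ∃ a' a'' : CliffordAlgebra Q,
      a' ∈ Algebra.adjoin R (ι Q '' S) ∧ a'' ∈ Algebra.adjoin R (ι Q '' S) ∧
      ι Q w * a = a' + a'' * ι Q w) ?_ ?_ ?_ ?_ ha
  · rintro x ⟨u, hu, rfl⟩
    refine ⟨algebraMap R _ (QuadraticMap.polar Q w u), -ι Q u, Subalgebra.algebraMap_mem _ _,
      neg_mem (Algebra.subset_adjoin ⟨u, hu, rfl⟩), ?_⟩
    rw [neg_mul, ← sub_eq_add_neg, eq_sub_iff_add_eq]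
    exact CliffordAlgebra.ι_mul_ι_add_swap w u
  · intro r
    exact ⟨0, algebraMap R _ r, zero_mem _, Subalgebra.algebraMap_mem _ _, by
      rw [zero_add, Algebra.commutes]⟩
  · rintro x y _ _ ⟨a', a'', h1, h2, h3⟩ ⟨b', b'', h4, h5, h6⟩
    exact ⟨a' + b', a'' + b'', add_mem h1 h4, add_mem h2 h5, by
      rw [mul_add, h3, h6]; noncomm_ring⟩
  · rintro x y hx hy ⟨a', a'', h1, h2, h3⟩ ⟨b', b'', h4, h5, h6⟩
    exact ⟨a' * y + a'' * b', a'' * b'', add_mem (mul_mem h1 hy) (mul_mem h2 h4),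
      mul_mem h2 h5, by rw [← mul_assoc, h3, add_mul, mul_assoc, h6]; noncomm_ring⟩

-- claim D: decomposition of adjoin (insert w S)
theorem adjoin_insert_decompose {S : Set M} (w : M) {y : CliffordAlgebra Q}
    (hy : y ∈ Algebra.adjoin R (ι Q '' insert w S)) :
    ∃ a b : CliffordAlgebra Q, a ∈ Algebra.adjoin R (ι Q '' S) ∧
      b ∈ Algebra.adjoin R (ι Q '' S) ∧ y = a + b * ι Q w := by
  induction hy using Algebra.adjoin_induction with
  | mem x hx =>
      obtain ⟨u, hu, rfl⟩ := hx
      rcases hu with rfl | hu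
      · exact ⟨0, 1, zero_mem _, one_mem _, by rw [zero_add, one_mul]⟩
      · exact ⟨ι Q u, 0, Algebra.subset_adjoin ⟨u, hu, rfl⟩, zero_mem _, by
          rw [zero_mul, add_zero]⟩
  | algebraMap r =>
      exact ⟨algebraMap R _ r, 0, Subalgebra.algebraMap_mem _ _, zero_mem _, by
        rw [zero_mul, add_zero]⟩
  | add x y hx hy hx' hy' =>
      obtain ⟨a, b, h1, h2, h3⟩ := hx'
      obtain ⟨c, e, h4, h5, h6⟩ := hy'
      exact ⟨a + c, b + e, add_mem h1 h4, add_mem h2 h5, by rw [h3, h6]; noncomm_ring⟩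
  | mul x y hx hy hx' hy' =>
      obtain ⟨a, b, h1, h2, h3⟩ := hx'
      obtain ⟨c, e, h4, h5, h6⟩ := hy'
      obtain ⟨c', c'', hc1, hc2, hc3⟩ := ι_mul_mem_adjoin w h4
      obtain ⟨e', e'', he1, he2, he3⟩ := ι_mul_mem_adjoin w h5
      refine ⟨a * c + b * c' + (b * e'') * algebraMap R _ (Q w),
        a * e + b * c'' + b * e', ?_, ?_, ?_⟩
      · exact add_mem (add_mem (mul_mem h1 h4) (mul_mem h2 hc1))
          (mul_mem (mul_mem h2 he2) (Subalgebra.algebraMap_mem _ _))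
      · exact add_mem (add_mem (mul_mem h1 h5) (mul_mem h2 hc2)) (mul_mem h2 he1)
      · rw [h3, h6]
        have hw : ι Q w * (e * ι Q w) = e' * ι Q w + e'' * algebraMap R _ (Q w) := by
          rw [← mul_assoc, he3, add_mul, mul_assoc, CliffordAlgebra.ι_sq_scalar]
        have hc : ι Q w * c = c' + c'' * ι Q w := hc3
        calc (a + b * ι Q w) * (c + e * ι Q w)
            = a * c + a * (e * ι Q w) + b * (ι Q w * c) + b * (ι Q w * (e * ι Q w)) := by
              noncomm_ring
          _ = _ := by rw [hc, hw]; noncomm_ring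

-- every element lies in the adjoin of finitely many generators
theorem exists_finset_mem_adjoin (x : CliffordAlgebra Q) :
    ∃ s : Finset M, x ∈ Algebra.adjoin R (ι Q '' s) := by
  classical
  induction x using CliffordAlgebra.induction with
  | algebraMap r => exact ⟨∅, Subalgebra.algebraMap_mem _ _⟩
  | ι m => exact ⟨{m}, Algebra.subset_adjoin ⟨m, by simp, rfl⟩⟩
  | add a b ha hb =>
      obtain ⟨s, hs⟩ := ha
      obtain ⟨t, ht⟩ := hb
      refine ⟨s ∪ t, add_mem ?_ ?_⟩
      · exact Algebra.adjoin_mono (Set.image_mono (by intro x hx; simp [hx])) hs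
      · exact Algebra.adjoin_mono (Set.image_mono (by intro x hx; simp [hx])) ht
  | mul a b ha hb =>
      obtain ⟨s, hs⟩ := ha
      obtain ⟨t, ht⟩ := hb
      refine ⟨s ∪ t, mul_mem ?_ ?_⟩
      · exact Algebra.adjoin_mono (Set.image_mono (by intro x hx; simp [hx])) hs
      · exact Algebra.adjoin_mono (Set.image_mono (by intro x hx; simp [hx])) ht

-- the filtration submodule
noncomputable def filT (Q : QuadraticForm R M) : Submodule R (CliffordAlgebra Q) :=
  (1 : Submodule R (CliffordAlgebra Q)) ⊔ LinearMap.range (ι Q)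

theorem filT_mono {N K : ℕ} (h : N ≤ K) : (filT Q) ^ N ≤ (filT Q) ^ K := by
  induction K with
  | zero => simpa [Nat.le_zero.mp h] using le_rfl
  | succ K ih =>
      rcases Nat.lt_or_ge N (K+1) with hlt | hge
      · refine le_trans (ih (Nat.lt_succ_iff.mp hlt)) ?_
        calc (filT Q) ^ K = 1 * (filT Q) ^ K := (one_mul _).symm
          _ ≤ filT Q * (filT Q) ^ K := mul_le_mul' le_sup_left le_rfl
          _ = (filT Q) ^ (K + 1) := (pow_succ' _ _).symm
      · have : N = K + 1 := le_antisymm h hge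
        subst this; exact le_rfl

theorem exists_filT_pow (x : CliffordAlgebra Q) : ∃ N : ℕ, x ∈ (filT Q) ^ N := by
  induction x using CliffordAlgebra.induction with
  | algebraMap r =>
      exact ⟨0, by rw [pow_zero]; exact Submodule.mem_one.mpr ⟨r, rfl⟩⟩
  | ι m =>
      exact ⟨1, by rw [pow_one]; exact Submodule.mem_sup_right (LinearMap.mem_range_self _ m)⟩
  | add a b ha hb =>
      obtain ⟨N, hN⟩ := ha
      obtain ⟨K, hK⟩ := hb
      exact ⟨max N K, add_mem (filT_mono (le_max_left _ _) hN)
        (filT_mono (le_max_right _ _) hK)⟩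
  | mul a b ha hb =>
      obtain ⟨N, hN⟩ := ha
      obtain ⟨K, hK⟩ := hb
      exact ⟨N + K, by rw [pow_add]; exact Submodule.mul_mem_mul hN hK⟩

theorem contract_filT_zero (d : Module.Dual R M) {y : CliffordAlgebra Q}
    (hy : y ∈ (filT Q) ^ (0 : ℕ)) : contractLeft d y = 0 := by
  rw [pow_zero] at hy
  obtain ⟨r, rfl⟩ := Submodule.mem_one.mp hy
  exact contractLeft_algebraMap Q d r

theorem involute_filT {m : CliffordAlgebra Q} (hm : m ∈ filT Q) : involute m ∈ filT Q := by
  obtain ⟨a, ha, b, hb, rfl⟩ := Submodule.mem_sup.mp hm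
  obtain ⟨r, rfl⟩ := Submodule.mem_one.mp ha
  obtain ⟨v, rfl⟩ := hb
  rw [map_add, involute.commutes, involute_ι]
  exact add_mem (Submodule.mem_sup_left (Submodule.mem_one.mpr ⟨r, rfl⟩))
    (neg_mem (Submodule.mem_sup_right (LinearMap.mem_range_self _ v)))

theorem contract_filT_one (d : Module.Dual R M) {m : CliffordAlgebra Q}
    (hm : m ∈ filT Q) : ∃ r : R, contractLeft d m = algebraMap R _ r := by
  obtain ⟨a, ha, b, hb, rfl⟩ := Submodule.mem_sup.mp hm
  obtain ⟨r, rfl⟩ := Submodule.mem_one.mp ha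
  obtain ⟨v, rfl⟩ := hb
  exact ⟨d v, by rw [map_add, contractLeft_algebraMap, zero_add, contractLeft_ι]⟩

theorem contract_filT (d : Module.Dual R M) (N : ℕ) {y : CliffordAlgebra Q}
    (hy : y ∈ (filT Q) ^ (N + 1)) : contractLeft d y ∈ (filT Q) ^ N := by
  induction N generalizing y with
  | zero =>
      rw [pow_one] at hy
      obtain ⟨r, hr⟩ := contract_filT_one d hy
      rw [hr, pow_zero]
      exact Submodule.mem_one.mpr ⟨r, rfl⟩
  | succ N ih =>
      rw [pow_succ'] at hy
      refine Submodule.mul_induction_on hy ?_ ?_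
      · intro m hm n hn
        rw [contractLeft_mul]
        refine add_mem ?_ ?_
        · obtain ⟨r, hr⟩ := contract_filT_one d hm
          rw [hr, ← Algebra.smul_def]
          exact Submodule.smul_mem _ _ hn
        · rw [pow_succ']
          exact Submodule.mul_mem_mul (involute_filT hm) (ih hn)
      · intro x y hx hy
        rw [map_add]; exact add_mem hx hy

section Field

variable {K V : Type*} [Field K] [AddCommGroup V] [Module K V] {Q : QuadraticForm K V}
variable {κ : Type*} (D : κ → Module.Dual K V)

theorem exists_dual_in_span (hsep : ∀ x : V, (∀ i, D i x = 0) → x = 0)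
    (s : Set V) (hs : s.Finite) (w : V) (hw : w ∉ Submodule.span K s) :
    ∃ d₀ ∈ Submodule.span K (Set.range D), d₀ w = 1 ∧ ∀ u ∈ s, d₀ u = 0 := by
  -- first, find some functional on V
  have hWfin : FiniteDimensional K (Submodule.span K (insert w s)) :=
    FiniteDimensional.span_of_finite K (hs.insert w)
  set W : Submodule K V := Submodule.span K (insert w s) with hW
  -- a raw functional separating w from span s
  obtain ⟨D', hD'w, hD's⟩ : ∃ D' : Module.Dual K V, D' w = 1 ∧ ∀ u ∈ s, D' u = 0 := by
    have hne : Submodule.Quotient.mk (p := Submodule.span K s) w ≠ 0 := by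
      exact fun h => hw ((Submodule.Quotient.mk_eq_zero _).mp h)
    have := (Module.forall_dual_apply_eq_zero_iff K
      (Submodule.Quotient.mk (p := Submodule.span K s) w)).not.mpr hne
    push_neg at this
    obtain ⟨φ, hφ⟩ := this
    refine ⟨(φ (Submodule.Quotient.mk w))⁻¹ • (φ.comp (Submodule.span K s).mkQ), ?_, ?_⟩
    · simp only [LinearMap.smul_apply, LinearMap.comp_apply, Submodule.mkQ_apply]
      exact inv_mul_cancel₀ hφ
    · intro u hu
      simp only [LinearMap.smul_apply, LinearMap.comp_apply, Submodule.mkQ_apply]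
      rw [(Submodule.Quotient.mk_eq_zero _).mpr (Submodule.subset_span hu), map_zero,
        smul_zero]
  -- the restriction map to W
  set Φ : Module.Dual K V →ₗ[K] Module.Dual K W := W.subtype.dualMap with hΦ
  set U : Submodule K (Module.Dual K W) :=
    Submodule.map Φ (Submodule.span K (Set.range D)) with hU
  have hcoann : U.dualCoannihilator = ⊥ := by
    rw [Submodule.eq_bot_iff]
    intro x hx
    rw [Submodule.mem_dualCoannihilator] at hx
    have hx' : ∀ i, D i (x : V) = 0 := fun i =>
      hx (Φ (D i)) ⟨D i, Submodule.subset_span (Set.mem_range_self i), rfl⟩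
    have : (x : V) = 0 := hsep _ hx'
    exact Subtype.ext this
  have hfr : Module.finrank K U = Module.finrank K (Module.Dual K W) := by
    have h1 := Subspace.finrank_add_finrank_dualCoannihilator_eq U
    rw [hcoann, finrank_bot, add_zero] at h1
    rw [h1, Subspace.dual_finrank_eq]
  have hUtop : U = ⊤ := Submodule.eq_top_of_finrank_eq hfr
  -- now restrict D' to W and pull it back
  have hg : Φ D' ∈ U := hUtop ▸ Submodule.mem_top
  obtain ⟨d₀, hd₀span, hd₀⟩ := hg
  have hwW : w ∈ W := Submodule.subset_span (Set.mem_insert w s)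
  refine ⟨d₀, hd₀span, ?_, ?_⟩
  · have := congrArg (fun f => f ⟨w, hwW⟩) hd₀
    simp only [hΦ, LinearMap.dualMap_apply, Submodule.coe_subtype] at this
    exact this.trans hD'w
  · intro u hu
    have huW : u ∈ W := Submodule.subset_span (Set.mem_insert_of_mem w hu)
    have := congrArg (fun f => f ⟨u, huW⟩) hd₀
    simp only [hΦ, LinearMap.dualMap_apply, Submodule.coe_subtype] at this
    exact this.trans (hD's u hu)

end Field

section Field2

variable {K V : Type*} [Field K] [AddCommGroup V] [Module K V] {Q : QuadraticForm K V}
variable {κ : Type*} {D : κ → Module.Dual K V}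

theorem contract_span_eq_zero {y : CliffordAlgebra Q}
    (hy : ∀ i, contractLeft (D i) y = 0) {d : Module.Dual K V}
    (hd : d ∈ Submodule.span K (Set.range D)) : contractLeft d y = 0 := by
  refine Submodule.span_induction (p := fun d _ => contractLeft d y = 0) ?_ ?_ ?_ ?_ hd
  · rintro x ⟨i, rfl⟩
    exact hy i
  · show contractLeft (0 : Module.Dual K V) y = 0
    rw [map_zero, LinearMap.zero_apply]
  · intro a b _ _ ha hb
    rw [map_add, LinearMap.add_apply, ha, hb, add_zero]
  · intro a x _ hx
    rw [map_smul, LinearMap.smul_apply, hx, smul_zero]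

theorem mem_bot_of_contract_eq_zero (hsep : ∀ x : V, (∀ i, D i x = 0) → x = 0) :
    ∀ (n : ℕ) (s : Finset V), s.card ≤ n → ∀ y ∈ Algebra.adjoin K (ι Q '' s),
      (∀ i, contractLeft (D i) y = 0) → y ∈ (⊥ : Subalgebra K (CliffordAlgebra Q)) := by
  classical
  intro n
  induction n with
  | zero =>
      intro s hcard y hy _
      rw [Finset.card_eq_zero.mp (Nat.le_zero.mp hcard)] at hy
      simpa [Algebra.adjoin_empty] using hy
  | succ n ih =>
      intro s hcard y hy hcontr
      by_cases hs : ∃ w ∈ s, w ∈ Submodule.span K ((s.erase w : Finset V) : Set V)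
      · obtain ⟨w, hws, hwspan⟩ := hs
        have hstep : y ∈ Algebra.adjoin K (ι Q '' (s.erase w : Finset V)) := by
          have hsub : (ι Q '' s : Set _) ⊆
              (Algebra.adjoin K (ι Q '' (s.erase w : Finset V)) : Set _) := by
            rintro _ ⟨u, hu, rfl⟩
            by_cases huw : u = w
            · subst huw
              have hmem : ι Q u ∈ Submodule.span K (ι Q '' (s.erase u : Finset V)) := by
                rw [← Submodule.map_span]
                exact Submodule.mem_map_of_mem hwspan
              have hle : Submodule.span K (ι Q '' (s.erase u : Finset V)) ≤
                  Subalgebra.toSubmodule (Algebra.adjoin K (ι Q '' (s.erase u : Finset V))) :=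
                Submodule.span_le.mpr (fun z hz => Algebra.subset_adjoin hz)
              exact hle hmem
            · exact Algebra.subset_adjoin ⟨u, by
                simp only [Finset.coe_erase, Set.mem_diff, Set.mem_singleton_iff]
                exact ⟨hu, huw⟩, rfl⟩
          exact Algebra.adjoin_le hsub hy
        refine ih (s.erase w) ?_ y hstep hcontr
        have := Finset.card_erase_of_mem hws
        omega
      · push_neg at hs
        rcases s.eq_empty_or_nonempty with rfl | ⟨w, hw⟩
        · simpa [Algebra.adjoin_empty] using hy
        · have hins : insert w (s.erase w) = s := Finset.insert_erase hw
          have hcoe : insert w ((s.erase w : Finset V) : Set V) = (s : Set V) := by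
            rw [← Finset.coe_insert, hins]
          have hy' : y ∈ Algebra.adjoin K (ι Q ''
              insert w ((s.erase w : Finset V) : Set V)) := by
            rw [hcoe]; exact hy
          obtain ⟨a, b, hamem, hbmem, hab⟩ := adjoin_insert_decompose w hy'
          obtain ⟨d₀, hd₀span, hd₀w, hd₀s⟩ := exists_dual_in_span D hsep
            ((s.erase w : Finset V) : Set V) (Set.Finite.ofFinset (s.erase w) (by intro x; simp [and_comm]))
            w (hs w hw)
          have h0 : contractLeft d₀ y = 0 := contract_span_eq_zero hcontr hd₀span
          have hia : contractLeft d₀ a = 0 := contract_eq_zero_of_adjoin d₀ hd₀s hamem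
          have hib : contractLeft d₀ b = 0 := contract_eq_zero_of_adjoin d₀ hd₀s hbmem
          have hbz : b = 0 := by
            have : contractLeft d₀ y = involute b := by
              rw [hab, map_add, hia, zero_add, contractLeft_mul, hib, zero_mul, zero_add,
                contractLeft_ι, hd₀w, map_one, mul_one]
            rw [h0] at this
            have := congrArg involute this
            rwa [involute_involute, map_zero, eq_comm] at this
          have hya : y = a := by rw [hab, hbz, zero_mul, add_zero]
          refine ih (s.erase w) ?_ y (hya ▸ hamem) hcontr
          have := Finset.card_erase_of_mem hw
          omega

end Field2

section LP

open scoped ENNReal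

local notation "V" => lp (fun _ : ℕ => ℂ) 2

theorem summable_sq (a : V) : Summable (fun j => (a j)^2) := by
  have h2 : (0:ℝ) < (2 : ℝ≥0∞).toReal := by norm_num
  have hs := (memℓp_gen_iff h2).mp (lp.memℓp a)
  apply Summable.of_norm
  convert hs using 2 with j
  rw [norm_pow]
  norm_num

theorem single_coe (i j : ℕ) : (lp.single 2 i (1:ℂ) : V) j = if j = i then 1 else 0 := by
  rcases eq_or_ne j i with rfl | h
  · rw [lp.single_apply_self, if_pos rfl]
  · rw [lp.single_apply_ne _ _ _ h, if_neg h]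

theorem Q_single (Q : QuadraticForm ℂ V) (hQ : ∀ a : V, Q a = ∑' i, (a i) ^ 2) (i : ℕ) :
    Q (lp.single 2 i 1) = 1 := by
  rw [hQ]
  rw [tsum_eq_single i (fun j hj => by rw [single_coe, if_neg hj]; ring)]
  rw [single_coe, if_pos rfl]; ring

theorem polar_single (Q : QuadraticForm ℂ V) (hQ : ∀ a : V, Q a = ∑' i, (a i) ^ 2) (i : ℕ)
    (w : V) : QuadraticMap.polar Q (lp.single 2 i 1) w = 2 * w i := by
  have hadd : ∀ j, ((lp.single 2 i (1:ℂ) + w : V) j) = (if j = i then 1 else 0) + w j := by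
    intro j
    rw [lp.coeFn_add, Pi.add_apply, single_coe]
  have hf : Summable (fun j => ((lp.single 2 i (1:ℂ) + w : V) j)^2) :=
    summable_sq (lp.single 2 i 1 + w)
  have hg : Summable (fun j => (w j)^2) := summable_sq w
  have h1 : ∑' j, (((lp.single 2 i (1:ℂ) + w : V) j)^2 - (w j)^2)
      = (∑' j, ((lp.single 2 i (1:ℂ) + w : V) j)^2) - ∑' j, (w j)^2 := Summable.tsum_sub hf hg
  have h2 : ∑' j, (((lp.single 2 i (1:ℂ) + w : V) j)^2 - (w j)^2) = 1 + 2 * w i := by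
    rw [tsum_eq_single i (fun j hj => by rw [hadd, if_neg hj]; ring)]
    rw [hadd, if_pos rfl]; ring
  have h3 := h1.symm.trans h2
  rw [QuadraticMap.polar, Q_single Q hQ i, hQ, hQ]
  linear_combination h3

end LP

set_option maxHeartbeats 1600000 in
theorem stmt_17 (Q : QuadraticForm ℂ (lp (fun _ : ℕ => ℂ) 2))
    (hQ : ∀ a : lp (fun _ : ℕ => ℂ) 2, Q a = ∑' i, (a i) ^ 2) :
    Subalgebra.centralizer ℂ
        (Set.range fun i : ℕ => CliffordAlgebra.ι Q (lp.single 2 i 1)) = ⊥ := by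
  rw [eq_bot_iff]
  intro x hx
  set v : ℕ → lp (fun _ : ℕ => ℂ) 2 := fun i => lp.single 2 i 1 with hv
  set e : ℕ → CliffordAlgebra Q := fun i => ι Q (v i) with he
  set D : ℕ → Module.Dual ℂ (lp (fun _ : ℕ => ℂ) 2) :=
    fun i => QuadraticMap.polarBilin Q (v i) with hDdef
  have hD : ∀ (i : ℕ) (w : lp (fun _ : ℕ => ℂ) 2), D i w = 2 * w i := by
    intro i w
    rw [hDdef]
    rw [QuadraticMap.polarBilin_apply_apply]
    exact polar_single Q hQ i w
  have hQ1 : ∀ i, Q (v i) = 1 := Q_single Q hQ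
  have hcomm : ∀ i, e i * x = x * e i := fun i =>
    (Subalgebra.mem_centralizer_iff (R := ℂ)).mp hx (e i) ⟨i, rfl⟩
  have key : ∀ (y : CliffordAlgebra Q) (i : ℕ),
      contractLeft (D i) y = e i * y - involute y * e i :=
    fun y i => (ι_mul_sub_involute_mul (v i) y).symm
  have hinvcomm : ∀ i, e i * involute x = involute x * e i := by
    intro i
    have h := congrArg involute (hcomm i)
    rw [map_mul, map_mul, involute_ι] at h
    simpa [neg_mul, mul_neg, neg_inj] using h
  set z : CliffordAlgebra Q := x - involute x with hz
  have hzinv : involute z = -z := by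
    rw [hz, map_sub, involute_involute, neg_sub]
  have hzcomm : ∀ i, e i * z = z * e i := by
    intro i
    rw [hz, mul_sub, sub_mul, hcomm i, hinvcomm i]
  have hdz : ∀ i, contractLeft (D i) z = (2:ℂ) • (z * e i) := by
    intro i
    rw [key z i, hzinv, neg_mul, sub_neg_eq_add, hzcomm i, two_smul]
  -- the increasing products of generators
  set E : ℕ → CliffordAlgebra Q :=
    fun k => Nat.rec (1 : CliffordAlgebra Q) (fun k Ek => e k * Ek) k with hE
  have hE0 : E 0 = 1 := rfl
  have hEs : ∀ k, E (k + 1) = e k * E k := fun k => rfl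
  have hsingle : ∀ (i j : ℕ), i ≠ j → D i (v j) = 0 := by
    intro i j hij
    rw [hD, hv]
    rw [single_coe, if_neg hij, mul_zero]
  have hEmem : ∀ k, E k ∈ Algebra.adjoin ℂ (ι Q '' (v '' Set.Iio k)) := by
    intro k
    induction k with
    | zero => exact one_mem _
    | succ k ih =>
        rw [hEs]
        refine mul_mem (Algebra.subset_adjoin ⟨v k, ⟨k, Nat.lt_succ_self k, rfl⟩, rfl⟩) ?_
        exact Algebra.adjoin_mono
          (Set.image_mono (Set.image_mono fun j (hj : j < k) => hj.trans (Nat.lt_succ_self k)))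
          ih
  have hEcontr : ∀ k, contractLeft (D k) (E k) = 0 := by
    intro k
    refine contract_eq_zero_of_adjoin (D k) ?_ (hEmem k)
    rintro _ ⟨j, hj, rfl⟩
    exact hsingle k j (Nat.ne_of_gt hj)
  have hzE : ∀ k, contractLeft (D k) (z * E k) = (2:ℂ) • (z * E (k + 1)) := by
    intro k
    rw [contractLeft_mul, hEcontr k, mul_zero, add_zero, hdz k, smul_mul_assoc, hEs,
      mul_assoc]
  obtain ⟨N, hN⟩ := exists_filT_pow z
  have hmem : ∀ k, k ≤ N → z * E k ∈ (filT Q) ^ (N - k) := by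
    intro k
    induction k with
    | zero => intro _; simpa [hE0, mul_one] using hN
    | succ k ih =>
        intro hk
        have ihk := ih (Nat.le_of_succ_le hk)
        have hNk : N - k = (N - (k + 1)) + 1 := by omega
        rw [hNk] at ihk
        have hco := contract_filT (D k) _ ihk
        rw [hzE k] at hco
        have h2 : z * E (k + 1) = (2:ℂ)⁻¹ • ((2:ℂ) • (z * E (k + 1))) := by
          rw [smul_smul]; norm_num
        rw [h2]
        exact Submodule.smul_mem _ _ hco
  have hstop : z * E (N + 1) = 0 := by
    have h0 : (2:ℂ) • (z * E (N + 1)) = 0 := by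
      rw [← hzE N]
      exact contract_filT_zero (D N) (by simpa using hmem N le_rfl)
    rcases smul_eq_zero.mp h0 with h | h
    · exact absurd h two_ne_zero
    · exact h
  -- invert the product of generators
  set E' : ℕ → CliffordAlgebra Q :=
    fun k => Nat.rec (1 : CliffordAlgebra Q) (fun k E'k => E'k * e k) k with hE'
  have hEE' : ∀ k, E k * E' k = 1 := by
    intro k
    induction k with
    | zero => show (1 : CliffordAlgebra Q) * 1 = 1; rw [one_mul]
    | succ k ih =>
        show (e k * E k) * (E' k * e k) = 1
        rw [mul_assoc, ← mul_assoc (E k), ih, one_mul, he]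
        rw [CliffordAlgebra.ι_sq_scalar, hQ1, map_one]
  have hz0 : z = 0 := by
    have := congrArg (fun t => t * E' (N + 1)) hstop
    simpa [mul_assoc, hEE' (N + 1), zero_mul] using this
  have hinvx : involute x = x := by
    have := sub_eq_zero.mp hz0
    exact this.symm
  have hxcontr : ∀ i, contractLeft (D i) x = 0 := by
    intro i
    rw [key x i, hinvx, hcomm i, sub_self]
  have hsep : ∀ u : lp (fun _ : ℕ => ℂ) 2, (∀ i, D i u = 0) → u = 0 := by
    intro u hu
    refine lp.ext (funext fun i => ?_)
    have := hu i
    rw [hD] at this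
    have hui : (u : ∀ _, ℂ) i = 0 := (mul_eq_zero.mp this).resolve_left two_ne_zero
    simpa using hui
  obtain ⟨s, hsx⟩ := exists_finset_mem_adjoin x
  exact mem_bot_of_contract_eq_zero hsep s.card s le_rfl x hsx hxcontr
end

section
/- Let I be an uncountable set, let W be the complex vector space with basis { w_i : i ∈ I } (realized as the space I →₀ ℂ of finitely supported functions), and let g be the quadratic form on W given by g(∑ α_i w_i) = ∑ α_i². Then for every countable subset X of the Clifford algebra Cl(W,g), the centralizer of X in Cl(W,g) is strictly larger than ℂ·1. -/
/-!
Every element of `Cl(W, g)` is a polynomial in finitely many vectors, so a countable set `X`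
involves only basis vectors `w_k` with `k` in a countable set `T`. For `i ≠ j` outside `T`,
`z = w_i w_j` anticommutes factor by factor with every `w` supported in `T`, hence commutes
with it, and thus centralizes `X`. It is not a scalar: `w_i z = w_j` while `z w_i = -w_j`.
-/

open CliffordAlgebra Finsupp

theorem Set.Countable.exists_notMem {α : Type*} [Uncountable α] {s : Set α}
    (hs : s.Countable) : ∃ a, a ∉ s := by
  by_contra! h
  exact not_countable_univ (hs.mono fun a _ => h a)

namespace CliffordAlgebra

variable {R M : Type*} [CommRing R] [AddCommGroup M] [Module R M] {Q : QuadraticForm R M}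

theorem adjoin_ι_le_centralizer_ι_mul_ι {u v : M} {s : Set M}
    (hu : ∀ w ∈ s, Q.IsOrtho u w) (hv : ∀ w ∈ s, Q.IsOrtho v w) :
    Algebra.adjoin R (ι Q '' s) ≤ Subalgebra.centralizer R {ι Q u * ι Q v} := by
  refine Algebra.adjoin_le ?_
  rintro _ ⟨w, hw, rfl⟩ _ rfl
  rw [mul_assoc, ι_mul_ι_comm_of_isOrtho (hv w hw), mul_neg, ← mul_assoc,
    ι_mul_ι_comm_of_isOrtho (hu w hw), neg_mul, neg_neg, mul_assoc]

theorem ι_mul_ι_notMem_bot_of_isOrtho {K V : Type*} [Field K] [Invertible (2 : K)]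
    [AddCommGroup V] [Module K V] {Q : QuadraticForm K V} {u v : V} (hu : Q u ≠ 0)
    (hv : Q v ≠ 0) (huv : Q.IsOrtho u v) :
    ι Q u * ι Q v ∉ (⊥ : Subalgebra K (CliffordAlgebra Q)) := by
  rw [Algebra.mem_bot]
  rintro ⟨r, hr⟩
  have hleft : ι Q u * (ι Q u * ι Q v) = Q u • ι Q v := by
    rw [← mul_assoc, ι_sq_scalar, Algebra.smul_def]
  have hright : ι Q u * ι Q v * ι Q u = -(Q u • ι Q v) := by
    rw [ι_mul_ι_mul_ι, huv.polar_eq_zero, zero_smul, zero_sub, map_neg, map_smul]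
  have hcomm : ι Q u * (ι Q u * ι Q v) = ι Q u * ι Q v * ι Q u := by
    rw [← hr, Algebra.commutes]
  have hιv : ι Q v = 0 := by
    rw [hleft, hright, eq_neg_iff_add_eq_zero, ← two_smul K, smul_smul] at hcomm
    exact (smul_eq_zero.mp hcomm).resolve_left (mul_ne_zero (two_ne_zero' K) hu)
  apply hv
  apply (algebraMap K (CliffordAlgebra Q)).injective
  rw [← ι_sq_scalar, hιv, mul_zero, map_zero]

end CliffordAlgebra

section SumOfSquares

variable {I R : Type*} [CommRing R] {Q : QuadraticForm R (I →₀ R)}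

theorem QuadraticMap.isOrtho_of_disjoint_support
    (hQ : ∀ w : I →₀ R, Q w = ∑ i ∈ w.support, w i ^ 2) {v w : I →₀ R}
    (h : Disjoint v.support w.support) : Q.IsOrtho v w := by
  classical
  rw [QuadraticMap.isOrtho_def, hQ, hQ, hQ, support_add_eq h, Finset.sum_union h]
  congr 1 <;> refine Finset.sum_congr rfl fun k hk => ?_
  · rw [Finsupp.add_apply, notMem_support_iff.mp (Finset.disjoint_left.mp h hk), add_zero]
  · rw [Finsupp.add_apply, notMem_support_iff.mp (Finset.disjoint_right.mp h hk), zero_add]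

theorem QuadraticMap.isOrtho_single_of_mem_supported
    (hQ : ∀ w : I →₀ R, Q w = ∑ i ∈ w.support, w i ^ 2) {S : Set I} {i : I} (hi : i ∉ S)
    (a : R) {w : I →₀ R} (hw : w ∈ supported R R S) : Q.IsOrtho (single i a) w := by
  refine isOrtho_of_disjoint_support hQ (Finset.disjoint_of_subset_left support_single_subset ?_)
  exact Finset.disjoint_singleton_left.mpr fun hmem => hi ((mem_supported R w).mp hw hmem)

theorem QuadraticMap.apply_single_one [Nontrivial R]
    (hQ : ∀ w : I →₀ R, Q w = ∑ i ∈ w.support, w i ^ 2) (i : I) : Q (single i 1) = 1 := by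
  rw [hQ, support_single i one_ne_zero, Finset.sum_singleton, single_eq_same, one_pow]

end SumOfSquares

theorem CliffordAlgebra.exists_finite_mem_adjoin_ι_supported {I R : Type*} [CommRing R]
    {Q : QuadraticForm R (I →₀ R)} (x : CliffordAlgebra Q) :
    ∃ S : Set I, S.Finite ∧ x ∈ Algebra.adjoin R (ι Q '' supported R R S) := by
  have mono : ∀ {S T : Set I}, S ⊆ T →
      Algebra.adjoin R (ι Q '' supported R R S) ≤ Algebra.adjoin R (ι Q '' supported R R T) :=
    fun h => Algebra.adjoin_mono (Set.image_mono (supported_mono h))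
  induction x using CliffordAlgebra.induction with
  | algebraMap r => exact ⟨∅, Set.finite_empty, Subalgebra.algebraMap_mem _ r⟩
  | ι w =>
    exact ⟨w.support, w.support.finite_toSet,
      Algebra.subset_adjoin ⟨w, mem_supported_support R w, rfl⟩⟩
  | mul a b ha hb =>
    obtain ⟨Sa, hSa, ha⟩ := ha
    obtain ⟨Sb, hSb, hb⟩ := hb
    exact ⟨Sa ∪ Sb, hSa.union hSb,
      mul_mem (mono Set.subset_union_left ha) (mono Set.subset_union_right hb)⟩
  | add a b ha hb =>
    obtain ⟨Sa, hSa, ha⟩ := ha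
    obtain ⟨Sb, hSb, hb⟩ := hb
    exact ⟨Sa ∪ Sb, hSa.union hSb,
      add_mem (mono Set.subset_union_left ha) (mono Set.subset_union_right hb)⟩

theorem stmt_18 (I : Type*) [Uncountable I]
    (g : QuadraticForm ℂ (I →₀ ℂ))
    (hg : ∀ w : I →₀ ℂ, g w = ∑ i ∈ w.support, (w i) ^ 2)
    (X : Set (CliffordAlgebra g)) (hX : X.Countable) :
    ⊥ < Subalgebra.centralizer ℂ X := by
  choose S hSfin hS using exists_finite_mem_adjoin_ι_supported (Q := g)
  set T := ⋃ x ∈ X, S x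
  have hT : T.Countable := hX.biUnion fun x _ => (hSfin x).countable
  obtain ⟨i, hi⟩ := hT.exists_notMem
  obtain ⟨j, hj⟩ := (hT.insert i).exists_notMem
  obtain ⟨hji, hjT⟩ := not_or.mp hj
  set z := ι g (single i 1) * ι g (single j 1)
  have hz_mem : z ∈ Subalgebra.centralizer ℂ X := fun x hx =>
    (adjoin_ι_le_centralizer_ι_mul_ι
      (fun _ => QuadraticMap.isOrtho_single_of_mem_supported hg hi 1)
      (fun _ => QuadraticMap.isOrtho_single_of_mem_supported hg hjT 1)
      (Algebra.adjoin_mono (Set.image_mono (supported_mono (Set.subset_biUnion_of_mem hx)))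
        (hS x)) z rfl).symm
  have hz_notMem : z ∉ (⊥ : Subalgebra ℂ (CliffordAlgebra g)) :=
    ι_mul_ι_notMem_bot_of_isOrtho (by simp [QuadraticMap.apply_single_one hg])
      (by simp [QuadraticMap.apply_single_one hg])
      (QuadraticMap.isOrtho_single_of_mem_supported hg (show i ∉ ({j} : Set I) from Ne.symm hji)
        1 (single_mem_supported ℂ 1 (Set.mem_singleton j)))
  exact SetLike.lt_iff_le_and_exists.mpr ⟨bot_le, z, hz_mem, hz_notMem⟩
end

section
/- Let V = { a = (a₁, a₂, …) : a_i ∈ ℂ, ∑_{i=1}^∞ |a_i|² < ∞ } with quadratic form f(a) = ∑_{i=1}^∞ a_i², and let A = Cl(V,f). Let I be a set whose cardinality equals the dimension of V over ℂ, let W = I →₀ ℂ with the quadratic form g(w) = ∑_{i ∈ I} (w i)², and let B = Cl(W,g). Then the Clifford algebras A and B are not isomorphic as ℂ-algebras (even though dim_ℂ A = dim_ℂ B and both are unital locally matrix algebras with Steinitz number 2^∞). -/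
/-!
The Fock representation of `Cl(I →₀ ℂ, ∑ wᵢ²)` on `Finset I →₀ ℂ` (Jordan–Wigner operators) gives
every element `x` a finitely supported symbol `ρ x`, its image of the vacuum. Reversion transposes
matrix coefficients, so the vacuum coefficient of `x * y` is the pairing `∑ U, ρ (rev x) U * ρ y U`.
For an algebra map `φ` out of `Cl(ℓ²)`, the relation `φ a * φ eₙ + φ eₙ * φ a = 2 aₙ` then shows that
`a` is determined by `ρ (φ a)` and `ρ (rev (φ a))` on the countably many monomials in the supports of
the symbols of the `φ eₙ`. Hence `ℓ²` would have countable dimension, whereas the geometric sequences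
`(tⁿ)`, `0 < t < 1`, are linearly independent by Dedekind's lemma on characters of `ℕ`.
-/

open Finset
open scoped symmDiff

theorem Finset.neg_one_pow_card_symmDiff_singleton {R I : Type*} [Ring R] [DecidableEq I]
    (s : Finset I) (j : I) : (-1 : R) ^ #(s ∆ {j}) = -(-1) ^ #s := by
  by_cases hj : j ∈ s
  · have h := card_erase_add_one hj
    rw [symmDiff_of_ge (singleton_subset_iff.2 hj), sdiff_singleton_eq_erase, ← h, pow_succ]
    simp
  · rw [(disjoint_singleton_right.2 hj).symmDiff_eq_sup, sup_eq_union, union_singleton,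
      card_insert_of_notMem hj, pow_succ, mul_neg_one]

theorem sum_smul_mul_self_of_anticommute {R A ι : Type*} [CommSemiring R] [Semiring A]
    [Algebra R A] {c : ι → A} (hsq : ∀ i, c i * c i = 1)
    (hanti : ∀ i j, i ≠ j → c i * c j + c j * c i = 0) (w : ι → R) (s : Finset ι) :
    (∑ i ∈ s, w i • c i) * (∑ i ∈ s, w i • c i) = algebraMap R A (∑ i ∈ s, w i ^ 2) := by
  induction s using Finset.cons_induction with
  | empty => simp
  | cons k s hk ih =>
    set x := ∑ i ∈ s, w i • c i
    have hcross : x * c k + c k * x = 0 := by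
      rw [Finset.sum_mul, Finset.mul_sum, ← Finset.sum_add_distrib]
      refine Finset.sum_eq_zero fun i hi => ?_
      rw [smul_mul_assoc, mul_smul_comm, ← smul_add, hanti i k (ne_of_mem_of_not_mem hi hk),
        smul_zero]
    rw [sum_cons, sum_cons, map_add, ← ih, Algebra.algebraMap_eq_smul_one, ← hsq k]
    calc (w k • c k + x) * (w k • c k + x)
        = w k ^ 2 • (c k * c k) + w k • (x * c k + c k * x) + x * x := by
          simp only [add_mul, mul_add, smul_mul_assoc, mul_smul_comm, smul_add, smul_smul, sq]
          abel
      _ = _ := by rw [hcross, smul_zero, add_zero, add_comm]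

theorem Finsupp.linearMap_apply_eq_sum {R α β : Type*} [CommSemiring R]
    (L : (α →₀ R) →ₗ[R] (β →₀ R)) {ξ : α →₀ R} {s : Finset α} (hs : ξ.support ⊆ s) (b : β) :
    L ξ b = ∑ a ∈ s, ξ a * L (Finsupp.single a 1) b := by
  conv_lhs => rw [← Finsupp.sum_single ξ, Finsupp.sum_of_support_subset ξ hs _ (by simp)]
  simp only [map_sum, Finsupp.finsetSum_apply]
  refine Finset.sum_congr rfl fun a _ => ?_
  rw [← Finsupp.smul_single_one, map_smul, Finsupp.smul_apply, smul_eq_mul]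

noncomputable section Fock

variable {R I : Type*} [CommRing R] [LinearOrder I]

def fermionSign (i : I) (S : Finset I) : R := (-1) ^ #{j ∈ S | j < i}

theorem fermionSign_symmDiff_of_not_lt {i j : I} (h : ¬ j < i) (S : Finset I) :
    (fermionSign i (S ∆ {j}) : R) = fermionSign i S := by
  unfold fermionSign
  congr 2
  ext k
  by_cases hk : k = j <;> simp_all [mem_symmDiff]

theorem fermionSign_symmDiff_of_lt {i j : I} (h : j < i) (S : Finset I) :
    (fermionSign i (S ∆ {j}) : R) = -fermionSign i S := by
  have : {k ∈ S ∆ {j} | k < i} = {k ∈ S | k < i} ∆ {j} := by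
    ext k
    by_cases hk : k = j <;> simp_all [mem_symmDiff]
  rw [fermionSign, this, neg_one_pow_card_symmDiff_singleton, fermionSign]

theorem fermionSign_mul_self (i : I) (S : Finset I) :
    (fermionSign i S : R) * fermionSign i S = 1 := by
  rw [fermionSign, ← mul_pow, neg_one_mul, neg_neg, one_pow]

variable (R) in
/-- `cᵢ = aᵢ + aᵢ*`: toggles `i` with the Jordan–Wigner sign. -/
def fermionOp (i : I) : Module.End R (Finset I →₀ R) :=
  Finsupp.lsum R fun S => (fermionSign i S : R) • Finsupp.lsingle (S ∆ {i})

theorem fermionOp_single (i : I) (S : Finset I) (r : R) :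
    fermionOp R i (Finsupp.single S r) = (fermionSign i S : R) • Finsupp.single (S ∆ {i}) r := by
  simp [fermionOp]

theorem fermionOp_mul_self (i : I) : fermionOp R i * fermionOp R i = 1 := by
  refine Finsupp.lhom_ext fun S r => ?_
  simp only [Module.End.mul_apply, fermionOp_single, map_smul, symmDiff_symmDiff_cancel_right,
    fermionSign_symmDiff_of_not_lt (lt_irrefl i), smul_smul, fermionSign_mul_self, one_smul,
    Module.End.one_apply]

theorem fermionOp_anticomm {i j : I} (h : i ≠ j) :
    fermionOp R i * fermionOp R j + fermionOp R j * fermionOp R i = 0 := by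
  refine Finsupp.lhom_ext fun S r => ?_
  simp only [LinearMap.add_apply, Module.End.mul_apply, fermionOp_single, map_smul, smul_smul,
    symmDiff_right_comm S {j} {i}, ← add_smul, LinearMap.zero_apply]
  rcases h.lt_or_gt with hlt | hlt
  all_goals
    rw [fermionSign_symmDiff_of_lt hlt, fermionSign_symmDiff_of_not_lt hlt.not_gt]
    simp [mul_comm]

theorem fermionOp_single_one_apply_comm (i : I) (S T : Finset I) :
    fermionOp R i (Finsupp.single T 1) S = fermionOp R i (Finsupp.single S 1) T := by
  simp only [fermionOp_single, Finsupp.smul_apply, Finsupp.single_apply, smul_eq_mul]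
  by_cases h : T ∆ {i} = S
  · subst h
    rw [symmDiff_symmDiff_cancel_right, fermionSign_symmDiff_of_not_lt (lt_irrefl i)]
    simp
  · have h' : ¬ S ∆ {i} = T := by rintro rfl; exact h (symmDiff_symmDiff_cancel_right _ _)
    simp [h, h']

variable (g : QuadraticForm R (I →₀ R)) (hg : ∀ w : I →₀ R, g w = ∑ i ∈ w.support, w i ^ 2)

def fockRep : CliffordAlgebra g →ₐ[R] Module.End R (Finset I →₀ R) :=
  CliffordAlgebra.lift g ⟨Finsupp.linearCombination R (fermionOp R), fun w => by
    rw [Finsupp.linearCombination_apply, hg]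
    exact sum_smul_mul_self_of_anticommute fermionOp_mul_self
      (fun _ _ => fermionOp_anticomm) w w.support⟩

theorem fockRep_ι (w : I →₀ R) :
    fockRep g hg (CliffordAlgebra.ι g w) = Finsupp.linearCombination R (fermionOp R) w :=
  CliffordAlgebra.lift_ι_apply _ _ _

theorem fockRep_reverse_single_apply (x : CliffordAlgebra g) (S T : Finset I) :
    fockRep g hg (CliffordAlgebra.reverse x) (Finsupp.single T 1) S
      = fockRep g hg x (Finsupp.single S 1) T := by
  induction x using CliffordAlgebra.induction generalizing S T with
  | algebraMap r =>
    simp only [CliffordAlgebra.reverse.commutes, AlgHom.commutes, Module.algebraMap_end_apply,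
      Finsupp.smul_apply, Finsupp.single_apply, eq_comm]
  | ι w =>
    simp only [CliffordAlgebra.reverse_ι, fockRep_ι, Finsupp.linearCombination_apply,
      Finsupp.sum, LinearMap.sum_apply, Finsupp.finsetSum_apply, LinearMap.smul_apply,
      Finsupp.smul_apply, fermionOp_single_one_apply_comm]
  | mul x y hx hy =>
    set s := (fockRep g hg y (Finsupp.single S 1)).support ∪
      (fockRep g hg (CliffordAlgebra.reverse x) (Finsupp.single T 1)).support
    rw [CliffordAlgebra.reverse.map_mul, map_mul, map_mul, Module.End.mul_apply,
      Module.End.mul_apply, Finsupp.linearMap_apply_eq_sum _ subset_union_right,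
      Finsupp.linearMap_apply_eq_sum _ subset_union_left]
    refine Finset.sum_congr rfl fun U _ => ?_
    rw [hx, hy, mul_comm]
  | add x y hx hy =>
    simp only [map_add, LinearMap.add_apply, Finsupp.add_apply, hx, hy]

def fockSymbol : CliffordAlgebra g →ₗ[R] (Finset I →₀ R) :=
  LinearMap.applyₗ (Finsupp.single ∅ 1) ∘ₗ (fockRep g hg).toLinearMap

theorem fockSymbol_apply (x : CliffordAlgebra g) :
    fockSymbol g hg x = fockRep g hg x (Finsupp.single ∅ 1) := rfl

theorem fockSymbol_mul_apply_empty (x y : CliffordAlgebra g) :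
    fockSymbol g hg (x * y) ∅ = ∑ U ∈ (fockSymbol g hg y).support,
      fockSymbol g hg (CliffordAlgebra.reverse x) U * fockSymbol g hg y U := by
  rw [fockSymbol_apply, map_mul, Module.End.mul_apply,
    Finsupp.linearMap_apply_eq_sum _ subset_rfl]
  refine Finset.sum_congr rfl fun U _ => ?_
  rw [fockSymbol_apply g hg (CliffordAlgebra.reverse x), fockRep_reverse_single_apply, mul_comm,
    fockSymbol_apply]

theorem fockSymbol_algebraMap (r : R) :
    fockSymbol g hg (algebraMap R _ r) = Finsupp.single ∅ r := by
  rw [fockSymbol_apply, AlgHom.commutes, Module.algebraMap_end_apply, Finsupp.smul_single_one]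

theorem fockSymbol_mul_apply_empty_eq_zero {x y : CliffordAlgebra g}
    (h : ∀ U ∈ (fockSymbol g hg y).support, fockSymbol g hg (CliffordAlgebra.reverse x) U = 0) :
    fockSymbol g hg (x * y) ∅ = 0 := by
  rw [fockSymbol_mul_apply_empty]
  exact Finset.sum_eq_zero fun U hU => by rw [h U hU, zero_mul]

theorem fockSymbol_mul_add_swap_apply_empty {x y : CliffordAlgebra g} {r : R}
    (h : x * y + y * x = algebraMap R _ r) :
    fockSymbol g hg (x * y) ∅ + fockSymbol g hg (y * x) ∅ = r := by
  rw [← Finsupp.add_apply, ← map_add, h, fockSymbol_algebraMap, Finsupp.single_eq_same]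

end Fock

open Cardinal in
theorem rank_le_aleph0_of_algHom {K M I ι : Type*} [Field K] [AddCommGroup M] [Module K M]
    [LinearOrder I] [Countable ι] {Q : QuadraticForm K M} {g : QuadraticForm K (I →₀ K)}
    (hg : ∀ w : I →₀ K, g w = ∑ i ∈ w.support, w i ^ 2)
    (φ : CliffordAlgebra Q →ₐ[K] CliffordAlgebra g) (v : ι → M)
    (hv : ∀ a, (∀ n, QuadraticMap.polar Q a (v n) = 0) → a = 0) :
    Module.rank K M ≤ ℵ₀ := by
  set x : M →ₗ[K] CliffordAlgebra g := φ.toLinearMap ∘ₗ CliffordAlgebra.ι Q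
  set ρ := fockSymbol g hg
  set S : Set (Finset I) :=
    ⋃ n, ↑(ρ (x (v n))).support ∪ ↑(ρ (CliffordAlgebra.reverse (x (v n)))).support
  have hS : S.Countable := Set.countable_iUnion fun n => (Set.toFinite _).countable
  set κ : M →ₗ[K] (S →₀ K) × (S →₀ K) :=
    (Finsupp.lsubtypeDomain S ∘ₗ ρ ∘ₗ x).prod
      (Finsupp.lsubtypeDomain S ∘ₗ ρ ∘ₗ CliffordAlgebra.reverse ∘ₗ x)
  have hκ : Function.Injective κ := by
    rw [← LinearMap.ker_eq_bot, LinearMap.ker_eq_bot']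
    intro a ha
    have hvanish : ∀ U ∈ S, ρ (x a) U = 0 ∧ ρ (CliffordAlgebra.reverse (x a)) U = 0 :=
      fun U hU => by
        simpa [κ, Finsupp.lsubtypeDomain_apply] using
          And.intro (DFunLike.congr_fun (congrArg Prod.fst ha) ⟨U, hU⟩)
            (DFunLike.congr_fun (congrArg Prod.snd ha) ⟨U, hU⟩)
    refine hv a fun n => ?_
    have hsupp : ∀ U, U ∈ (ρ (x (v n))).support ∨
        U ∈ (ρ (CliffordAlgebra.reverse (x (v n)))).support → U ∈ S :=
      fun U hU => Set.mem_iUnion.2 ⟨n, hU⟩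
    have hrel : x a * x (v n) + x (v n) * x a = algebraMap K _ (QuadraticMap.polar Q a (v n)) := by
      simp only [x, LinearMap.comp_apply, AlgHom.toLinearMap_apply, ← map_mul, ← map_add,
        CliffordAlgebra.ι_mul_ι_add_swap, AlgHom.commutes]
    rw [← fockSymbol_mul_add_swap_apply_empty g hg hrel,
      fockSymbol_mul_apply_empty_eq_zero g hg fun U hU => (hvanish U (hsupp U (.inl hU))).2,
      fockSymbol_mul_apply_empty_eq_zero g hg fun U hU => ?_, add_zero]
    have hUS : U ∉ S := fun hUS => Finsupp.mem_support_iff.1 hU (hvanish U hUS).1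
    exact Finsupp.notMem_support_iff.1 fun h' => hUS (hsupp U (.inr h'))
  have htarget : Module.rank K ((S →₀ K) × (S →₀ K)) ≤ ℵ₀ := by
    rw [rank_prod', rank_finsupp_self, ← lift_add, lift_le_aleph0]
    exact add_le_aleph0.2 ⟨hS.le_aleph0, hS.le_aleph0⟩
  exact lift_le_aleph0.1 ((κ.lift_rank_le_of_injective hκ).trans (lift_le_aleph0.2 htarget))

open scoped ENNReal in
theorem lp.summable_sq {α 𝕜 : Type*} [NormedField 𝕜] [CompleteSpace 𝕜]
    (a : lp (fun _ : α => 𝕜) 2) : Summable fun i => a i ^ 2 := by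
  refine Summable.of_norm ?_
  simpa [norm_pow] using (lp.memℓp a).summable (by norm_num : (0 : ℝ) < (2 : ℝ≥0∞).toReal)

theorem polar_lp_single {α 𝕜 : Type*} [DecidableEq α] [NormedField 𝕜] [CompleteSpace 𝕜]
    (Q : QuadraticForm 𝕜 (lp (fun _ : α => 𝕜) 2))
    (hQ : ∀ a : lp (fun _ : α => 𝕜) 2, Q a = ∑' i, a i ^ 2) (a : lp (fun _ : α => 𝕜) 2) (n : α) :
    QuadraticMap.polar Q a (lp.single 2 n 1) = 2 * a n := by
  set e : lp (fun _ : α => 𝕜) 2 := lp.single 2 n 1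
  have hcross : ∀ i, (a + e) i ^ 2 - a i ^ 2 - e i ^ 2 = (Pi.single n (2 * a n) : α → 𝕜) i := by
    intro i
    rw [lp.coeFn_add, Pi.add_apply, lp.single_apply]
    by_cases hi : i = n
    · subst hi
      simp only [Pi.single_eq_same]
      ring
    · simp [hi]
  have hae := lp.summable_sq (a + e)
  rw [QuadraticMap.polar, hQ, hQ, hQ, ← hae.tsum_sub (lp.summable_sq a),
    ← (hae.sub (lp.summable_sq a)).tsum_sub (lp.summable_sq e), tsum_congr hcross, tsum_pi_single]

open scoped ENNReal in
def lp.geometric (t : ℂ) (ht : ‖t‖ < 1) : lp (fun _ : ℕ => ℂ) 2 :=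
  ⟨fun n => t ^ n, memℓp_gen <| by
    refine (summable_geometric_of_lt_one (sq_nonneg ‖t‖)
      (pow_lt_one₀ (norm_nonneg t) ht two_ne_zero)).congr fun n => ?_
    simp [norm_pow, ← pow_mul, mul_comm]⟩

theorem aleph0_lt_rank_lp_two : Cardinal.aleph0 < Module.rank ℂ (lp (fun _ : ℕ => ℂ) 2) := by
  let t : Set.Ioo (0 : ℝ) 1 → lp (fun _ : ℕ => ℂ) 2 := fun t =>
    lp.geometric (t : ℝ) (by simpa [abs_of_pos t.2.1] using t.2.2)
  have hli : LinearIndependent ℂ t := by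
    refine LinearIndependent.of_comp (LinearMap.pi fun n => lp.evalₗ (𝕜 := ℂ) _ 2 n) <|
      (linearIndependent_monoidHom (Multiplicative ℕ) ℂ).comp
      (fun t : Set.Ioo (0 : ℝ) 1 => powersHom ℂ (t : ℝ))
      ((powersHom ℂ).injective.comp (Complex.ofReal_injective.comp Subtype.val_injective))
  calc Cardinal.aleph0 < Cardinal.continuum := Cardinal.aleph0_lt_continuum
    _ = Cardinal.mk (Set.Ioo (0 : ℝ) 1) := (Cardinal.mk_Ioo_real zero_lt_one).symm
    _ ≤ _ := hli.cardinal_le_rank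

theorem stmt_19_general (I : Type)
    (Q : QuadraticForm ℂ (lp (fun _ : ℕ => ℂ) 2))
    (hQ : ∀ a : lp (fun _ : ℕ => ℂ) 2, Q a = ∑' i, (a i) ^ 2)
    (g : QuadraticForm ℂ (I →₀ ℂ))
    (hg : ∀ w : I →₀ ℂ, g w = ∑ i ∈ w.support, (w i) ^ 2) :
    IsEmpty (CliffordAlgebra Q ≃ₐ[ℂ] CliffordAlgebra g) := by
  refine ⟨fun e => ?_⟩
  let : LinearOrder I := IsWellOrder.linearOrder WellOrderingRel
  have hsep : ∀ a, (∀ n, QuadraticMap.polar Q a (lp.single 2 n 1) = 0) → a = 0 := fun a ha =>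
    lp.ext <| funext fun n => by simpa [polar_lp_single Q hQ] using ha n
  exact aleph0_lt_rank_lp_two.not_ge (rank_le_aleph0_of_algHom hg e.toAlgHom _ hsep)

theorem stmt_19 (I : Type)
    (hI : Cardinal.mk I = Module.rank ℂ (lp (fun _ : ℕ => ℂ) 2))
    (Q : QuadraticForm ℂ (lp (fun _ : ℕ => ℂ) 2))
    (hQ : ∀ a : lp (fun _ : ℕ => ℂ) 2, Q a = ∑' i, (a i) ^ 2)
    (g : QuadraticForm ℂ (I →₀ ℂ))
    (hg : ∀ w : I →₀ ℂ, g w = ∑ i ∈ w.support, (w i) ^ 2) :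
    IsEmpty (CliffordAlgebra Q ≃ₐ[ℂ] CliffordAlgebra g) :=
  stmt_19_general I Q hQ g hg
end
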